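/- arXiv:1710.01551 — 9 statements merged into one kernel-verified Lean document; each statement's English description precedes it below -/
import Mathlib

section
/- Let h be a distance-generating function on a compact convex set X ⊆ ℝⁿ (continuous and α-strongly convex, α > 0), Q its mirror map, and F(x, y) = h(x) + h*(y) − ⟨y, x⟩ the associated Fenchel coupling. Then F(x, y) ≥ (α/2)‖Q(y) − x‖² for all x ∈ X and y ∈ ℝⁿ. -/
open scoped RealInnerProductSpace

/-- The Fenchel coupling `F(x,y) = h(x) + h*(y) - ⟨y,x⟩` of a
distance-generating function `h` (continuous, `α`-strongly convex) on a nonempty compact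
convex set `X ⊆ ℝⁿ` satisfies `F(x,y) ≥ (α/2)‖Q(y) - x‖²` for all `x ∈ X`, `y ∈ ℝⁿ`. -/
theorem fenchel_coupling_lower_bound {n : ℕ} {α : ℝ} (hα : 0 < α)
    (X : Set (EuclideanSpace ℝ (Fin n)))
    (hne : X.Nonempty) (hcomp : IsCompact X) (hconv : Convex ℝ X)
    (h : EuclideanSpace ℝ (Fin n) → ℝ)
    (hcont : ContinuousOn h X)
    (hsc : ∀ x ∈ X, ∀ x' ∈ X, ∀ t ∈ Set.Icc (0:ℝ) 1,
      h (t • x + (1 - t) • x') ≤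
        t * h x + (1 - t) * h x' - α / 2 * t * (1 - t) * ‖x - x'‖ ^ 2)
    (Q : EuclideanSpace ℝ (Fin n) → EuclideanSpace ℝ (Fin n))
    (hQmem : ∀ y, Q y ∈ X)
    (hQmax : ∀ y, ∀ x ∈ X, ⟪y, x⟫ - h x ≤ ⟪y, Q y⟫ - h (Q y))
    (hstar : EuclideanSpace ℝ (Fin n) → ℝ)
    (hstar_def : ∀ y, hstar y = ⟪y, Q y⟫ - h (Q y)) :
    ∀ x ∈ X, ∀ y : EuclideanSpace ℝ (Fin n),
      α / 2 * ‖Q y - x‖ ^ 2 ≤ h x + hstar y - ⟪y, x⟫ := by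
  intro x hx y
  set K : ℝ := α / 2 * ‖Q y - x‖ ^ 2 with hK
  have hKnn : 0 ≤ K := by positivity
  set C : ℝ := h x + hstar y - ⟪y, x⟫ with hC
  -- key claim: for all t ∈ (0,1], (1-t) * K ≤ C
  have key : ∀ t : ℝ, 0 < t → t ≤ 1 → (1 - t) * K ≤ C := by
    intro t ht0 ht1
    have hzmem : t • x + (1 - t) • Q y ∈ X :=
      hconv hx (hQmem y) ht0.le (by linarith) (by ring)
    have hB := hsc x hx (Q y) (hQmem y) t ⟨ht0.le, ht1⟩
    have hA := hQmax y _ hzmem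
    have hinner : ⟪y, t • x + (1 - t) • Q y⟫ = t * ⟪y, x⟫ + (1 - t) * ⟪y, Q y⟫ := by
      rw [inner_add_right, inner_smul_right, inner_smul_right]
    rw [hinner] at hA
    have hnorm : ‖x - Q y‖ = ‖Q y - x‖ := norm_sub_rev _ _
    rw [hnorm] at hB
    have hQval : hstar y = ⟪y, Q y⟫ - h (Q y) := hstar_def y
    -- combine: t * ((1-t)*K) ≤ t * C, then divide by t
    have ht' : t * ((1 - t) * K) ≤ t * C := by
      rw [hK, hC, hQval]
      nlinarith [hA, hB]
    exact le_of_mul_le_mul_left ht' ht0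
  -- pass to the limit t → 0⁺
  refine le_of_forall_pos_le_add ?_
  intro ε hε
  set t : ℝ := min 1 (ε / (K + 1)) with htdef
  have ht0 : 0 < t := lt_min one_pos (by positivity)
  have ht1 : t ≤ 1 := min_le_left _ _
  have htK : t * K ≤ ε := by
    have h1 : t ≤ ε / (K + 1) := min_le_right _ _
    have h2 : t * K ≤ (ε / (K + 1)) * K := by
      apply mul_le_mul_of_nonneg_right h1 hKnn
    have h3 : (ε / (K + 1)) * K ≤ ε := by
      rw [div_mul_eq_mul_div, div_le_iff₀ (by linarith)]
      nlinarith
    linarith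
  have := key t ht0 ht1
  nlinarith
end

section
/- Let h be a distance-generating function on a compact convex set X ⊆ ℝⁿ (continuous and α-strongly convex, α > 0), Q its mirror map, and F(x, y) = h(x) + h*(y) − ⟨y, x⟩ the Fenchel coupling. Then for every x ∈ X and all y, y' ∈ ℝⁿ: F(x, y') ≤ F(x, y) + ⟨y' − y, Q(y) − x⟩ + (1/(2α))‖y' − y‖₊², where ‖·‖₊ is the dual norm. Moreover, as a function of y, F(x, ·) is convex and differentiable with gradient ∇_y F(x, y) = Q(y) − x. -/
open scoped RealInnerProductSpace

section Aux

variable {n : ℕ} {α : ℝ}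

/-- Key strong-convexity estimate on the conjugate. -/
lemma hstar_key (hα : 0 < α)
    (X : Set (EuclideanSpace ℝ (Fin n))) (hconv : Convex ℝ X)
    (h : EuclideanSpace ℝ (Fin n) → ℝ)
    (hsc : ∀ x ∈ X, ∀ x' ∈ X, ∀ t ∈ Set.Icc (0:ℝ) 1,
      h (t • x + (1 - t) • x') ≤
        t * h x + (1 - t) * h x' - α / 2 * t * (1 - t) * ‖x - x'‖ ^ 2)
    (Q : EuclideanSpace ℝ (Fin n) → EuclideanSpace ℝ (Fin n))
    (hQmem : ∀ y, Q y ∈ X)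
    (hQmax : ∀ y, ∀ x ∈ X, ⟪y, x⟫ - h x ≤ ⟪y, Q y⟫ - h (Q y))
    (hstar : EuclideanSpace ℝ (Fin n) → ℝ)
    (hstar_def : ∀ y, hstar y = ⟪y, Q y⟫ - h (Q y)) :
    ∀ y y', hstar y' ≤ hstar y + ⟪y' - y, Q y⟫ + 1 / (2 * α) * ‖y' - y‖ ^ 2 := by
  intro y y'
  set p := Q y with hp
  set p' := Q y' with hp'
  -- Step A: for all t ∈ (0,1],
  have stepA : ∀ t : ℝ, 0 < t → t ≤ 1 →
      (⟪y, p'⟫ - h p') - (⟪y, p⟫ - h p) ≤ -(α / 2) * ‖p' - p‖ ^ 2 + t * (α / 2 * ‖p' - p‖ ^ 2) := by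
    intro t ht ht1
    have hmem : t • p' + (1 - t) • p ∈ X :=
      hconv (hQmem y') (hQmem y) (le_of_lt ht) (by linarith) (by ring)
    have h1 := hsc p' (hQmem y') p (hQmem y) t ⟨le_of_lt ht, ht1⟩
    have h2 := hQmax y _ hmem
    have hinner : ⟪y, t • p' + (1 - t) • p⟫ = t * ⟪y, p'⟫ + (1 - t) * ⟪y, p⟫ := by
      rw [inner_add_right, real_inner_smul_right, real_inner_smul_right]
    rw [hinner] at h2
    have key : t * ((⟪y, p'⟫ - h p') - (⟪y, p⟫ - h p) + α / 2 * (1 - t) * ‖p' - p‖ ^ 2) ≤ 0 := by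
      nlinarith [h1, h2]
    have h3 : (⟪y, p'⟫ - h p') - (⟪y, p⟫ - h p) + α / 2 * (1 - t) * ‖p' - p‖ ^ 2 ≤ 0 := by
      by_contra hpos
      push_neg at hpos
      nlinarith [key]
    nlinarith [h3]
  -- Step B: conclude g p' - g p ≤ -(α/2)‖p'-p‖²
  have stepB : (⟪y, p'⟫ - h p') - (⟪y, p⟫ - h p) ≤ -(α / 2) * ‖p' - p‖ ^ 2 := by
    refine le_of_forall_pos_le_add ?_
    intro ε hε
    set C := α / 2 * ‖p' - p‖ ^ 2 with hC
    have hC0 : 0 ≤ C := by positivity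
    rcases eq_or_lt_of_le hC0 with hC0' | hCpos
    · have := stepA 1 one_pos le_rfl
      nlinarith [this]
    · set t := min 1 (ε / C) with htdef
      have ht : 0 < t := lt_min one_pos (div_pos hε hCpos)
      have ht1 : t ≤ 1 := min_le_left _ _
      have := stepA t ht ht1
      have htC : t * C ≤ ε := by
        have : t ≤ ε / C := min_le_right _ _
        calc t * C ≤ (ε / C) * C := by nlinarith
        _ = ε := by field_simp
      nlinarith [this]
  -- Step C: rewrite and combine
  have hid : hstar y' - hstar y - ⟪y' - y, p⟫ = ⟪y' - y, p' - p⟫ + ((⟪y, p'⟫ - h p') - (⟪y, p⟫ - h p)) := by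
    rw [hstar_def, hstar_def, inner_sub_right, inner_sub_left, inner_sub_left]
    ring
  have hcs : ⟪y' - y, p' - p⟫ ≤ ‖y' - y‖ * ‖p' - p‖ := real_inner_le_norm _ _
  have hamgm : ‖y' - y‖ * ‖p' - p‖ - α / 2 * ‖p' - p‖ ^ 2 ≤ 1 / (2 * α) * ‖y' - y‖ ^ 2 := by
    have h2a : (0:ℝ) < 2 * α := by positivity
    have e : 1 / (2 * α) * ‖y' - y‖ ^ 2 = ‖y' - y‖ ^ 2 / (2 * α) := by ring
    rw [e, le_div_iff₀ h2a]
    nlinarith [sq_nonneg (‖y' - y‖ - α * ‖p' - p‖)]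
  linarith [hid, hcs, hamgm, stepB]

end Aux

/-- For the Fenchel coupling `F(x,y) = h(x) + h*(y) - ⟨y,x⟩` of a
distance-generating function `h` on a nonempty compact convex set `X ⊆ ℝⁿ`:
`F(x,y') ≤ F(x,y) + ⟨y' - y, Q(y) - x⟩ + (1/(2α))‖y' - y‖²` for all `x ∈ X`, `y, y' ∈ ℝⁿ`;
moreover `F(x,·)` is convex and differentiable with gradient `∇_y F(x,y) = Q(y) - x`. -/
theorem fenchel_coupling_properties {n : ℕ} {α : ℝ} (hα : 0 < α)
    (X : Set (EuclideanSpace ℝ (Fin n)))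
    (hne : X.Nonempty) (hcomp : IsCompact X) (hconv : Convex ℝ X)
    (h : EuclideanSpace ℝ (Fin n) → ℝ)
    (hcont : ContinuousOn h X)
    (hsc : ∀ x ∈ X, ∀ x' ∈ X, ∀ t ∈ Set.Icc (0:ℝ) 1,
      h (t • x + (1 - t) • x') ≤
        t * h x + (1 - t) * h x' - α / 2 * t * (1 - t) * ‖x - x'‖ ^ 2)
    (Q : EuclideanSpace ℝ (Fin n) → EuclideanSpace ℝ (Fin n))
    (hQmem : ∀ y, Q y ∈ X)
    (hQmax : ∀ y, ∀ x ∈ X, ⟪y, x⟫ - h x ≤ ⟪y, Q y⟫ - h (Q y))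
    (hstar : EuclideanSpace ℝ (Fin n) → ℝ)
    (hstar_def : ∀ y, hstar y = ⟪y, Q y⟫ - h (Q y))
    (F : EuclideanSpace ℝ (Fin n) → EuclideanSpace ℝ (Fin n) → ℝ)
    (hF : ∀ x y, F x y = h x + hstar y - ⟪y, x⟫) :
    ∀ x ∈ X,
      (∀ y y' : EuclideanSpace ℝ (Fin n),
        F x y' ≤ F x y + ⟪y' - y, Q y - x⟫ + 1 / (2 * α) * ‖y' - y‖ ^ 2) ∧
      ConvexOn ℝ Set.univ (fun y => F x y) ∧
      (∀ y, HasGradientAt (fun y => F x y) (Q y - x) y) := by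
  have key := hstar_key hα X hconv h hsc Q hQmem hQmax hstar hstar_def
  intro x hx
  -- upper bound
  have upper : ∀ y y' : EuclideanSpace ℝ (Fin n),
      F x y' ≤ F x y + ⟪y' - y, Q y - x⟫ + 1 / (2 * α) * ‖y' - y‖ ^ 2 := by
    intro y y'
    have hk := key y y'
    have e1 : ⟪y' - y, Q y - x⟫ = ⟪y' - y, Q y⟫ - ⟪y' - y, x⟫ := inner_sub_right _ _ _
    have e2 : ⟪y' - y, x⟫ = ⟪y', x⟫ - ⟪y, x⟫ := inner_sub_left _ _ _
    rw [hF, hF]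
    linarith
  -- lower bound (subgradient inequality)
  have lower : ∀ y y' : EuclideanSpace ℝ (Fin n),
      F x y + ⟪y' - y, Q y - x⟫ ≤ F x y' := by
    intro y y'
    have hk := hQmax y' (Q y) (hQmem y)
    have e1 : ⟪y' - y, Q y - x⟫ = ⟪y' - y, Q y⟫ - ⟪y' - y, x⟫ := inner_sub_right _ _ _
    have e2 : ⟪y' - y, x⟫ = ⟪y', x⟫ - ⟪y, x⟫ := inner_sub_left _ _ _
    have e3 : ⟪y' - y, Q y⟫ = ⟪y', Q y⟫ - ⟪y, Q y⟫ := inner_sub_left _ _ _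
    rw [hF, hF]
    rw [hstar_def y', hstar_def y]
    linarith
  refine ⟨upper, ?_, ?_⟩
  · -- convexity from the subgradient inequality
    refine ⟨convex_univ, ?_⟩
    intro y1 _ y2 _ a b ha hb hab
    set z := a • y1 + b • y2 with hz
    have l1 := lower z y1
    have l2 := lower z y2
    have hcomb : a * ⟪y1 - z, Q z - x⟫ + b * ⟪y2 - z, Q z - x⟫ = 0 := by
      rw [← real_inner_smul_left, ← real_inner_smul_left, ← inner_add_left]
      have e : a • (y1 - z) + b • (y2 - z) = (a • y1 + b • y2) - (a + b) • z := by
        module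
      rw [hab, one_smul, ← hz, sub_self] at e
      rw [e, inner_zero_left]
    simp only [smul_eq_mul]
    have m1 := mul_le_mul_of_nonneg_left l1 ha
    have m2 := mul_le_mul_of_nonneg_left l2 hb
    have hsum : a * F x z + b * F x z = F x z := by rw [← add_mul, hab, one_mul]
    linarith [m1, m2, hcomb, hsum]
  · -- gradient
    intro y
    rw [hasGradientAt_iff_isLittleO]
    rw [Asymptotics.isLittleO_iff]
    intro c hc
    rw [Metric.eventually_nhds_iff]
    refine ⟨2 * α * c, by positivity, ?_⟩
    intro y' hy'
    rw [dist_eq_norm] at hy'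
    have hub := upper y y'
    have hlb := lower y y'
    have hsym : ⟪Q y - x, y' - y⟫ = ⟪y' - y, Q y - x⟫ := real_inner_comm _ _
    have habs : |F x y' - F x y - ⟪Q y - x, y' - y⟫| ≤ 1 / (2 * α) * ‖y' - y‖ ^ 2 := by
      rw [hsym, abs_le]
      constructor
      · nlinarith [sq_nonneg ‖y' - y‖]
      · linarith
    have h1 : (1 : ℝ) / (2 * α) * ‖y' - y‖ ^ 2 ≤ c * ‖y' - y‖ := by
      have hn : 0 ≤ ‖y' - y‖ := norm_nonneg _
      have : ‖y' - y‖ ^ 2 = ‖y' - y‖ * ‖y' - y‖ := sq ‖y' - y‖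
      rw [this]
      rw [div_mul_eq_mul_div, one_mul, div_le_iff₀ (by positivity)]
      nlinarith
    calc ‖F x y' - F x y - ⟪Q y - x, y' - y⟫‖ = |F x y' - F x y - ⟪Q y - x, y' - y⟫| := rfl
      _ ≤ 1 / (2 * α) * ‖y' - y‖ ^ 2 := habs
      _ ≤ c * ‖y' - y‖ := h1
      _ = c * ‖y' - y‖ := rfl
end

section
/- Let X ⊆ ℝⁿ be compact convex, v : X → ℝⁿ Lipschitz and monotone, h a distance-generating function on X with mirror map Q and Fenchel coupling F, and λ, η positive, C¹-smooth and nonincreasing. Let y(t) solve dy/dt = −λ(t) v(x(t)) with y(0) = 0, where x(t) = Q(η(t) y(t)). Then for every p ∈ X and all t ≥ 0: ∫₀ᵗ λ(s)⟨v(x(s)), x(s) − p⟩ ds ≤ D(h; X)/η(t), where D(h; X) = max_{x∈X} h(x) − min_{x∈X} h(x). -/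
open scoped RealInnerProductSpace

/-- Along the mirror descent dynamics `dy/dt = -λ(t) v(x(t))`,
`x(t) = Q(η(t) y(t))`, started at `y(0) = 0`, one has for every `p ∈ X` and `t ≥ 0`:
`∫₀ᵗ λ(s) ⟨v(x(s)), x(s) - p⟩ ds ≤ D(h; X) / η(t)`,
where `D(h; X) = max_X h - min_X h`. -/
theorem mirror_descent_regret_bound {n : ℕ} {α L : ℝ} (hα : 0 < α) (hL : 0 < L)
    (X : Set (EuclideanSpace ℝ (Fin n)))
    (hne : X.Nonempty) (hcomp : IsCompact X) (hconv : Convex ℝ X)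
    (v : EuclideanSpace ℝ (Fin n) → EuclideanSpace ℝ (Fin n))
    (hvLip : ∀ x ∈ X, ∀ x' ∈ X, ‖v x - v x'‖ ≤ L * ‖x - x'‖)
    (hmono : ∀ x ∈ X, ∀ x' ∈ X, 0 ≤ ⟪v x - v x', x - x'⟫)
    (h : EuclideanSpace ℝ (Fin n) → ℝ)
    (hcont : ContinuousOn h X)
    (hsc : ∀ x ∈ X, ∀ x' ∈ X, ∀ t ∈ Set.Icc (0:ℝ) 1,
      h (t • x + (1 - t) • x') ≤
        t * h x + (1 - t) * h x' - α / 2 * t * (1 - t) * ‖x - x'‖ ^ 2)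
    (Q : EuclideanSpace ℝ (Fin n) → EuclideanSpace ℝ (Fin n))
    (hQmem : ∀ y, Q y ∈ X)
    (hQmax : ∀ y, ∀ x ∈ X, ⟪y, x⟫ - h x ≤ ⟪y, Q y⟫ - h (Q y))
    (lam eta : ℝ → ℝ)
    (hlam_pos : ∀ t ≥ (0:ℝ), 0 < lam t) (heta_pos : ∀ t ≥ (0:ℝ), 0 < eta t)
    (hlam_smooth : ContDiffOn ℝ 1 lam (Set.Ici 0))
    (heta_smooth : ContDiffOn ℝ 1 eta (Set.Ici 0))
    (hlam_mono : AntitoneOn lam (Set.Ici 0)) (heta_mono : AntitoneOn eta (Set.Ici 0))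
    (y : ℝ → EuclideanSpace ℝ (Fin n)) (x : ℝ → EuclideanSpace ℝ (Fin n))
    (hx : ∀ t, x t = Q (eta t • y t))
    (hy0 : y 0 = 0)
    (hyderiv : ∀ t ∈ Set.Ici (0:ℝ),
      HasDerivWithinAt y ((-(lam t)) • v (x t)) (Set.Ici 0) t) :
    ∀ p ∈ X, ∀ t ≥ (0:ℝ),
      (∫ s in (0:ℝ)..t, lam s * ⟪v (x s), x s - p⟫) ≤
        (sSup (h '' X) - sInf (h '' X)) / eta t := by
  intro p hp t ht
  -- conjugate function
  set Hs : EuclideanSpace ℝ (Fin n) → ℝ := fun w => ⟪w, Q w⟫ - h (Q w) with hHs_def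
  -- subgradient inequality for the conjugate
  have hsub : ∀ a b : EuclideanSpace ℝ (Fin n), ⟪b - a, Q a⟫ ≤ Hs b - Hs a := by
    intro a b
    have h1 := hQmax b (Q a) (hQmem a)
    have h2 : ⟪b - a, Q a⟫ = ⟪b, Q a⟫ - ⟪a, Q a⟫ := inner_sub_left _ _ _
    simp only [hHs_def]
    linarith
  -- strong convexity at the maximizer
  have hhalf : ∀ w : EuclideanSpace ℝ (Fin n), ∀ x' ∈ X,
      ⟪w, x' - Q w⟫ + α / 4 * ‖x' - Q w‖ ^ 2 ≤ h x' - h (Q w) := by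
    intro w x' hx'
    have hc : ((1:ℝ)/2) • x' + (1 - (1:ℝ)/2) • Q w ∈ X := by
      have := hconv hx' (hQmem w) (by norm_num : (0:ℝ) ≤ 1/2) (by norm_num : (0:ℝ) ≤ 1 - 1/2)
        (by norm_num)
      exact this
    have h1 := hQmax w _ hc
    have h2 := hsc x' hx' (Q w) (hQmem w) ((1:ℝ)/2) (by constructor <;> norm_num)
    have h3 : ⟪w, ((1:ℝ)/2) • x' + (1 - (1:ℝ)/2) • Q w⟫
        = (1/2) * ⟪w, x'⟫ + (1 - 1/2) * ⟪w, Q w⟫ := by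
      rw [inner_add_right, real_inner_smul_right, real_inner_smul_right]
    have h4 : ⟪w, x' - Q w⟫ = ⟪w, x'⟫ - ⟪w, Q w⟫ := inner_sub_right _ _ _
    rw [h3] at h1
    nlinarith [h1, h2]
  -- Q is Lipschitz
  have hQlip : ∀ a b : EuclideanSpace ℝ (Fin n), ‖Q a - Q b‖ ≤ 2 / α * ‖a - b‖ := by
    intro a b
    have h1 := hhalf a (Q b) (hQmem b)
    have h2 := hhalf b (Q a) (hQmem a)
    have e2 : ‖Q b - Q a‖ = ‖Q a - Q b‖ := norm_sub_rev _ _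
    rw [e2] at h1
    have e1 : ⟪a, Q b - Q a⟫ + ⟪b, Q a - Q b⟫ = -⟪a - b, Q a - Q b⟫ := by
      simp only [inner_sub_left, inner_sub_right]
      ring
    have e3 : ⟪a - b, Q a - Q b⟫ ≤ ‖a - b‖ * ‖Q a - Q b‖ := real_inner_le_norm _ _
    have key : α / 2 * ‖Q a - Q b‖ ^ 2 ≤ ‖a - b‖ * ‖Q a - Q b‖ := by nlinarith
    rcases eq_or_lt_of_le (norm_nonneg (Q a - Q b)) with h0 | h0
    · rw [← h0]; positivity
    · rw [div_mul_eq_mul_div, le_div_iff₀ hα]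
      nlinarith
  -- derivative of the conjugate
  have hHd : ∀ w : EuclideanSpace ℝ (Fin n), HasFDerivAt Hs (innerSL ℝ (Q w)) w := by
    intro w
    rw [hasFDerivAt_iff_isLittleO_nhds_zero]
    rw [Asymptotics.isLittleO_iff]
    intro ε hε
    have hδ : 0 < ε * α / 2 := by positivity
    have hev : ∀ᶠ u : EuclideanSpace ℝ (Fin n) in nhds 0, ‖u‖ < ε * α / 2 := by
      filter_upwards [Metric.ball_mem_nhds (0 : EuclideanSpace ℝ (Fin n)) hδ] with u hu
      simpa [mem_ball_zero_iff] using hu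
    filter_upwards [hev] with u hu
    have hcomm : ⟪Q w, u⟫ = ⟪u, Q w⟫ := real_inner_comm _ _
    have hl : 0 ≤ Hs (w + u) - Hs w - ⟪Q w, u⟫ := by
      have h1 := hsub w (w + u)
      rw [show w + u - w = u by abel] at h1
      linarith
    have hr : Hs (w + u) - Hs w - ⟪Q w, u⟫ ≤ 2 / α * ‖u‖ * ‖u‖ := by
      have h2 := hsub (w + u) w
      rw [show w - (w + u) = -u by abel, inner_neg_left] at h2
      have h4 : ⟪u, Q (w + u)⟫ - ⟪u, Q w⟫ = ⟪u, Q (w + u) - Q w⟫ := (inner_sub_right _ _ _).symm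
      have h5 : ⟪u, Q (w + u) - Q w⟫ ≤ ‖u‖ * ‖Q (w + u) - Q w‖ := real_inner_le_norm _ _
      have h6 : ‖Q (w + u) - Q w‖ ≤ 2 / α * ‖u‖ := by
        have := hQlip (w + u) w
        rwa [show w + u - w = u by abel] at this
      have h7 := mul_le_mul_of_nonneg_left h6 (norm_nonneg u)
      have h11 : Hs (w + u) - Hs w ≤ ⟪u, Q (w + u)⟫ := by linarith
      calc Hs (w + u) - Hs w - ⟪Q w, u⟫ ≤ ⟪u, Q (w + u)⟫ - ⟪u, Q w⟫ := by
            rw [hcomm]; linarith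
        _ = ⟪u, Q (w + u) - Q w⟫ := h4
        _ ≤ ‖u‖ * ‖Q (w + u) - Q w‖ := h5
        _ ≤ ‖u‖ * (2 / α * ‖u‖) := h7
        _ = 2 / α * ‖u‖ * ‖u‖ := by ring
    have h8 : 2 / α * ‖u‖ ≤ ε := by
      rw [div_mul_eq_mul_div, div_le_iff₀ hα]
      nlinarith
    have h9 : innerSL ℝ (Q w) u = ⟪Q w, u⟫ := rfl
    rw [h9, Real.norm_eq_abs, abs_of_nonneg hl]
    calc Hs (w + u) - Hs w - ⟪Q w, u⟫ ≤ 2 / α * ‖u‖ * ‖u‖ := hr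
      _ ≤ ε * ‖u‖ := mul_le_mul_of_nonneg_right h8 (norm_nonneg u)
  -- name the gap
  set Dh : ℝ := sSup (h '' X) - sInf (h '' X) with hDh_def
  -- bounds for h on X
  have himg : IsCompact (h '' X) := hcomp.image_of_continuousOn hcont
  have hhle : ∀ w ∈ X, h w ≤ sSup (h '' X) := fun w hw => le_csSup himg.bddAbove ⟨w, hw, rfl⟩
  have hhge : ∀ w ∈ X, sInf (h '' X) ≤ h w := fun w hw => csInf_le himg.bddBelow ⟨w, hw, rfl⟩
  -- the curve z
  set z : ℝ → EuclideanSpace ℝ (Fin n) := fun s => eta s • y s with hz_def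
  have hxz : ∀ s, x s = Q (z s) := fun s => hx s
  -- derivative of eta
  have heta_d : ∀ s ∈ Set.Ici (0:ℝ),
      HasDerivWithinAt eta (derivWithin eta (Set.Ici 0) s) (Set.Ici 0) s :=
    fun s hs => ((heta_smooth.differentiableOn one_ne_zero) s hs).hasDerivWithinAt
  -- derivative of z
  set zd : ℝ → EuclideanSpace ℝ (Fin n) :=
    fun s => eta s • ((-(lam s)) • v (x s)) + (derivWithin eta (Set.Ici 0) s) • y s with hzd_def
  have hzd : ∀ s ∈ Set.Ici (0:ℝ), HasDerivWithinAt z (zd s) (Set.Ici 0) s := by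
    intro s hs
    exact (heta_d s hs).smul (hyderiv s hs)
  -- derivative of Hs ∘ z
  have hHz : ∀ s ∈ Set.Ici (0:ℝ),
      HasDerivWithinAt (fun u => Hs (z u)) ⟪Q (z s), zd s⟫ (Set.Ici 0) s := by
    intro s hs
    have := (hHd (z s)).comp_hasDerivWithinAt s (hzd s hs)
    exact this
  have hPz : ∀ s ∈ Set.Ici (0:ℝ),
      HasDerivWithinAt (fun u => ⟪p, z u⟫) ⟪p, zd s⟫ (Set.Ici 0) s := by
    intro s hs
    have := (innerSL ℝ p).hasFDerivAt.comp_hasDerivWithinAt s (hzd s hs)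
    exact this
  -- the potential A
  set A : ℝ → ℝ := fun s => h p + Hs (z s) - ⟪p, z s⟫ with hA_def
  set Ad : ℝ → ℝ := fun s => ⟪Q (z s), zd s⟫ - ⟪p, zd s⟫ with hAd_def
  have hA : ∀ s ∈ Set.Ici (0:ℝ), HasDerivWithinAt A (Ad s) (Set.Ici 0) s := by
    intro s hs
    exact ((hHz s hs).const_add (h p)).sub (hPz s hs)
  -- the function G
  set G : ℝ → ℝ := fun s => (A s - Dh) / eta s with hG_def
  set Gd : ℝ → ℝ := fun s =>
    (Ad s * eta s - (A s - Dh) * derivWithin eta (Set.Ici 0) s) / eta s ^ 2 with hGd_def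
  have hG : ∀ s ∈ Set.Ici (0:ℝ), HasDerivWithinAt G (Gd s) (Set.Ici 0) s := by
    intro s hs
    exact ((hA s hs).sub_const Dh).div (heta_d s hs) (heta_pos s hs).ne'
  -- continuity facts
  have hy_cont : ContinuousOn y (Set.Ici 0) := fun s hs => (hyderiv s hs).continuousWithinAt
  have heta_cont : ContinuousOn eta (Set.Ici 0) := heta_smooth.continuousOn
  have hz_cont : ContinuousOn z (Set.Ici 0) := heta_cont.smul hy_cont
  have hQcont : Continuous Q := by
    have hlip : LipschitzWith (Real.toNNReal (2 / α)) Q := by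
      apply LipschitzWith.of_dist_le_mul
      intro a b
      rw [dist_eq_norm, dist_eq_norm, Real.coe_toNNReal _ (by positivity : (0:ℝ) ≤ 2 / α)]
      exact hQlip a b
    exact hlip.continuous
  have hx_cont : ContinuousOn x (Set.Ici 0) :=
    (hQcont.comp_continuousOn hz_cont).congr fun s _ => hxz s
  have hv_cont : ContinuousOn v X := by
    have hlip : LipschitzOnWith (Real.toNNReal L) v X := by
      apply LipschitzOnWith.of_dist_le_mul
      intro a ha b hb
      rw [dist_eq_norm, dist_eq_norm, Real.coe_toNNReal _ hL.le]
      exact hvLip a ha b hb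
    exact hlip.continuousOn
  have hxmem : ∀ s, x s ∈ X := fun s => by rw [hxz s]; exact hQmem _
  have hvx_cont : ContinuousOn (fun s => v (x s)) (Set.Ici 0) :=
    hv_cont.comp hx_cont fun s _ => hxmem s
  -- the integrand
  set F : ℝ → ℝ := fun s => lam s * ⟪v (x s), x s - p⟫ with hF_def
  have hF_cont : ContinuousOn F (Set.Ici 0) :=
    hlam_smooth.continuousOn.mul (hvx_cont.inner (hx_cont.sub continuousOn_const))
  set Phi : ℝ → ℝ := fun r => ∫ s in (0:ℝ)..r, F s with hPhi_def
  have hPhi : ∀ s ∈ Set.Ici (0:ℝ), HasDerivWithinAt Phi (F s) (Set.Ici 0) s := by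
    intro s hs
    have hint : IntervalIntegrable F MeasureTheory.volume 0 s := by
      apply ContinuousOn.intervalIntegrable
      rw [Set.uIcc_of_le hs]
      exact hF_cont.mono Set.Icc_subset_Ici_self
    rcases eq_or_lt_of_le (Set.mem_Ici.mp hs : (0:ℝ) ≤ s) with h0 | h0
    · subst h0
      exact intervalIntegral.integral_hasDerivWithinAt_right hint
        ((hF_cont.mono Set.Ioi_subset_Ici_self).stronglyMeasurableAtFilter_nhdsWithin
          measurableSet_Ioi 0)
        ((hF_cont 0 Set.self_mem_Ici).mono Set.Ioi_subset_Ici_self)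
    · have hnhds : Set.Ici (0:ℝ) ∈ nhds s := Ici_mem_nhds h0
      have hca : ContinuousAt F s := hF_cont.continuousAt hnhds
      have hmeas : StronglyMeasurableAtFilter F (nhds s) MeasureTheory.volume := by
        refine ContinuousOn.stronglyMeasurableAtFilter isOpen_Ioi ?_ s h0
        exact hF_cont.mono Set.Ioi_subset_Ici_self
      exact (intervalIntegral.integral_hasDerivAt_right hint hmeas hca).hasDerivWithinAt
  -- eta' is nonpositive on the interior
  have heta'_np : ∀ s ∈ Set.Ioi (0:ℝ), derivWithin eta (Set.Ici 0) s ≤ 0 := by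
    intro s hs
    have hd : HasDerivAt eta (derivWithin eta (Set.Ici 0) s) s :=
      (heta_d s (Set.mem_Ici.mpr (Set.mem_Ioi.mp hs).le)).hasDerivAt (Ici_mem_nhds hs)
    have hslope := (hd.hasDerivWithinAt (s := Set.Ioi s))
    rw [hasDerivWithinAt_iff_tendsto_slope] at hslope
    rw [Set.diff_singleton_eq_self (by simp : s ∉ Set.Ioi s)] at hslope
    refine le_of_tendsto hslope ?_
    filter_upwards [self_mem_nhdsWithin] with u hu
    have hsu : s < u := hu
    have h1 : eta u ≤ eta s := heta_mono (Set.mem_Ici.mpr (Set.mem_Ioi.mp hs).le) (Set.mem_Ici.mpr ((Set.mem_Ioi.mp hs).le.trans hsu.le)) hsu.le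
    rw [slope_def_field]
    apply div_nonpos_iff.mpr
    exact Or.inr ⟨by linarith, by linarith⟩
  -- pointwise derivative bound on the interior
  have hkey : ∀ s ∈ Set.Ioi (0:ℝ), F s + Gd s ≤ 0 := by
    intro s hs
    have hepos : (0:ℝ) < eta s := heta_pos s hs.le
    -- algebraic identities
    have c1 : ⟪p, z s⟫ = eta s * ⟪y s, p⟫ := by
      rw [hz_def]
      simp only []
      rw [real_inner_smul_right, real_inner_comm p (y s)]
    have c2 : ⟪z s, x s⟫ = eta s * ⟪y s, x s⟫ := by
      rw [hz_def]
      simp only []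
      rw [real_inner_smul_left]
    have c3 : ⟪y s, x s - p⟫ = ⟪y s, x s⟫ - ⟪y s, p⟫ := inner_sub_right _ _ _
    have hAs : A s = h p + (⟪z s, x s⟫ - h (x s)) - ⟪p, z s⟫ := by
      rw [hA_def, hHs_def]
      simp only []
      rw [← hxz s]
    have hbr : eta s * ⟪y s, x s - p⟫ - A s = h (x s) - h p := by
      rw [hAs, c3, c2, c1]; ring
    -- expansion of inner products with zd
    have expand : ∀ q : EuclideanSpace ℝ (Fin n),
        ⟪q, zd s⟫ = eta s * (-(lam s)) * ⟪v (x s), q⟫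
          + derivWithin eta (Set.Ici 0) s * ⟪y s, q⟫ := by
      intro q
      rw [hzd_def]
      simp only []
      rw [inner_add_right, real_inner_smul_right, real_inner_smul_right,
        real_inner_smul_right, real_inner_comm q (v (x s)), real_inner_comm q (y s)]
      ring
    have hAd2 : Ad s = -(eta s * lam s * ⟪v (x s), x s - p⟫)
        + derivWithin eta (Set.Ici 0) s * ⟪y s, x s - p⟫ := by
      have e1 := expand (x s)
      have e2 := expand p
      have e3 : Ad s = ⟪x s, zd s⟫ - ⟪p, zd s⟫ := by
        rw [hAd_def]
        simp only []
        rw [← hxz s]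
      have e4 : ⟪v (x s), x s - p⟫ = ⟪v (x s), x s⟫ - ⟪v (x s), p⟫ := inner_sub_right _ _ _
      rw [e3, e1, e2, e4, c3]; ring
    have hnum : Ad s * eta s - (A s - Dh) * derivWithin eta (Set.Ici 0) s
        = derivWithin eta (Set.Ici 0) s * (h (x s) - h p + Dh) - F s * eta s ^ 2 := by
      rw [hAd2]
      simp only [hF_def]
      linear_combination (derivWithin eta (Set.Ici 0) s) * hbr
    have h2 : Gd s = derivWithin eta (Set.Ici 0) s * (h (x s) - h p + Dh) / eta s ^ 2 - F s := by
      rw [hGd_def]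
      simp only []
      rw [hnum, sub_div, mul_div_cancel_right₀ _ (by positivity : eta s ^ 2 ≠ 0)]
    have hsum : F s + Gd s
        = derivWithin eta (Set.Ici 0) s * (h (x s) - h p + Dh) / eta s ^ 2 := by
      rw [h2]; ring
    rw [hsum]
    apply div_nonpos_iff.mpr
    refine Or.inr ⟨?_, by positivity⟩
    apply mul_nonpos_of_nonpos_of_nonneg (heta'_np s hs)
    have h1 := hhge (x s) (hxmem s)
    have h2 := hhle p hp
    rw [hDh_def]
    linarith
  -- the combined function is antitone
  set Psi : ℝ → ℝ := fun s => Phi s + G s with hPsi_def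
  have hPsid : ∀ s ∈ Set.Ici (0:ℝ), HasDerivWithinAt Psi (F s + Gd s) (Set.Ici 0) s :=
    fun s hs => (hPhi s hs).add (hG s hs)
  have hPsic : ContinuousOn Psi (Set.Ici 0) := fun s hs => (hPsid s hs).continuousWithinAt
  have hanti : AntitoneOn Psi (Set.Ici 0) := by
    apply antitoneOn_of_deriv_nonpos (convex_Ici 0) hPsic
    · intro s hs
      rw [interior_Ici] at hs
      exact (((hPsid s (Set.mem_Ici.mpr (Set.mem_Ioi.mp hs).le)).hasDerivAt (Ici_mem_nhds hs)).differentiableAt).differentiableWithinAt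
    · intro s hs
      rw [interior_Ici] at hs
      rw [((hPsid s (Set.mem_Ici.mpr (Set.mem_Ioi.mp hs).le)).hasDerivAt (Ici_mem_nhds hs)).deriv]
      exact hkey s hs
  have hfin : Psi t ≤ Psi 0 := hanti Set.self_mem_Ici ht ht
  -- evaluate at 0
  have hPhi0 : Phi 0 = 0 := intervalIntegral.integral_same
  have hz0 : z 0 = 0 := by rw [hz_def]; simp [hy0]
  have hA0 : A 0 = h p - h (Q 0) := by
    rw [hA_def, hHs_def]
    simp only []
    rw [hz0]
    simp
    ring
  have hG0 : G 0 ≤ 0 := by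
    rw [hG_def]
    simp only []
    apply div_nonpos_iff.mpr
    refine Or.inr ⟨?_, (heta_pos 0 le_rfl).le⟩
    rw [hA0, hDh_def]
    linarith [hhle p hp, hhge (Q 0) (hQmem 0)]
  -- A t is nonnegative
  have hAt : 0 ≤ A t := by
    have h1 := hQmax (z t) p hp
    have h2 : ⟪p, z t⟫ = ⟪z t, p⟫ := real_inner_comm _ _
    rw [hA_def, hHs_def]
    simp only []
    linarith
  have h9 : -G t ≤ Dh / eta t := by
    rw [hG_def]
    simp only []
    rw [show -((A t - Dh) / eta t) = (Dh - A t) / eta t by ring]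
    exact div_le_div_of_nonneg_right (by linarith) (heta_pos t ht).le
  -- conclude
  have hfin' : Phi t + G t ≤ Phi 0 + G 0 := hfin
  have hgoal : Phi t ≤ Dh / eta t := by linarith
  exact hgoal
end

section
/- Let X ⊆ ℝⁿ be compact convex, v : X → ℝⁿ Lipschitz and monotone, h a distance-generating function on X with mirror map Q, and λ, η positive, C¹-smooth and nonincreasing. Let y(t) solve dy/dt = −λ(t) v(x(t)) with y(0) = 0, x(t) = Q(η(t) y(t)), and define S(t) = ∫₀ᵗ λ(s) ds and the averaged trajectory x̄(t) = S(t)⁻¹ ∫₀ᵗ λ(s) x(s) ds. Then the dual gap g(x̄(t)) = max_{x'∈X} ⟨v(x'), x̄(t) − x'⟩ satisfies g(x̄(t)) ≤ D(h; X)/(η(t) S(t)) for all t > 0, where D(h; X) = max h − min h over X. In particular, if η(t)S(t) → ∞ as t → ∞, then x̄(t) converges to the solution set of the variational inequality. -/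
open scoped RealInnerProductSpace

lemma mdQlip {n : ℕ} {α : ℝ} (hα : 0 < α) {X : Set (EuclideanSpace ℝ (Fin n))}
    (hconv : Convex ℝ X) {h : EuclideanSpace ℝ (Fin n) → ℝ}
    (hsc : ∀ x ∈ X, ∀ x' ∈ X, ∀ t ∈ Set.Icc (0:ℝ) 1,
      h (t • x + (1 - t) • x') ≤
        t * h x + (1 - t) * h x' - α / 2 * t * (1 - t) * ‖x - x'‖ ^ 2)
    {Q : EuclideanSpace ℝ (Fin n) → EuclideanSpace ℝ (Fin n)}
    (hQmem : ∀ y, Q y ∈ X)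
    (hQmax : ∀ y, ∀ x ∈ X, ⟪y, x⟫ - h x ≤ ⟪y, Q y⟫ - h (Q y))
    (y₁ y₂ : EuclideanSpace ℝ (Fin n)) :
    ‖Q y₁ - Q y₂‖ ≤ 2/α * ‖y₁ - y₂‖ := by
  set u := Q y₁ with hu
  set u' := Q y₂ with hu'
  set m : EuclideanSpace ℝ (Fin n) := (1/2 : ℝ) • u + (1 - 1/2 : ℝ) • u' with hm
  have hmX : m ∈ X := hconv (hQmem y₁) (hQmem y₂) (by norm_num) (by norm_num) (by norm_num)
  have hmid : h m ≤ 1/2 * h u + 1/2 * h u' - α/8 * ‖u - u'‖^2 := by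
    have := hsc u (hQmem y₁) u' (hQmem y₂) (1/2) ⟨by norm_num, by norm_num⟩
    rw [← hm] at this
    linarith
  have h1 : ⟪y₁, m⟫ - h m ≤ ⟪y₁, u⟫ - h u := hQmax y₁ m hmX
  have h2 : ⟪y₂, m⟫ - h m ≤ ⟪y₂, u'⟫ - h u' := hQmax y₂ m hmX
  have e1 : ⟪y₁, u⟫ - ⟪y₁, m⟫ = 1/2 * ⟪y₁, u - u'⟫ := by
    rw [← inner_sub_right]
    have : u - m = (1/2 : ℝ) • (u - u') := by rw [hm]; module
    rw [this, real_inner_smul_right]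
  have e2 : ⟪y₂, u'⟫ - ⟪y₂, m⟫ = -(1/2) * ⟪y₂, u - u'⟫ := by
    rw [← inner_sub_right]
    have : u' - m = (-(1/2) : ℝ) • (u - u') := by rw [hm]; module
    rw [this, real_inner_smul_right]
  have hCS : ⟪y₁ - y₂, u - u'⟫ ≤ ‖y₁ - y₂‖ * ‖u - u'‖ := real_inner_le_norm _ _
  have hsplit : ⟪y₁ - y₂, u - u'⟫ = ⟪y₁, u - u'⟫ - ⟪y₂, u - u'⟫ := by
    rw [inner_sub_left]
  have hkey : α/4 * ‖u - u'‖^2 ≤ ‖y₁ - y₂‖ * ‖u - u'‖ := by nlinarith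
  rcases eq_or_lt_of_le (norm_nonneg (u - u')) with hd | hd
  · rw [← hd]; positivity
  · have h5 : α * ‖u - u'‖ ≤ 2 * ‖y₁ - y₂‖ := by nlinarith
    rw [div_mul_eq_mul_div, le_div_iff₀ hα]
    linarith

lemma mdPsiDeriv {n : ℕ} {X : Set (EuclideanSpace ℝ (Fin n))}
    {h : EuclideanSpace ℝ (Fin n) → ℝ}
    {Q : EuclideanSpace ℝ (Fin n) → EuclideanSpace ℝ (Fin n)}
    (hQmem : ∀ y, Q y ∈ X)
    (hQmax : ∀ y, ∀ x ∈ X, ⟪y, x⟫ - h x ≤ ⟪y, Q y⟫ - h (Q y))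
    {c : ℝ} (hQlip : ∀ y₁ y₂, ‖Q y₁ - Q y₂‖ ≤ c * ‖y₁ - y₂‖)
    (y₀ : EuclideanSpace ℝ (Fin n)) :
    HasFDerivAt (fun w => ⟪w, Q w⟫ - h (Q w)) (innerSL ℝ (Q y₀)) y₀ := by
  rw [hasFDerivAt_iff_isLittleO_nhds_zero]
  have hbound : ∀ d, ‖(⟪y₀ + d, Q (y₀ + d)⟫ - h (Q (y₀ + d))) - (⟪y₀, Q y₀⟫ - h (Q y₀))
      - (innerSL ℝ (Q y₀)) d‖ ≤ c * ‖d‖^2 := by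
    intro d
    have hlow : (0:ℝ) ≤ (⟪y₀ + d, Q (y₀ + d)⟫ - h (Q (y₀ + d))) - (⟪y₀, Q y₀⟫ - h (Q y₀))
        - ⟪Q y₀, d⟫ := by
      have := hQmax (y₀ + d) (Q y₀) (hQmem y₀)
      rw [inner_add_left] at this
      have hc : ⟪d, Q y₀⟫ = ⟪Q y₀, d⟫ := real_inner_comm _ _
      linarith
    have hup : (⟪y₀ + d, Q (y₀ + d)⟫ - h (Q (y₀ + d))) - (⟪y₀, Q y₀⟫ - h (Q y₀))
        - ⟪Q y₀, d⟫ ≤ c * ‖d‖^2 := by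
      have h1 := hQmax y₀ (Q (y₀ + d)) (hQmem (y₀ + d))
      have h2 : ⟪y₀ + d, Q (y₀ + d)⟫ = ⟪y₀, Q (y₀ + d)⟫ + ⟪d, Q (y₀ + d)⟫ := by
        rw [inner_add_left]
      have h3 : ⟪d, Q (y₀ + d)⟫ - ⟪Q y₀, d⟫ = ⟪d, Q (y₀ + d) - Q y₀⟫ := by
        rw [inner_sub_right, real_inner_comm (Q y₀) d]
      have h4 : ⟪d, Q (y₀ + d) - Q y₀⟫ ≤ ‖d‖ * ‖Q (y₀ + d) - Q y₀‖ := real_inner_le_norm _ _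
      have h5 : ‖Q (y₀ + d) - Q y₀‖ ≤ c * ‖y₀ + d - y₀‖ := hQlip _ _
      have h6 : y₀ + d - y₀ = d := by abel
      rw [h6] at h5
      have h7 : ‖d‖ * ‖Q (y₀ + d) - Q y₀‖ ≤ ‖d‖ * (c * ‖d‖) :=
        mul_le_mul_of_nonneg_left h5 (norm_nonneg _)
      nlinarith [norm_nonneg d]
    rw [innerSL_apply_apply]
    rw [Real.norm_eq_abs, abs_of_nonneg hlow]
    exact hup
  have hO : (fun d => (⟪y₀ + d, Q (y₀ + d)⟫ - h (Q (y₀ + d))) - (⟪y₀, Q y₀⟫ - h (Q y₀))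
      - (innerSL ℝ (Q y₀)) d) =O[nhds 0] (fun d => ‖d‖^2) := by
    apply Asymptotics.IsBigO.of_bound c
    filter_upwards with d
    calc _ ≤ c * ‖d‖^2 := hbound d
    _ = c * ‖‖d‖^2‖ := by rw [Real.norm_eq_abs, abs_of_nonneg (by positivity)]
  exact hO.trans_isLittleO (Asymptotics.isLittleO_norm_pow_id one_lt_two)

set_option maxHeartbeats 1000000 in
/-- Ergodic convergence of the deterministic mirror descent dynamics: the
averaged trajectory `x̄(t) = S(t)⁻¹ ∫₀ᵗ λ(s) x(s) ds` satisfies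
`g(x̄(t)) ≤ D(h;X)/(η(t) S(t))` for all `t > 0`, where `g` is the dual gap function;
if `η(t)S(t) → ∞` then `x̄(t)` converges to the solution set of the variational
inequality. -/
theorem mirror_descent_ergodic_gap_bound {n : ℕ} {α L : ℝ} (hα : 0 < α) (hL : 0 < L)
    (X : Set (EuclideanSpace ℝ (Fin n)))
    (hne : X.Nonempty) (hcomp : IsCompact X) (hconv : Convex ℝ X)
    (v : EuclideanSpace ℝ (Fin n) → EuclideanSpace ℝ (Fin n))
    (hvLip : ∀ x ∈ X, ∀ x' ∈ X, ‖v x - v x'‖ ≤ L * ‖x - x'‖)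
    (hmono : ∀ x ∈ X, ∀ x' ∈ X, 0 ≤ ⟪v x - v x', x - x'⟫)
    (h : EuclideanSpace ℝ (Fin n) → ℝ)
    (hcont : ContinuousOn h X)
    (hsc : ∀ x ∈ X, ∀ x' ∈ X, ∀ t ∈ Set.Icc (0:ℝ) 1,
      h (t • x + (1 - t) • x') ≤
        t * h x + (1 - t) * h x' - α / 2 * t * (1 - t) * ‖x - x'‖ ^ 2)
    (Q : EuclideanSpace ℝ (Fin n) → EuclideanSpace ℝ (Fin n))
    (hQmem : ∀ y, Q y ∈ X)
    (hQmax : ∀ y, ∀ x ∈ X, ⟪y, x⟫ - h x ≤ ⟪y, Q y⟫ - h (Q y))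
    (lam eta : ℝ → ℝ)
    (hlam_pos : ∀ t ≥ (0:ℝ), 0 < lam t) (heta_pos : ∀ t ≥ (0:ℝ), 0 < eta t)
    (hlam_smooth : ContDiffOn ℝ 1 lam (Set.Ici 0))
    (heta_smooth : ContDiffOn ℝ 1 eta (Set.Ici 0))
    (hlam_mono : AntitoneOn lam (Set.Ici 0)) (heta_mono : AntitoneOn eta (Set.Ici 0))
    (y : ℝ → EuclideanSpace ℝ (Fin n)) (x : ℝ → EuclideanSpace ℝ (Fin n))
    (hx : ∀ t, x t = Q (eta t • y t))
    (hy0 : y 0 = 0)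
    (hyderiv : ∀ t ∈ Set.Ici (0:ℝ),
      HasDerivWithinAt y ((-(lam t)) • v (x t)) (Set.Ici 0) t)
    (S : ℝ → ℝ) (hS : ∀ t, S t = ∫ s in (0:ℝ)..t, lam s)
    (xbar : ℝ → EuclideanSpace ℝ (Fin n))
    (hxbar : ∀ t, xbar t = (S t)⁻¹ • ∫ s in (0:ℝ)..t, lam s • x s)
    (g : EuclideanSpace ℝ (Fin n) → ℝ)
    (hg : ∀ z, g z = sSup ((fun x' => ⟪v x', z - x'⟫) '' X)) :
    (∀ t > (0:ℝ), g (xbar t) ≤ (sSup (h '' X) - sInf (h '' X)) / (eta t * S t)) ∧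
      (Filter.Tendsto (fun t => eta t * S t) Filter.atTop Filter.atTop →
        Filter.Tendsto
          (fun t => Metric.infDist (xbar t) {xs | xs ∈ X ∧ ∀ z ∈ X, 0 ≤ ⟪v z, z - xs⟫})
          Filter.atTop (nhds 0)) := by
  classical
  set M := sSup (h '' X) with hM
  set m := sInf (h '' X) with hm
  have hQlip := mdQlip hα hconv hsc hQmem hQmax
  have hQcont : Continuous Q := by
    have h2 : (0:ℝ) ≤ 2/α := by positivity
    refine LipschitzWith.continuous (K := Real.toNNReal (2/α)) ?_
    apply LipschitzWith.of_dist_le_mul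
    intro a b
    rw [dist_eq_norm, dist_eq_norm, Real.coe_toNNReal _ h2]
    exact hQlip a b
  have himg : IsCompact (h '' X) := hcomp.image_of_continuousOn hcont
  have hMle : ∀ p ∈ X, h p ≤ M := fun p hp => le_csSup himg.bddAbove ⟨p, hp, rfl⟩
  have hmle : ∀ p ∈ X, m ≤ h p := fun p hp => csInf_le himg.bddBelow ⟨p, hp, rfl⟩
  have hycont : ContinuousOn y (Set.Ici 0) := fun s hs => (hyderiv s hs).continuousWithinAt
  have hetacont : ContinuousOn eta (Set.Ici 0) := heta_smooth.continuousOn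
  have hlamcont : ContinuousOn lam (Set.Ici 0) := hlam_smooth.continuousOn
  have hxeq : x = fun s => Q (eta s • y s) := funext hx
  have hxcont : ContinuousOn x (Set.Ici 0) := by
    rw [hxeq]; exact hQcont.comp_continuousOn (hetacont.smul hycont)
  have hxX : ∀ s, x s ∈ X := fun s => by rw [hx]; exact hQmem _
  have hvX : ContinuousOn v X := by
    have hl : LipschitzOnWith (Real.toNNReal L) v X := by
      rw [lipschitzOnWith_iff_dist_le_mul]
      intro a ha b hb
      rw [dist_eq_norm, dist_eq_norm, Real.coe_toNNReal _ hL.le]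
      exact hvLip a ha b hb
    exact hl.continuousOn
  have hvxcont : ContinuousOn (fun s => v (x s)) (Set.Ici 0) :=
    hvX.comp hxcont (fun s _ => hxX s)
  have hhxcont : ContinuousOn (fun s => h (x s)) (Set.Ici 0) :=
    hcont.comp hxcont (fun s _ => hxX s)
  have hudiff : UniqueDiffOn ℝ (Set.Ici (0:ℝ)) := uniqueDiffOn_Ici 0
  set eta' := derivWithin eta (Set.Ici 0) with heta'def
  have heta'd : ∀ s ∈ Set.Ici (0:ℝ), HasDerivWithinAt eta (eta' s) (Set.Ici 0) s :=
    fun s hs => (heta_smooth.differentiableOn one_ne_zero s hs).hasDerivWithinAt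
  have heta'cont : ContinuousOn eta' (Set.Ici 0) :=
    heta_smooth.continuousOn_derivWithin hudiff le_rfl
  have heta'nonpos : ∀ s ∈ Set.Ici (0:ℝ), eta' s ≤ 0 := by
    intro s hs
    have hd := heta'd s hs
    rw [hasDerivWithinAt_iff_tendsto_slope] at hd
    have hsub : Set.Ioi s ⊆ Set.Ici (0:ℝ) \ {s} :=
      fun u hu => ⟨Set.mem_Ici.2 (le_trans (Set.mem_Ici.1 hs) (le_of_lt (Set.mem_Ioi.1 hu))), fun hm => (ne_of_gt hu) hm⟩
    have hd' : Filter.Tendsto (slope eta s) (nhdsWithin s (Set.Ioi s)) (nhds (eta' s)) :=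
      hd.mono_left (nhdsWithin_mono s hsub)
    refine le_of_tendsto hd' ?_
    filter_upwards [self_mem_nhdsWithin] with u hu
    have h1 : eta u ≤ eta s := heta_mono hs (Set.mem_Ici.2 (le_trans (Set.mem_Ici.1 hs) (le_of_lt (Set.mem_Ioi.1 hu)))) (le_of_lt hu)
    rw [slope_def_field]
    exact div_nonpos_of_nonpos_of_nonneg (by linarith) (by simp at hu; linarith)
  -- integrability helpers
  have hII : ∀ (F : ℝ → ℝ), ContinuousOn F (Set.Ici 0) → ∀ t : ℝ, 0 ≤ t →
      IntervalIntegrable F MeasureTheory.volume 0 t := by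
    intro F hF t ht
    apply ContinuousOn.intervalIntegrable
    rw [Set.uIcc_of_le ht]; exact hF.mono Set.Icc_subset_Ici_self
  have hIIv : ∀ (F : ℝ → EuclideanSpace ℝ (Fin n)), ContinuousOn F (Set.Ici 0) →
      ∀ t : ℝ, 0 ≤ t → IntervalIntegrable F MeasureTheory.volume 0 t := by
    intro F hF t ht
    apply ContinuousOn.intervalIntegrable
    rw [Set.uIcc_of_le ht]; exact hF.mono Set.Icc_subset_Ici_self
  have hSpos : ∀ t > (0:ℝ), 0 < S t := by
    intro t ht
    rw [hS]
    exact intervalIntegral.intervalIntegral_pos_of_pos_on (hII lam hlamcont t ht.le)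
      (fun s hs => hlam_pos s hs.1.le) ht
  have hratio_cont : ContinuousOn (fun s => eta' s / (eta s)^2) (Set.Ici 0) :=
    heta'cont.div (hetacont.pow 2) (fun s hs => pow_ne_zero 2 (heta_pos s hs).ne')
  -- KEY integral bound
  have key : ∀ t > (0:ℝ), ∀ z ∈ X,
      (∫ s in (0:ℝ)..t, lam s * ⟪v (x s), x s - z⟫) ≤ (M - m) / eta t := by
    intro t ht z hz
    set ψ : EuclideanSpace ℝ (Fin n) → ℝ := fun w => ⟪w, Q w⟫ - h (Q w) with hψdef
    have hψd : ∀ w, HasFDerivAt ψ (innerSL ℝ (Q w)) w :=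
      fun w => mdPsiDeriv hQmem hQmax hQlip w
    set φ : ℝ → ℝ := fun s => (eta s)⁻¹ * ψ (eta s • y s) - ⟪y s, z⟫ with hφdef
    set e : ℝ → ℝ := fun s => eta' s / (eta s)^2 * h (x s) - lam s * ⟪v (x s), x s - z⟫
      with hedef
    have hφd : ∀ s ∈ Set.Ici (0:ℝ), HasDerivWithinAt φ (e s) (Set.Ici 0) s := by
      intro s hs
      have hes : 0 < eta s := heta_pos s hs
      have h1 : HasDerivWithinAt (fun u => eta u • y u)
          (eta s • ((-(lam s)) • v (x s)) + eta' s • y s) (Set.Ici 0) s :=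
        (heta'd s hs).smul (hyderiv s hs)
      have h2 : HasDerivWithinAt (fun u => ψ (eta u • y u))
          ((innerSL ℝ (Q (eta s • y s))) (eta s • ((-(lam s)) • v (x s)) + eta' s • y s))
          (Set.Ici 0) s := (hψd _).comp_hasDerivWithinAt s h1
      have h3 : HasDerivWithinAt (fun u => (eta u)⁻¹) (-(eta' s) / (eta s)^2)
          (Set.Ici 0) s := (heta'd s hs).inv hes.ne'
      have h4 := h3.mul h2
      have h5 : HasDerivWithinAt (fun u => ⟪y u, z⟫)
          (⟪y s, (0:EuclideanSpace ℝ (Fin n))⟫ + ⟪(-(lam s)) • v (x s), z⟫)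
          (Set.Ici 0) s :=
        HasDerivWithinAt.inner ℝ (hyderiv s hs) (hasDerivWithinAt_const s _ z)
      have h6 := h4.sub h5
      refine h6.congr_deriv ?_
      simp only [hedef, hψdef, innerSL_apply_apply, ← hx s, inner_zero_right,
        inner_sub_right, inner_add_right, real_inner_smul_right, real_inner_smul_left]
      rw [real_inner_comm (x s) (v (x s)), real_inner_comm (x s) (y s)]
      field_simp
      ring
    have hφcont : ContinuousOn φ (Set.Icc 0 t) :=
      fun s hs => ((hφd s hs.1).continuousWithinAt).mono Set.Icc_subset_Ici_self
    have hecont : ContinuousOn e (Set.Ici 0) := by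
      apply ContinuousOn.sub
      · exact hratio_cont.mul hhxcont
      · exact hlamcont.mul (hvxcont.inner (hxcont.sub continuousOn_const))
    have heint : IntervalIntegrable e MeasureTheory.volume 0 t := hII e hecont t ht.le
    have hFTC : (∫ s in (0:ℝ)..t, e s) = φ t - φ 0 :=
      intervalIntegral.integral_eq_sub_of_hasDeriv_right_of_le ht.le hφcont
        (fun s hs => ((hφd s (le_of_lt hs.1)).hasDerivAt (Ici_mem_nhds hs.1)).hasDerivWithinAt)
        heint
    have hinvd : ∀ s ∈ Set.Ici (0:ℝ),
        HasDerivWithinAt (fun u => -(eta u)⁻¹) (eta' s / (eta s)^2) (Set.Ici 0) s := by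
      intro s hs
      have := ((heta'd s hs).inv (heta_pos s hs).ne').neg
      exact this.congr_deriv (by ring)
    have hietacont : ContinuousOn (fun u => -(eta u)⁻¹) (Set.Icc 0 t) :=
      fun s hs => ((hinvd s hs.1).continuousWithinAt).mono Set.Icc_subset_Ici_self
    have hratio_int : IntervalIntegrable (fun s => eta' s / (eta s)^2)
        MeasureTheory.volume 0 t := hII _ hratio_cont t ht.le
    have hFTC2 : (∫ s in (0:ℝ)..t, eta' s / (eta s)^2) = (eta 0)⁻¹ - (eta t)⁻¹ := by
      have := intervalIntegral.integral_eq_sub_of_hasDeriv_right_of_le ht.le hietacont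
        (fun s hs => ((hinvd s (le_of_lt hs.1)).hasDerivAt (Ici_mem_nhds hs.1)).hasDerivWithinAt)
        hratio_int
      rw [this]; ring
    have het : 0 < eta t := heta_pos t ht.le
    have he0 : 0 < eta 0 := heta_pos 0 le_rfl
    have hφ0 : φ 0 ≤ (eta 0)⁻¹ * (-m) := by
      have hQ0 : m ≤ h (Q ((0:EuclideanSpace ℝ (Fin n)))) := hmle _ (hQmem _)
      have hφ0eq : φ 0 = (eta 0)⁻¹ * (- h (Q ((0:EuclideanSpace ℝ (Fin n))))) := by
        simp [hφdef, hψdef, hy0]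
      rw [hφ0eq]
      have := mul_le_mul_of_nonneg_left (neg_le_neg hQ0) (inv_nonneg.2 he0.le)
      linarith
    have hφt : (eta t)⁻¹ * (-M) ≤ φ t := by
      have h1 : ⟪eta t • y t, z⟫ - h z ≤ ψ (eta t • y t) := hQmax _ z hz
      have h2 := mul_le_mul_of_nonneg_left h1 (inv_nonneg.2 het.le)
      rw [real_inner_smul_left] at h2
      have h3 : h z ≤ M := hMle z hz
      have h4 : (eta t)⁻¹ * (eta t * ⟪y t, z⟫ - h z)
          = ⟪y t, z⟫ - (eta t)⁻¹ * h z := by field_simp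
      rw [h4] at h2
      have h5 : (eta t)⁻¹ * (-M) ≤ -((eta t)⁻¹ * h z) := by
        have := mul_le_mul_of_nonneg_left h3 (inv_nonneg.2 het.le)
        linarith
      simp only [hφdef]
      linarith
    have hebound : ∀ s ∈ Set.Icc (0:ℝ) t,
        e s ≤ eta' s / (eta s)^2 * m - lam s * ⟪v (x s), x s - z⟫ := by
      intro s hs
      have h1 : eta' s / (eta s)^2 ≤ 0 :=
        div_nonpos_of_nonpos_of_nonneg (heta'nonpos s hs.1) (sq_nonneg _)
      have h2 := hmle (x s) (hxX s)
      have := mul_le_mul_of_nonpos_left h2 h1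
      simp only [hedef]
      linarith
    have hAint : IntervalIntegrable (fun s => lam s * ⟪v (x s), x s - z⟫)
        MeasureTheory.volume 0 t :=
      hII _ (hlamcont.mul (hvxcont.inner (hxcont.sub continuousOn_const))) t ht.le
    have hrhs_int : IntervalIntegrable
        (fun s => eta' s / (eta s)^2 * m - lam s * ⟪v (x s), x s - z⟫)
        MeasureTheory.volume 0 t := (hratio_int.mul_const m).sub hAint
    have hmono_int := intervalIntegral.integral_mono_on ht.le heint hrhs_int hebound
    have hsplit : (∫ s in (0:ℝ)..t, (eta' s / (eta s)^2 * m - lam s * ⟪v (x s), x s - z⟫))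
        = ((eta 0)⁻¹ - (eta t)⁻¹) * m - ∫ s in (0:ℝ)..t, lam s * ⟪v (x s), x s - z⟫ := by
      rw [intervalIntegral.integral_sub (hratio_int.mul_const m) hAint,
        intervalIntegral.integral_mul_const, hFTC2]
    rw [hsplit] at hmono_int
    rw [hFTC] at hmono_int
    rw [div_eq_mul_inv, sub_mul]
    nlinarith [hmono_int, hφ0, hφt]
  -- PART 1
  have hpart1 : ∀ t > (0:ℝ), g (xbar t) ≤ (M - m) / (eta t * S t) := by
    intro t ht
    have hSt : 0 < S t := hSpos t ht
    have hb : ∀ z ∈ X, ⟪v z, xbar t - z⟫ ≤ (M - m) / (eta t * S t) := by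
      intro z hz
      have hlamx_int : IntervalIntegrable (fun s => lam s • x s) MeasureTheory.volume 0 t :=
        hIIv _ (hlamcont.smul hxcont) t ht.le
      have hint1 : IntervalIntegrable (fun s => lam s * ⟪v z, x s - z⟫)
          MeasureTheory.volume 0 t :=
        hII _ (hlamcont.mul (continuousOn_const.inner (hxcont.sub continuousOn_const))) t ht.le
      have hAint : IntervalIntegrable (fun s => lam s * ⟪v (x s), x s - z⟫)
          MeasureTheory.volume 0 t :=
        hII _ (hlamcont.mul (hvxcont.inner (hxcont.sub continuousOn_const))) t ht.le
      have hinner_eq : ⟪v z, xbar t - z⟫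
          = (S t)⁻¹ * ∫ s in (0:ℝ)..t, lam s * ⟪v z, x s - z⟫ := by
        rw [hxbar t, inner_sub_right, real_inner_smul_right]
        have h1 : ⟪v z, ∫ s in (0:ℝ)..t, lam s • x s⟫
            = ∫ s in (0:ℝ)..t, lam s * ⟪v z, x s⟫ := by
          have hcc := ContinuousLinearMap.intervalIntegral_comp_comm (innerSL ℝ (v z)) hlamx_int
          simp only [innerSL_apply_apply, real_inner_smul_right] at hcc
          exact hcc.symm
        have h3 : (∫ s in (0:ℝ)..t, lam s * ⟪v z, x s - z⟫)
            = (∫ s in (0:ℝ)..t, lam s * ⟪v z, x s⟫) - (∫ s in (0:ℝ)..t, lam s) * ⟪v z, z⟫ := by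
          have heq : ∀ s, lam s * ⟪v z, x s - z⟫
              = lam s * ⟪v z, x s⟫ - lam s * ⟪v z, z⟫ := by
            intro s; rw [inner_sub_right]; ring
          rw [intervalIntegral.integral_congr (fun s _ => heq s),
            intervalIntegral.integral_sub
              (hII (fun s => lam s * ⟪v z, x s⟫) (hlamcont.mul (continuousOn_const.inner hxcont)) t ht.le)
              ((hII lam hlamcont t ht.le).mul_const _),
            intervalIntegral.integral_mul_const]
        rw [h1, h3, ← hS t]
        field_simp
      have hple : ∀ s ∈ Set.Icc (0:ℝ) t,
          lam s * ⟪v z, x s - z⟫ ≤ lam s * ⟪v (x s), x s - z⟫ := by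
        intro s hs
        have hm0 := hmono (x s) (hxX s) z hz
        rw [inner_sub_left] at hm0
        exact mul_le_mul_of_nonneg_left (by linarith) (hlam_pos s hs.1).le
      have hmono2 := intervalIntegral.integral_mono_on ht.le hint1 hAint hple
      have hkey := key t ht z hz
      rw [hinner_eq]
      calc (S t)⁻¹ * ∫ s in (0:ℝ)..t, lam s * ⟪v z, x s - z⟫
          ≤ (S t)⁻¹ * ((M - m) / eta t) :=
            mul_le_mul_of_nonneg_left (le_trans hmono2 hkey) (inv_nonneg.2 hSt.le)
        _ = (M - m) / (eta t * S t) := by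
            rw [inv_mul_eq_div, div_div]
    rw [hg]
    apply csSup_le (hne.image _)
    rintro _ ⟨z, hz, rfl⟩
    exact hb z hz
  refine ⟨hpart1, ?_⟩
  have hxbarX : ∀ t > (0:ℝ), xbar t ∈ X := by
    intro t ht
    by_contra hnot
    obtain ⟨f, u, hfu, hux⟩ := geometric_hahn_banach_closed_point hconv hcomp.isClosed hnot
    have hSt : 0 < S t := hSpos t ht
    have hlamx_int : IntervalIntegrable (fun s => lam s • x s) MeasureTheory.volume 0 t :=
      hIIv _ (hlamcont.smul hxcont) t ht.le
    have hf1 : f (xbar t) = (S t)⁻¹ * ∫ s in (0:ℝ)..t, f (lam s • x s) := by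
      rw [hxbar t, map_smul, ContinuousLinearMap.intervalIntegral_comp_comm f hlamx_int,
        smul_eq_mul]
    have hint1 : IntervalIntegrable (fun s => f (lam s • x s)) MeasureTheory.volume 0 t :=
      hII _ (f.continuous.comp_continuousOn (hlamcont.smul hxcont)) t ht.le
    have hint2 : IntervalIntegrable (fun s => lam s * u) MeasureTheory.volume 0 t :=
      (hII lam hlamcont t ht.le).mul_const u
    have hle : (∫ s in (0:ℝ)..t, f (lam s • x s)) ≤ ∫ s in (0:ℝ)..t, lam s * u := by
      apply intervalIntegral.integral_mono_on ht.le hint1 hint2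
      intro s hs
      rw [map_smul, smul_eq_mul]
      exact mul_le_mul_of_nonneg_left (hfu (x s) (hxX s)).le (hlam_pos s hs.1).le
    have hfin : f (xbar t) ≤ u := by
      rw [hf1]
      have h2 : (∫ s in (0:ℝ)..t, lam s * u) = S t * u := by
        rw [intervalIntegral.integral_mul_const, ← hS t]
      calc (S t)⁻¹ * ∫ s in (0:ℝ)..t, f (lam s • x s)
          ≤ (S t)⁻¹ * (S t * u) := by
            rw [← h2]; exact mul_le_mul_of_nonneg_left hle (inv_nonneg.2 hSt.le)
        _ = u := by field_simp
    exact absurd hfin (not_le.2 hux)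
  have hbdd : ∀ p, BddAbove ((fun x' => ⟪v x', p - x'⟫) '' X) := fun p =>
    hcomp.bddAbove_image (hvX.inner (continuousOn_const.sub continuousOn_id))
  have hg0 : ∀ p ∈ X, 0 ≤ g p := by
    intro p hp
    rw [hg]
    refine le_csSup (hbdd p) ⟨p, hp, by simp⟩
  obtain ⟨C, hC⟩ := hcomp.exists_bound_of_continuousOn hvX
  have hglip : ∀ p q, g p ≤ g q + C * ‖p - q‖ := by
    intro p q
    rw [hg p]
    apply csSup_le (hne.image _)
    rintro _ ⟨w, hw, rfl⟩
    have h1 : ⟪v w, q - w⟫ ≤ g q := by rw [hg q]; exact le_csSup (hbdd q) ⟨w, hw, rfl⟩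
    have h2 : ⟪v w, p - w⟫ = ⟪v w, q - w⟫ + ⟪v w, p - q⟫ := by
      rw [← inner_add_right]; congr 1; abel
    have h3 : ⟪v w, p - q⟫ ≤ ‖v w‖ * ‖p - q‖ := real_inner_le_norm _ _
    have h4 : ‖v w‖ * ‖p - q‖ ≤ C * ‖p - q‖ :=
      mul_le_mul_of_nonneg_right (hC w hw) (norm_nonneg _)
    linarith
  have hgcont : Continuous g := by
    refine LipschitzWith.continuous (K := Real.toNNReal C) ?_
    apply LipschitzWith.of_dist_le_mul
    intro p q
    rw [Real.dist_eq, dist_eq_norm]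
    have hC0 : (Real.toNNReal C : ℝ) = max C 0 := Real.coe_toNNReal' C
    rw [hC0]
    have h1 := hglip p q
    have h2 := hglip q p
    rw [norm_sub_rev q p] at h2
    have h5 : C * ‖p - q‖ ≤ max C 0 * ‖p - q‖ :=
      mul_le_mul_of_nonneg_right (le_max_left _ _) (norm_nonneg _)
    rw [abs_le]
    constructor <;> linarith
  intro hlim
  set Sol := {xs | xs ∈ X ∧ ∀ z ∈ X, 0 ≤ ⟪v z, z - xs⟫} with hSoldef
  rw [Metric.tendsto_nhds]
  intro ε hε
  set K := {p | p ∈ X ∧ ε ≤ Metric.infDist p Sol} with hKdef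
  by_cases hKne : K.Nonempty
  · have hKclosed : IsClosed {p : EuclideanSpace ℝ (Fin n) | ε ≤ Metric.infDist p Sol} :=
      isClosed_le continuous_const (Metric.continuous_infDist_pt Sol)
    have hKcomp : IsCompact K := by
      have hKeq : K = X ∩ {p | ε ≤ Metric.infDist p Sol} := rfl
      rw [hKeq]
      exact hcomp.inter_right hKclosed
    obtain ⟨p₀, hp₀K, hp₀min⟩ := hKcomp.exists_isMinOn hKne hgcont.continuousOn
    have hδpos : 0 < g p₀ := by
      rcases (hg0 p₀ hp₀K.1).lt_or_eq with hlt | heq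
      · exact hlt
      · exfalso
        have hp₀Sol : p₀ ∈ Sol := by
          refine ⟨hp₀K.1, fun z hz => ?_⟩
          have h1 : ⟪v z, p₀ - z⟫ ≤ g p₀ := by
            rw [hg]; exact le_csSup (hbdd p₀) ⟨z, hz, rfl⟩
          have h2 : ⟪v z, z - p₀⟫ = -⟪v z, p₀ - z⟫ := by
            rw [← inner_neg_right]; congr 1; abel
          rw [h2]; linarith
        have h0 : Metric.infDist p₀ Sol = 0 := Metric.infDist_zero_of_mem hp₀Sol
        have := hp₀K.2
        rw [h0] at this
        linarith
    have h1 : Filter.Tendsto (fun t => (M - m) / (eta t * S t)) Filter.atTop (nhds 0) :=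
      Filter.Tendsto.div_atTop tendsto_const_nhds hlim
    have h2 : ∀ᶠ t in Filter.atTop, (M - m) / (eta t * S t) < g p₀ :=
      h1.eventually (gt_mem_nhds hδpos)
    filter_upwards [h2, Filter.eventually_gt_atTop 0] with t ht2 ht0
    have hxt : xbar t ∈ X := hxbarX t ht0
    have hgx : g (xbar t) < g p₀ := lt_of_le_of_lt (hpart1 t ht0) ht2
    have hnotK : xbar t ∉ K := fun hmem => absurd ((isMinOn_iff.1 hp₀min) _ hmem) (not_le.2 hgx)
    have hlt : Metric.infDist (xbar t) Sol < ε := by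
      by_contra hge
      exact hnotK ⟨hxt, le_of_not_gt hge⟩
    rw [Real.dist_eq, sub_zero, abs_of_nonneg Metric.infDist_nonneg]
    exact hlt
  · filter_upwards [Filter.eventually_gt_atTop 0] with t ht0
    have hxt : xbar t ∈ X := hxbarX t ht0
    have hlt : Metric.infDist (xbar t) Sol < ε := by
      by_contra hge
      exact hKne ⟨xbar t, hxt, le_of_not_gt hge⟩
    rw [Real.dist_eq, sub_zero, abs_of_nonneg Metric.infDist_nonneg]
    exact hlt
end

section
/- Let X = X¹ × X² with X¹ ⊆ ℝ^{n₁}, X² ⊆ ℝ^{n₂} compact convex, and let U : X¹ × X² → ℝ be smooth and convex-concave with associated saddle operator v(x¹, x²) = (∇_{x¹}U(x¹, x²), −∇_{x²}U(x¹, x²)), assumed Lipschitz. Let h₁, h₂ be distance-generating functions on X¹, X², λ, η positive, C¹-smooth and nonincreasing, and let x(t) = (x¹(t), x²(t)) be the primal trajectory of the mirror descent dynamics dy/dt = −λ(t) v(x(t)), x^i(t) = Q_i(η(t) y^i(t)), initialized at y(0) = 0. Then the Nikaido–Isoda gap of the averaged trajectory x̄(t) = S(t)⁻¹ ∫₀ᵗ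 λ(s) x(s) ds satisfies G(x̄¹(t), x̄²(t)) ≤ (D(h₁; X¹) + D(h₂; X²))/(η(t) S(t)), where S(t) = ∫₀ᵗ λ(s) ds. -/
open scoped RealInnerProductSpace

open Set Filter Asymptotics Topology MeasureTheory

/-- Gradient inequality for a convex function on a convex set. -/
lemma aux_grad_ineq {E : Type*} [NormedAddCommGroup E] [InnerProductSpace ℝ E] [CompleteSpace E]
    {X : Set E} {U : E → ℝ} (hU : ConvexOn ℝ X U) {p q : E} (hp : p ∈ X) (hq : q ∈ X)
    {g : E} (hg : HasGradientAt U g p) : U p + ⟪g, q - p⟫ ≤ U q := by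
  have hpath : HasDerivAt (fun τ : ℝ => p + τ • (q - p)) (q - p) 0 := by
    simpa using ((hasDerivAt_id (0:ℝ)).smul_const (q - p)).const_add p
  have hg' : HasFDerivAt U ((InnerProductSpace.toDual ℝ E) g) (p + (0:ℝ) • (q - p)) := by
    simpa using hg.hasFDerivAt
  have hψ : HasDerivAt (fun τ : ℝ => U (p + τ • (q - p))) ⟪g, q - p⟫ 0 := by
    have := hg'.comp_hasDerivAt 0 hpath
    simpa [InnerProductSpace.toDual_apply_apply, Function.comp_def] using this
  have hslope : ∀ τ ∈ Ioo (0:ℝ) 1, slope (fun τ : ℝ => U (p + τ • (q - p))) 0 τ ≤ U q - U p := by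
    intro τ hτ
    have hcvx := hU.2 hp hq (by linarith [hτ.2] : (0:ℝ) ≤ 1 - τ) hτ.1.le (by ring)
    have heq : (1 - τ) • p + τ • q = p + τ • (q - p) := by
      simp [smul_sub, sub_smul]; abel
    rw [heq, smul_eq_mul, smul_eq_mul] at hcvx
    rw [slope_def_field]
    have : (U (p + τ • (q - p)) - U p) / τ ≤ U q - U p := by
      rw [div_le_iff₀ hτ.1]
      nlinarith [hcvx]
    simpa [div_eq_inv_mul] using this
  have htend : Tendsto (slope (fun τ : ℝ => U (p + τ • (q - p))) 0) (𝓝[>] (0:ℝ))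
      (𝓝 ⟪g, q - p⟫) :=
    (hasDerivAt_iff_tendsto_slope.1 hψ).mono_left
      (nhdsWithin_mono _ (fun u hu => ne_of_gt hu))
  have hle : ⟪g, q - p⟫ ≤ U q - U p := by
    refine le_of_tendsto htend ?_
    filter_upwards [Ioo_mem_nhdsGT_of_mem (by norm_num : (0:ℝ) ∈ Ico (0:ℝ) 1)] with τ hτ
    exact hslope τ hτ
  linarith

/-- A function antitone on `[0, ∞)` has nonpositive derivative at interior points. -/
lemma aux_deriv_nonpos {f : ℝ → ℝ} {d s : ℝ} (hs : 0 < s)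
    (hf : HasDerivAt f d s) (hmono : AntitoneOn f (Set.Ici 0)) : d ≤ 0 := by
  have htend : Tendsto (slope f s) (𝓝[>] s) (𝓝 d) :=
    (hasDerivAt_iff_tendsto_slope.1 hf).mono_left
      (nhdsWithin_mono _ (fun u hu => ne_of_gt hu))
  refine le_of_tendsto htend ?_
  filter_upwards [self_mem_nhdsWithin] with u hu
  rw [slope_def_field]
  have hfu : f u ≤ f s := hmono hs.le (hs.trans hu).le (le_of_lt hu)
  exact div_nonpos_of_nonpos_of_nonneg (by linarith) (by linarith [sub_pos.2 (mem_Ioi.1 hu)])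

/-- The mirror map of an `α`-strongly convex distance-generating function is
`(2/α)`-Lipschitz. -/
lemma aux_Q_lip {E : Type*} [NormedAddCommGroup E] [InnerProductSpace ℝ E]
    {X : Set E} (hconv : Convex ℝ X) {h : E → ℝ} {α : ℝ} (hα : 0 < α)
    {Q : E → E} (hQmem : ∀ y, Q y ∈ X)
    (hQmax : ∀ y, ∀ x ∈ X, ⟪y, x⟫ - h x ≤ ⟪y, Q y⟫ - h (Q y))
    (hsc : ∀ x ∈ X, ∀ x' ∈ X, ∀ t ∈ Set.Icc (0:ℝ) 1,
      h (t • x + (1 - t) • x') ≤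
        t * h x + (1 - t) * h x' - α / 2 * t * (1 - t) * ‖x - x'‖ ^ 2) :
    ∀ y y', ‖Q y - Q y'‖ ≤ 2 / α * ‖y - y'‖ := by
  have key : ∀ y y' : E, ⟪y, Q y' - Q y⟫ ≤ h (Q y') - h (Q y) - α / 4 * ‖Q y' - Q y‖ ^ 2 := by
    intro y y'
    set p := Q y with hp
    set q := Q y' with hq
    have hm : (1/2 : ℝ) • q + (1 - 1/2 : ℝ) • p ∈ X :=
      hconv (hQmem y') (hQmem y) (by norm_num) (by norm_num) (by norm_num)
    have h1 := hQmax y _ hm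
    have h2 := hsc q (hQmem y') p (hQmem y) (1/2) (by norm_num)
    have h3 : ⟪y, (1/2 : ℝ) • q + (1 - 1/2 : ℝ) • p⟫ = 1/2 * ⟪y, q⟫ + 1/2 * ⟪y, p⟫ := by
      rw [inner_add_right, real_inner_smul_right, real_inner_smul_right]; norm_num
    have h4 : ⟪y, q⟫ - ⟪y, p⟫ = ⟪y, q - p⟫ := (inner_sub_right y q p).symm
    nlinarith [h1, h2, h3, h4]
  intro y y'
  have k1 := key y y'
  have k2 := key y' y
  have hnorm : ‖Q y - Q y'‖ = ‖Q y' - Q y‖ := norm_sub_rev _ _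
  have hsum : α / 2 * ‖Q y' - Q y‖ ^ 2 ≤ ⟪y' - y, Q y' - Q y⟫ := by
    have e1 : ⟪y' - y, Q y' - Q y⟫ = ⟪y', Q y' - Q y⟫ - ⟪y, Q y' - Q y⟫ := inner_sub_left _ _ _
    have e2 : ⟪y', Q y - Q y'⟫ = -⟪y', Q y' - Q y⟫ := by rw [← inner_neg_right]; congr 1; abel
    have e3 : ‖Q y - Q y'‖ = ‖Q y' - Q y‖ := norm_sub_rev _ _
    rw [e2, e3] at k2
    nlinarith [k1, k2, e1]
  have hcs : ⟪y' - y, Q y' - Q y⟫ ≤ ‖y' - y‖ * ‖Q y' - Q y‖ := real_inner_le_norm _ _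
  rw [hnorm]
  rcases eq_or_lt_of_le (norm_nonneg (Q y' - Q y)) with hz | hz
  · rw [← hz]
    positivity
  · rw [norm_sub_rev y y']
    have : α / 2 * ‖Q y' - Q y‖ ≤ ‖y' - y‖ := by
      have := hsum.trans hcs
      nlinarith [hz]
    rw [div_mul_eq_mul_div, le_div_iff₀ hα]
    nlinarith [this]

lemma aux_lip_cont {E : Type*} [NormedAddCommGroup E] [InnerProductSpace ℝ E]
    {Q : E → E} {α : ℝ} (hα : 0 < α)
    (hQlip : ∀ y y', ‖Q y - Q y'‖ ≤ 2 / α * ‖y - y'‖) : Continuous Q := by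
  have : LipschitzWith (Real.toNNReal (2/α)) Q := by
    apply LipschitzWith.of_dist_le_mul
    intro a b
    rw [dist_eq_norm, dist_eq_norm, Real.coe_toNNReal _ (by positivity)]
    exact hQlip a b
  exact this.continuous

/-- Key energy estimate for the continuous-time mirror descent dynamics. -/
lemma aux_energy {E : Type*} [NormedAddCommGroup E] [InnerProductSpace ℝ E]
    {X : Set E} (hcomp : IsCompact X) (hconv : Convex ℝ X)
    {h : E → ℝ} (hcont : ContinuousOn h X) {α : ℝ} (hα : 0 < α)
    (hsc : ∀ x ∈ X, ∀ x' ∈ X, ∀ t ∈ Set.Icc (0:ℝ) 1,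
      h (t • x + (1 - t) • x') ≤
        t * h x + (1 - t) * h x' - α / 2 * t * (1 - t) * ‖x - x'‖ ^ 2)
    {Q : E → E} (hQmem : ∀ y, Q y ∈ X)
    (hQmax : ∀ y, ∀ x ∈ X, ⟪y, x⟫ - h x ≤ ⟪y, Q y⟫ - h (Q y))
    {eta : ℝ → ℝ} (heta_pos : ∀ t ≥ (0:ℝ), 0 < eta t)
    (heta_smooth : ContDiffOn ℝ 1 eta (Set.Ici 0)) (heta_mono : AntitoneOn eta (Set.Ici 0))
    {y : ℝ → E} {v : ℝ → E} (hy0 : y 0 = 0)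
    (hyd : ∀ s ∈ Set.Ici (0:ℝ), HasDerivWithinAt y (v s) (Set.Ici 0) s)
    {x : ℝ → E} (hx : ∀ s, x s = Q (eta s • y s))
    {z : E} (hz : z ∈ X) {t : ℝ} (ht : 0 < t) :
    ∃ En : ℝ → ℝ, ContinuousOn En (Set.Icc 0 t) ∧ En 0 = 0 ∧
      En t ≤ (sSup (h '' X) - sInf (h '' X)) / eta t ∧
      ∀ s ∈ Set.Ioo 0 t, ∃ d, HasDerivAt En d s ∧ ⟪v s, z - x s⟫ ≤ d := by
  have hQlip := aux_Q_lip hconv hα hQmem hQmax hsc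
  set w : ℝ → E := fun s => eta s • y s with hw
  set f : E → ℝ := fun u => ⟪u, Q u⟫ - h (Q u) with hf
  set c : ℝ := h (Q 0) with hc
  have hcleQ : ∀ u : E, c ≤ h (Q u) := by
    intro u
    have := hQmax 0 (Q u) (hQmem u)
    simpa using this
  refine ⟨fun s => ⟪y s, z⟫ - (f (w s) + c) / eta s, ?_, ?_, ?_, ?_⟩
  case _ =>   -- continuity
    have hycont : ContinuousOn y (Ici 0) := fun s hs => (hyd s hs).continuousWithinAt
    have hetacont : ContinuousOn eta (Ici 0) := heta_smooth.continuousOn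
    have hwcont : ContinuousOn w (Ici 0) := hetacont.smul hycont
    have hQcont : Continuous Q := aux_lip_cont hα hQlip
    have hxcont : ContinuousOn (fun s => Q (w s)) (Ici 0) := hQcont.comp_continuousOn hwcont
    have hfwcont : ContinuousOn (fun s => f (w s)) (Ici 0) := by
      have h1 : ContinuousOn (fun s => ⟪w s, Q (w s)⟫) (Ici 0) := hwcont.inner hxcont
      have h2 : ContinuousOn (fun s => h (Q (w s))) (Ici 0) :=
        hcont.comp hxcont (fun s _ => hQmem _)
      exact h1.sub h2
    have : ContinuousOn (fun s => ⟪y s, z⟫ - (f (w s) + c) / eta s) (Ici 0) := by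
      refine (hycont.inner continuousOn_const).sub ?_
      exact (hfwcont.add continuousOn_const).div hetacont (fun s hs => (heta_pos s hs).ne')
    exact this.mono Icc_subset_Ici_self
  case _ =>   -- value at 0
    have hw0 : w 0 = 0 := by simp [hw, hy0]
    have hf0 : f (0 : E) = -c := by simp [hf, hc]
    simp [hw0, hf0, hy0]
  case _ =>   -- value at t
    have hηt : 0 < eta t := heta_pos t ht.le
    have hwz : ⟪w t, z⟫ = eta t * ⟪y t, z⟫ := real_inner_smul_left _ _ _
    have hEt : ⟪y t, z⟫ - (f (w t) + c) / eta t ≤ (h z - c) / eta t := by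
      have h1 : eta t * ⟪y t, z⟫ - h z ≤ f (w t) := by
        have h2 : ⟪w t, z⟫ - h z ≤ ⟪w t, Q (w t)⟫ - h (Q (w t)) := hQmax (w t) z hz
        rw [hwz] at h2
        exact h2
      rw [sub_le_iff_le_add, ← add_div, le_div_iff₀ hηt]
      nlinarith [h1]
    refine hEt.trans ?_
    have hbA : BddAbove (h '' X) := hcomp.bddAbove_image hcont
    have hbB : BddBelow (h '' X) := hcomp.bddBelow_image hcont
    have h1 : h z ≤ sSup (h '' X) := le_csSup hbA ⟨z, hz, rfl⟩
    have h2 : sInf (h '' X) ≤ c := csInf_le hbB ⟨Q 0, hQmem 0, rfl⟩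
    have hnum : h z - c ≤ sSup (h '' X) - sInf (h '' X) := by linarith
    gcongr
  case _ =>   -- derivative
    intro s hs
    have hs0 : 0 < s := hs.1
    have hηs : 0 < eta s := heta_pos s hs0.le
    have hnhds : Ici (0:ℝ) ∈ 𝓝 s := Ici_mem_nhds hs0
    have hy' : HasDerivAt y (v s) s := (hyd s hs0.le).hasDerivAt hnhds
    have heta' : HasDerivAt eta (deriv eta s) s :=
      ((heta_smooth.contDiffAt hnhds).differentiableAt one_ne_zero).hasDerivAt
    have hw' : HasDerivAt w (eta s • v s + deriv eta s • y s) s := heta'.smul hy'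
    set W : E := eta s • v s + deriv eta s • y s with hW
    -- Danskin: derivative of f ∘ w
    have hI : HasDerivAt (fun u : ℝ => ⟪w u, Q (w s)⟫) ⟪W, Q (w s)⟫ s := by
      have := HasDerivAt.inner ℝ hw' (hasDerivAt_const s (Q (w s)))
      simpa using this
    have hF : HasDerivAt (fun u : ℝ => f (w u)) ⟪W, Q (w s)⟫ s := by
      rw [hasDerivAt_iff_isLittleO]
      have hIo := hasDerivAt_iff_isLittleO.1 hI
      have hbound : ∀ u : ℝ, |f (w u) - f (w s) - (⟪w u, Q (w s)⟫ - ⟪w s, Q (w s)⟫)| ≤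
          (2/α) * (‖w u - w s‖ * ‖w u - w s‖) := by
        intro u
        have hlow : ⟪w u, Q (w s)⟫ - ⟪w s, Q (w s)⟫ ≤ f (w u) - f (w s) := by
          have h1 : ⟪w u, Q (w s)⟫ - h (Q (w s)) ≤ f (w u) := hQmax (w u) _ (hQmem _)
          have h2 : f (w s) = ⟪w s, Q (w s)⟫ - h (Q (w s)) := rfl
          linarith
        have hup : f (w u) - f (w s) ≤ ⟪w u, Q (w u)⟫ - ⟪w s, Q (w u)⟫ := by
          have h1 : ⟪w s, Q (w u)⟫ - h (Q (w u)) ≤ f (w s) := hQmax (w s) _ (hQmem _)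
          have h2 : f (w u) = ⟪w u, Q (w u)⟫ - h (Q (w u)) := rfl
          linarith
        have hexp : ⟪w u - w s, Q (w u) - Q (w s)⟫ =
            ⟪w u, Q (w u)⟫ - ⟪w s, Q (w u)⟫ - (⟪w u, Q (w s)⟫ - ⟪w s, Q (w s)⟫) := by
          rw [inner_sub_left, inner_sub_right, inner_sub_right]; ring
        have hmid : f (w u) - f (w s) - (⟪w u, Q (w s)⟫ - ⟪w s, Q (w s)⟫) ≤
            ‖w u - w s‖ * ‖Q (w u) - Q (w s)‖ := by
          have := real_inner_le_norm (w u - w s) (Q (w u) - Q (w s))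
          linarith [hexp ▸ this]
        have hQl : ‖Q (w u) - Q (w s)‖ ≤ 2/α * ‖w u - w s‖ := hQlip _ _
        have hml := mul_le_mul_of_nonneg_left hQl (norm_nonneg (w u - w s))
        have he : ‖w u - w s‖ * (2/α * ‖w u - w s‖) = 2/α * (‖w u - w s‖ * ‖w u - w s‖) := by
          ring
        have hnn : 0 ≤ 2/α * (‖w u - w s‖ * ‖w u - w s‖) := by positivity
        have hnn2 : 0 ≤ f (w u) - f (w s) - (⟪w u, Q (w s)⟫ - ⟪w s, Q (w s)⟫) := by
          linarith [hlow]
        rw [abs_le]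
        exact ⟨le_trans (neg_nonpos.2 hnn) hnn2, hmid.trans (hml.trans he.le)⟩
      have hwO : (fun u : ℝ => w u - w s) =O[𝓝 s] (fun u : ℝ => u - s) := hw'.isBigO_sub
      have hwsmall : (fun u : ℝ => w u - w s) =o[𝓝 s] (fun _ : ℝ => (1:ℝ)) := by
        rw [isLittleO_one_iff]
        have h0 : Tendsto w (𝓝 s) (𝓝 (w s)) := hw'.continuousAt.tendsto
        have h1 := h0.sub (tendsto_const_nhds (x := w s))
        simpa using h1
      have hsq : (fun u : ℝ => ‖w u - w s‖ * ‖w u - w s‖) =o[𝓝 s] (fun u : ℝ => u - s) := by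
        have h3 := hwsmall.norm_left.mul_isBigO hwO.norm_left
        simpa using h3
      have hA : (fun u : ℝ => f (w u) - f (w s) - (⟪w u, Q (w s)⟫ - ⟪w s, Q (w s)⟫))
          =o[𝓝 s] (fun u : ℝ => u - s) :=
        (IsBigO.of_bound (2/α) (Eventually.of_forall fun u => by
          simpa [Real.norm_eq_abs, abs_of_nonneg
            (mul_nonneg (norm_nonneg (w u - w s)) (norm_nonneg (w u - w s)))] using hbound u)).trans_isLittleO hsq
      have hcomb := hA.add hIo
      refine hcomb.congr' (Eventually.of_forall fun u => by ring) (Eventually.of_forall fun u => rfl)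
    -- assemble the derivative of the energy function
    have hz' : HasDerivAt (fun u : ℝ => ⟪y u, z⟫) ⟪v s, z⟫ s := by
      have := HasDerivAt.inner ℝ hy' (hasDerivAt_const s z)
      simpa using this
    have hdiv : HasDerivAt (fun u : ℝ => (f (w u) + c) / eta u)
        ((⟪W, Q (w s)⟫ * eta s - (f (w s) + c) * deriv eta s) / (eta s)^2) s :=
      (hF.add_const c).div heta' hηs.ne'
    refine ⟨_, hz'.sub hdiv, ?_⟩
    have hη' : deriv eta s ≤ 0 := aux_deriv_nonpos hs0 heta' heta_mono
    have hxe : x s = Q (w s) := hx s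
    have hWx : ⟪W, Q (w s)⟫ = eta s * ⟪v s, Q (w s)⟫ + deriv eta s * ⟪y s, Q (w s)⟫ := by
      rw [hW, inner_add_left, real_inner_smul_left, real_inner_smul_left]
    have hfws : f (w s) = eta s * ⟪y s, Q (w s)⟫ - h (Q (w s)) := by
      have h5 : (⟪w s, Q (w s)⟫ : ℝ) = eta s * ⟪y s, Q (w s)⟫ := real_inner_smul_left _ _ _
      rw [hf]; dsimp only; rw [h5]
    have hvzx : ⟪v s, z - x s⟫ = ⟪v s, z⟫ - ⟪v s, Q (w s)⟫ := by
      rw [inner_sub_right, hxe]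
    rw [hvzx]
    have hkey : (⟪W, Q (w s)⟫ * eta s - (f (w s) + c) * deriv eta s) / (eta s)^2
        ≤ ⟪v s, Q (w s)⟫ := by
      rw [div_le_iff₀ (by positivity)]
      have hcle := hcleQ (w s)
      nlinarith [hWx, hfws, mul_nonneg (neg_nonneg.2 hη') (sub_nonneg.2 hcle)]
    linarith

/-- The weighted average of a trajectory in a compact convex set stays in the set. -/
lemma aux_avg_mem {E : Type*} [NormedAddCommGroup E] [InnerProductSpace ℝ E] [CompleteSpace E]
    {X : Set E} (hcomp : IsCompact X) (hconv : Convex ℝ X)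
    {lam : ℝ → ℝ} {x : ℝ → E} {t St : ℝ} (ht : 0 < t)
    (hlc : ContinuousOn lam (Set.Icc 0 t)) (hxc : ContinuousOn x (Set.Icc 0 t))
    (hlpos : ∀ s ∈ Set.Icc (0:ℝ) t, 0 < lam s) (hxmem : ∀ s, x s ∈ X)
    (hSt : St = ∫ s in (0:ℝ)..t, lam s) :
    St⁻¹ • (∫ s in (0:ℝ)..t, lam s • x s) ∈ X := by
  have huIcc : Set.uIcc (0:ℝ) t = Set.Icc 0 t := uIcc_of_le ht.le
  have hlInt : IntervalIntegrable lam volume 0 t :=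
    (huIcc ▸ hlc).intervalIntegrable
  have hxInt : IntervalIntegrable (fun s => lam s • x s) volume 0 t :=
    (huIcc ▸ (hlc.smul hxc)).intervalIntegrable
  have hStpos : 0 < St := by
    rw [hSt]
    exact intervalIntegral.intervalIntegral_pos_of_pos_on hlInt
      (fun s hs => hlpos s ⟨hs.1.le, hs.2.le⟩) ht
  by_contra hnot
  obtain ⟨φ, u, hφ1, hφ2⟩ := geometric_hahn_banach_point_closed hconv hcomp.isClosed hnot
  have hφint : ∫ s in (0:ℝ)..t, φ (lam s • x s) = φ (∫ s in (0:ℝ)..t, lam s • x s) :=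
    φ.intervalIntegral_comp_comm hxInt
  have hint1 : IntervalIntegrable (fun s => lam s * u) volume 0 t :=
    (huIcc ▸ (hlc.mul continuousOn_const)).intervalIntegrable
  have hint2 : IntervalIntegrable (fun s => lam s * φ (x s)) volume 0 t :=
    (huIcc ▸ (hlc.mul (φ.continuous.comp_continuousOn hxc))).intervalIntegrable
  have hmono : (∫ s in (0:ℝ)..t, lam s * u) ≤ ∫ s in (0:ℝ)..t, lam s * φ (x s) := by
    apply intervalIntegral.integral_mono_on ht.le hint1 hint2
    intro s hs
    exact mul_le_mul_of_nonneg_left (hφ2 _ (hxmem s)).le (hlpos s hs).le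
  have h1 : (∫ s in (0:ℝ)..t, lam s * u) = St * u := by
    rw [hSt, intervalIntegral.integral_mul_const]
  have h2 : (∫ s in (0:ℝ)..t, lam s * φ (x s)) = φ (∫ s in (0:ℝ)..t, lam s • x s) := by
    rw [← hφint]
    apply intervalIntegral.integral_congr
    intro s _
    simp [φ.map_smul, smul_eq_mul]
  have hφpt : φ (St⁻¹ • ∫ s in (0:ℝ)..t, lam s • x s)
      = St⁻¹ * φ (∫ s in (0:ℝ)..t, lam s • x s) := by
    simp [φ.map_smul, smul_eq_mul]
  rw [hφpt] at hφ1
  have hval : St * u ≤ φ (∫ s in (0:ℝ)..t, lam s • x s) := by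
    rw [← h1, ← h2]; exact hmono
  have := mul_le_mul_of_nonneg_left hval (inv_nonneg.2 hStpos.le)
  rw [← mul_assoc, inv_mul_cancel₀ hStpos.ne', one_mul] at this
  linarith

/-- Jensen-type averaging inequality via the gradient inequality. -/
lemma aux_jensen {E : Type*} [NormedAddCommGroup E] [InnerProductSpace ℝ E] [CompleteSpace E]
    {X : Set E} {U : E → ℝ} (hU : ConvexOn ℝ X U)
    {lam : ℝ → ℝ} {x : ℝ → E} {t St : ℝ} (ht : 0 < t) (hStpos : 0 < St)
    (hlc : ContinuousOn lam (Set.Icc 0 t)) (hxc : ContinuousOn x (Set.Icc 0 t))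
    (hlpos : ∀ s ∈ Set.Icc (0:ℝ) t, 0 ≤ lam s) (hxmem : ∀ s, x s ∈ X)
    (hSt : St = ∫ s in (0:ℝ)..t, lam s)
    {p g : E} (hp : p = St⁻¹ • ∫ s in (0:ℝ)..t, lam s • x s) (hpX : p ∈ X)
    (hg : HasGradientAt U g p)
    (hUx : ContinuousOn (fun s => U (x s)) (Set.Icc 0 t)) :
    St * U p ≤ ∫ s in (0:ℝ)..t, lam s * U (x s) := by
  have huIcc : Set.uIcc (0:ℝ) t = Set.Icc 0 t := uIcc_of_le ht.le
  have hxInt : IntervalIntegrable (fun s => lam s • x s) volume 0 t :=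
    (huIcc ▸ (hlc.smul hxc)).intervalIntegrable
  have hIeq : (∫ s in (0:ℝ)..t, lam s • x s) = St • p := by
    rw [hp, smul_inv_smul₀ hStpos.ne']
  have hintA : IntervalIntegrable (fun s => lam s * U p) volume 0 t :=
    (huIcc ▸ (hlc.mul continuousOn_const)).intervalIntegrable
  have hintB : IntervalIntegrable (fun s => ⟪g, lam s • x s⟫) volume 0 t :=
    (huIcc ▸ ((continuous_const.inner continuous_id).comp_continuousOn (hlc.smul hxc))).intervalIntegrable
  have hintC : IntervalIntegrable (fun s => lam s * ⟪g, p⟫) volume 0 t :=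
    (huIcc ▸ (hlc.mul continuousOn_const)).intervalIntegrable
  have hintD : IntervalIntegrable (fun s => lam s * U (x s)) volume 0 t :=
    (huIcc ▸ (hlc.mul hUx)).intervalIntegrable
  have hBeq : (∫ s in (0:ℝ)..t, ⟪g, lam s • x s⟫) = St * ⟪g, p⟫ := by
    have := (innerSL ℝ g).intervalIntegral_comp_comm hxInt
    simp only [innerSL_apply_apply] at this
    rw [this, hIeq, real_inner_smul_right]
  have hmono : (∫ s in (0:ℝ)..t, (lam s * U p + (⟪g, lam s • x s⟫ - lam s * ⟪g, p⟫)))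
      ≤ ∫ s in (0:ℝ)..t, lam s * U (x s) := by
    apply intervalIntegral.integral_mono_on ht.le ((hintA.add (hintB.sub hintC))) hintD
    intro s hs
    have hgi := aux_grad_ineq hU hpX (hxmem s) hg
    have hmul := mul_le_mul_of_nonneg_left hgi (hlpos s hs)
    have he1 : ⟪g, x s - p⟫ = ⟪g, x s⟫ - ⟪g, p⟫ := inner_sub_right _ _ _
    have he2 : ⟪g, lam s • x s⟫ = lam s * ⟪g, x s⟫ := real_inner_smul_right _ _ _
    rw [he2]
    rw [he1] at hmul
    nlinarith [hmul]
  have hcalc : (∫ s in (0:ℝ)..t, (lam s * U p + (⟪g, lam s • x s⟫ - lam s * ⟪g, p⟫)))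
      = St * U p := by
    rw [intervalIntegral.integral_add hintA (hintB.sub hintC),
      intervalIntegral.integral_sub hintB hintC, intervalIntegral.integral_mul_const,
      intervalIntegral.integral_mul_const, hBeq, ← hSt]
    ring
  linarith [hcalc ▸ hmono]

/-- For a smooth convex-concave function `U` on `X¹ × X²` with Lipschitz
saddle operator `v = (∇₁U, -∇₂U)`, the Nikaido–Isoda gap of the averaged mirror descent
trajectory satisfies `G(x̄¹(t), x̄²(t)) ≤ (D(h₁;X¹) + D(h₂;X²))/(η(t) S(t))`. -/
theorem saddle_point_ergodic_bound {n₁ n₂ : ℕ} {α₁ α₂ Lv : ℝ}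
    (hα₁ : 0 < α₁) (hα₂ : 0 < α₂) (hLv : 0 < Lv)
    (X₁ : Set (EuclideanSpace ℝ (Fin n₁))) (X₂ : Set (EuclideanSpace ℝ (Fin n₂)))
    (hne₁ : X₁.Nonempty) (hcomp₁ : IsCompact X₁) (hconv₁ : Convex ℝ X₁)
    (hne₂ : X₂.Nonempty) (hcomp₂ : IsCompact X₂) (hconv₂ : Convex ℝ X₂)
    (U : EuclideanSpace ℝ (Fin n₁) → EuclideanSpace ℝ (Fin n₂) → ℝ)
    (g₁ : EuclideanSpace ℝ (Fin n₁) → EuclideanSpace ℝ (Fin n₂) → EuclideanSpace ℝ (Fin n₁))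
    (g₂ : EuclideanSpace ℝ (Fin n₁) → EuclideanSpace ℝ (Fin n₂) → EuclideanSpace ℝ (Fin n₂))
    (hg₁ : ∀ x₁ x₂, HasGradientAt (fun z => U z x₂) (g₁ x₁ x₂) x₁)
    (hg₂ : ∀ x₁ x₂, HasGradientAt (fun z => U x₁ z) (g₂ x₁ x₂) x₂)
    (hconvex : ∀ x₂ ∈ X₂, ConvexOn ℝ X₁ (fun x₁ => U x₁ x₂))
    (hconcave : ∀ x₁ ∈ X₁, ConcaveOn ℝ X₂ (fun x₂ => U x₁ x₂))
    (hvLip : ∀ x₁ ∈ X₁, ∀ x₂ ∈ X₂, ∀ x₁' ∈ X₁, ∀ x₂' ∈ X₂,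
      ‖g₁ x₁ x₂ - g₁ x₁' x₂'‖ + ‖g₂ x₁ x₂ - g₂ x₁' x₂'‖ ≤ Lv * (‖x₁ - x₁'‖ + ‖x₂ - x₂'‖))
    (h₁ : EuclideanSpace ℝ (Fin n₁) → ℝ) (h₂ : EuclideanSpace ℝ (Fin n₂) → ℝ)
    (hcont₁ : ContinuousOn h₁ X₁) (hcont₂ : ContinuousOn h₂ X₂)
    (hsc₁ : ∀ x ∈ X₁, ∀ x' ∈ X₁, ∀ t ∈ Set.Icc (0:ℝ) 1,
      h₁ (t • x + (1 - t) • x') ≤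
        t * h₁ x + (1 - t) * h₁ x' - α₁ / 2 * t * (1 - t) * ‖x - x'‖ ^ 2)
    (hsc₂ : ∀ x ∈ X₂, ∀ x' ∈ X₂, ∀ t ∈ Set.Icc (0:ℝ) 1,
      h₂ (t • x + (1 - t) • x') ≤
        t * h₂ x + (1 - t) * h₂ x' - α₂ / 2 * t * (1 - t) * ‖x - x'‖ ^ 2)
    (Q₁ : EuclideanSpace ℝ (Fin n₁) → EuclideanSpace ℝ (Fin n₁))
    (Q₂ : EuclideanSpace ℝ (Fin n₂) → EuclideanSpace ℝ (Fin n₂))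
    (hQ₁mem : ∀ y, Q₁ y ∈ X₁) (hQ₂mem : ∀ y, Q₂ y ∈ X₂)
    (hQ₁max : ∀ y, ∀ x ∈ X₁, ⟪y, x⟫ - h₁ x ≤ ⟪y, Q₁ y⟫ - h₁ (Q₁ y))
    (hQ₂max : ∀ y, ∀ x ∈ X₂, ⟪y, x⟫ - h₂ x ≤ ⟪y, Q₂ y⟫ - h₂ (Q₂ y))
    (lam eta : ℝ → ℝ)
    (hlam_pos : ∀ t ≥ (0:ℝ), 0 < lam t) (heta_pos : ∀ t ≥ (0:ℝ), 0 < eta t)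
    (hlam_smooth : ContDiffOn ℝ 1 lam (Set.Ici 0))
    (heta_smooth : ContDiffOn ℝ 1 eta (Set.Ici 0))
    (hlam_mono : AntitoneOn lam (Set.Ici 0)) (heta_mono : AntitoneOn eta (Set.Ici 0))
    (y₁ : ℝ → EuclideanSpace ℝ (Fin n₁)) (y₂ : ℝ → EuclideanSpace ℝ (Fin n₂))
    (x₁ : ℝ → EuclideanSpace ℝ (Fin n₁)) (x₂ : ℝ → EuclideanSpace ℝ (Fin n₂))
    (hx₁ : ∀ t, x₁ t = Q₁ (eta t • y₁ t)) (hx₂ : ∀ t, x₂ t = Q₂ (eta t • y₂ t))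
    (hy₁0 : y₁ 0 = 0) (hy₂0 : y₂ 0 = 0)
    (hy₁deriv : ∀ t ∈ Set.Ici (0:ℝ),
      HasDerivWithinAt y₁ ((-(lam t)) • g₁ (x₁ t) (x₂ t)) (Set.Ici 0) t)
    (hy₂deriv : ∀ t ∈ Set.Ici (0:ℝ),
      HasDerivWithinAt y₂ ((lam t) • g₂ (x₁ t) (x₂ t)) (Set.Ici 0) t)
    (S : ℝ → ℝ) (hS : ∀ t, S t = ∫ s in (0:ℝ)..t, lam s)
    (xbar₁ : ℝ → EuclideanSpace ℝ (Fin n₁)) (xbar₂ : ℝ → EuclideanSpace ℝ (Fin n₂))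
    (hxbar₁ : ∀ t, xbar₁ t = (S t)⁻¹ • ∫ s in (0:ℝ)..t, lam s • x₁ s)
    (hxbar₂ : ∀ t, xbar₂ t = (S t)⁻¹ • ∫ s in (0:ℝ)..t, lam s • x₂ s) :
    ∀ t > (0:ℝ),
      sSup ((fun z₂ => U (xbar₁ t) z₂) '' X₂) - sInf ((fun z₁ => U z₁ (xbar₂ t)) '' X₁) ≤
        ((sSup (h₁ '' X₁) - sInf (h₁ '' X₁)) + (sSup (h₂ '' X₂) - sInf (h₂ '' X₂))) /
          (eta t * S t) := by
  intro t ht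
  have hIccIci : Set.Icc (0:ℝ) t ⊆ Set.Ici 0 := fun s hs => hs.1
  have huIcc : Set.uIcc (0:ℝ) t = Set.Icc 0 t := Set.uIcc_of_le ht.le
  have hlamc : ContinuousOn lam (Set.Ici 0) := hlam_smooth.continuousOn
  have hetac : ContinuousOn eta (Set.Ici 0) := heta_smooth.continuousOn
  have hy₁c : ContinuousOn y₁ (Set.Ici 0) := fun s hs => (hy₁deriv s hs).continuousWithinAt
  have hy₂c : ContinuousOn y₂ (Set.Ici 0) := fun s hs => (hy₂deriv s hs).continuousWithinAt
  have hQ₁lip := aux_Q_lip hconv₁ hα₁ hQ₁mem hQ₁max hsc₁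
  have hQ₂lip := aux_Q_lip hconv₂ hα₂ hQ₂mem hQ₂max hsc₂
  have hx₁c : ContinuousOn x₁ (Set.Ici 0) := by
    have hcc : ContinuousOn (fun s => Q₁ (eta s • y₁ s)) (Set.Ici 0) :=
      (aux_lip_cont hα₁ hQ₁lip).comp_continuousOn (hetac.smul hy₁c)
    exact hcc.congr (fun s _ => hx₁ s)
  have hx₂c : ContinuousOn x₂ (Set.Ici 0) := by
    have hcc : ContinuousOn (fun s => Q₂ (eta s • y₂ s)) (Set.Ici 0) :=
      (aux_lip_cont hα₂ hQ₂lip).comp_continuousOn (hetac.smul hy₂c)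
    exact hcc.congr (fun s _ => hx₂ s)
  have hx₁mem : ∀ s, x₁ s ∈ X₁ := fun s => (hx₁ s) ▸ hQ₁mem _
  have hx₂mem : ∀ s, x₂ s ∈ X₂ := fun s => (hx₂ s) ▸ hQ₂mem _
  have hetat : 0 < eta t := heta_pos t ht.le
  have hlamInt : IntervalIntegrable lam MeasureTheory.volume 0 t :=
    (huIcc ▸ (hlamc.mono hIccIci)).intervalIntegrable
  have hSt : 0 < S t := by
    rw [hS t]
    exact intervalIntegral.intervalIntegral_pos_of_pos_on hlamInt
      (fun s hs => hlam_pos s hs.1.le) ht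
  have hUc₁ : ∀ z₂, Continuous (fun w => U w z₂) := fun z₂ =>
    continuous_iff_continuousAt.2 fun w =>
      (hg₁ w z₂).hasFDerivAt.differentiableAt.continuousAt
  have hUc₂ : ∀ z₁, Continuous (fun w => U z₁ w) := fun z₁ =>
    continuous_iff_continuousAt.2 fun w =>
      (hg₂ z₁ w).hasFDerivAt.differentiableAt.continuousAt
  -- membership of the averaged points
  have hxbar₁mem : xbar₁ t ∈ X₁ := by
    rw [hxbar₁ t]
    exact aux_avg_mem hcomp₁ hconv₁ ht (hlamc.mono hIccIci) (hx₁c.mono hIccIci)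
      (fun s hs => hlam_pos s hs.1) hx₁mem (hS t)
  have hxbar₂mem : xbar₂ t ∈ X₂ := by
    rw [hxbar₂ t]
    exact aux_avg_mem hcomp₂ hconv₂ ht (hlamc.mono hIccIci) (hx₂c.mono hIccIci)
      (fun s hs => hlam_pos s hs.1) hx₂mem (hS t)
  set D : ℝ := (sSup (h₁ '' X₁) - sInf (h₁ '' X₁)) + (sSup (h₂ '' X₂) - sInf (h₂ '' X₂)) with hD
  -- main pointwise bound
  have key : ∀ z₁ ∈ X₁, ∀ z₂ ∈ X₂,
      U (xbar₁ t) z₂ - U z₁ (xbar₂ t) ≤ D / (eta t * S t) := by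
    intro z₁ hz₁ z₂ hz₂
    -- energy functions for the two coordinates
    obtain ⟨E₁, hE₁c, hE₁0, hE₁t, hE₁d⟩ :=
      aux_energy hcomp₁ hconv₁ hcont₁ hα₁ hsc₁ hQ₁mem hQ₁max heta_pos heta_smooth heta_mono
        hy₁0 hy₁deriv hx₁ hz₁ ht
      (v := fun s => (-(lam s)) • g₁ (x₁ s) (x₂ s))
    obtain ⟨E₂, hE₂c, hE₂0, hE₂t, hE₂d⟩ :=
      aux_energy hcomp₂ hconv₂ hcont₂ hα₂ hsc₂ hQ₂mem hQ₂max heta_pos heta_smooth heta_mono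
        hy₂0 hy₂deriv hx₂ hz₂ ht
      (v := fun s => (lam s) • g₂ (x₁ s) (x₂ s))
    -- the gap integrand
    set F : ℝ → ℝ := fun s => lam s * (U (x₁ s) z₂ - U z₁ (x₂ s)) with hF
    have hFc : ContinuousOn F (Set.Ici 0) := by
      apply (hlamc.mul ?_)
      exact ((hUc₁ z₂).comp_continuousOn hx₁c).sub ((hUc₂ z₁).comp_continuousOn hx₂c)
    set P : ℝ → ℝ := fun r => ∫ s in (0:ℝ)..r, F s with hP
    -- K is monotone on [0, t]
    set K : ℝ → ℝ := fun r => E₁ r + E₂ r - P r with hK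
    have hPc : ContinuousOn P (Set.Icc 0 t) := by
      have : IntegrableOn F (Set.uIcc 0 t) MeasureTheory.volume :=
        (hFc.mono (huIcc ▸ hIccIci)).integrableOn_compact (huIcc ▸ isCompact_Icc)
      simpa [hP, huIcc] using intervalIntegral.continuousOn_primitive_interval this
    have hKd : ∀ s ∈ Set.Ioo (0:ℝ) t, ∃ d, HasDerivAt K d s ∧ 0 ≤ d := by
      intro s hs
      obtain ⟨d₁, hd₁, hb₁⟩ := hE₁d s hs
      obtain ⟨d₂, hd₂, hb₂⟩ := hE₂d s hs
      have hFInt : IntervalIntegrable F MeasureTheory.volume 0 s :=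
        ((hFc.mono (fun u hu => (Set.uIcc_of_le hs.1.le ▸ hu : u ∈ Set.Icc 0 s).1)) :
          ContinuousOn F (Set.uIcc 0 s)).intervalIntegrable
      have hFmeas : StronglyMeasurableAtFilter F (nhds s) :=
        (hFc.mono (fun u (hu : u ∈ Set.Ioi 0) => hu.le)).stronglyMeasurableAtFilter
          isOpen_Ioi s hs.1
      have hFcont : ContinuousAt F s :=
        (hFc s hs.1.le).continuousAt (Ici_mem_nhds hs.1)
      have hP' : HasDerivAt P (F s) s :=
        intervalIntegral.integral_hasDerivAt_right hFInt hFmeas hFcont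
      refine ⟨d₁ + d₂ - F s, (hd₁.add hd₂).sub hP', ?_⟩
      -- gradient inequalities for the convex-concave structure
      have hgi1 : U (x₁ s) (x₂ s) + ⟪g₁ (x₁ s) (x₂ s), z₁ - x₁ s⟫ ≤ U z₁ (x₂ s) :=
        aux_grad_ineq (hconvex (x₂ s) (hx₂mem s)) (hx₁mem s) hz₁ (hg₁ (x₁ s) (x₂ s))
      have hgneg : HasGradientAt (fun w => -(U (x₁ s) w)) (-(g₂ (x₁ s) (x₂ s))) (x₂ s) := by
        rw [hasGradientAt_iff_hasFDerivAt]
        have hneg := (hg₂ (x₁ s) (x₂ s)).hasFDerivAt.neg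
        rw [map_neg]; exact hneg
      have hgi2 : -(U (x₁ s) (x₂ s)) + ⟪-(g₂ (x₁ s) (x₂ s)), z₂ - x₂ s⟫ ≤ -(U (x₁ s) z₂) :=
        aux_grad_ineq (hconcave (x₁ s) (hx₁mem s)).neg (hx₂mem s) hz₂ hgneg
      have hiv₁ : ⟪(-(lam s)) • g₁ (x₁ s) (x₂ s), z₁ - x₁ s⟫
          = -(lam s) * ⟪g₁ (x₁ s) (x₂ s), z₁ - x₁ s⟫ := real_inner_smul_left _ _ _
      have hiv₂ : ⟪(lam s) • g₂ (x₁ s) (x₂ s), z₂ - x₂ s⟫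
          = lam s * ⟪g₂ (x₁ s) (x₂ s), z₂ - x₂ s⟫ := real_inner_smul_left _ _ _
      have hivneg : ⟪-(g₂ (x₁ s) (x₂ s)), z₂ - x₂ s⟫
          = -⟪g₂ (x₁ s) (x₂ s), z₂ - x₂ s⟫ := inner_neg_left _ _
      rw [hiv₁] at hb₁
      rw [hiv₂] at hb₂
      rw [hivneg] at hgi2
      have hlps : (0:ℝ) ≤ lam s := (hlam_pos s hs.1.le).le
      have hstep : U (x₁ s) z₂ - U z₁ (x₂ s)
          ≤ ⟪g₂ (x₁ s) (x₂ s), z₂ - x₂ s⟫ - ⟪g₁ (x₁ s) (x₂ s), z₁ - x₁ s⟫ := by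
        linarith
      have hmul := mul_le_mul_of_nonneg_left hstep hlps
      rw [hF]
      dsimp only
      nlinarith [hmul, hb₁, hb₂]
    have hKmono : MonotoneOn K (Set.Icc 0 t) := by
      apply monotoneOn_of_deriv_nonneg (convex_Icc 0 t)
      · exact (hE₁c.add hE₂c).sub hPc
      · intro s hs
        rw [interior_Icc] at hs
        obtain ⟨d, hd, _⟩ := hKd s hs
        exact hd.differentiableAt.differentiableWithinAt
      · intro s hs
        rw [interior_Icc] at hs
        obtain ⟨d, hd, hd0⟩ := hKd s hs
        rw [hd.deriv]
        exact hd0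
    have hK0 : K 0 = 0 := by
      simp [hK, hE₁0, hE₂0, hP]
    have hKt : 0 ≤ K t := by
      rw [← hK0]
      exact hKmono (Set.left_mem_Icc.2 ht.le) (Set.right_mem_Icc.2 ht.le) ht.le
    have hPt : P t ≤ D / eta t := by
      have h1 : P t ≤ E₁ t + E₂ t := by
        have : E₁ t + E₂ t - P t = K t := rfl
        linarith [hKt]
      have h2 : E₁ t + E₂ t ≤ D / eta t := by
        rw [hD, add_div]
        exact add_le_add hE₁t hE₂t
      linarith
    -- Jensen averaging
    have hUx₁c : ContinuousOn (fun s => U (x₁ s) z₂) (Set.Icc 0 t) :=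
      (hUc₁ z₂).comp_continuousOn (hx₁c.mono hIccIci)
    have hUx₂c : ContinuousOn (fun s => U z₁ (x₂ s)) (Set.Icc 0 t) :=
      (hUc₂ z₁).comp_continuousOn (hx₂c.mono hIccIci)
    have hjen₁ : S t * U (xbar₁ t) z₂ ≤ ∫ s in (0:ℝ)..t, lam s * U (x₁ s) z₂ :=
      aux_jensen (hconvex z₂ hz₂) ht hSt (hlamc.mono hIccIci) (hx₁c.mono hIccIci)
        (fun s hs => (hlam_pos s hs.1).le) hx₁mem (hS t) (hxbar₁ t) hxbar₁mem
        (hg₁ (xbar₁ t) z₂) hUx₁c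
    have hjen₂ : (∫ s in (0:ℝ)..t, lam s * U z₁ (x₂ s)) ≤ S t * U z₁ (xbar₂ t) := by
      have hgneg : HasGradientAt (fun w => -(U z₁ w)) (-(g₂ z₁ (xbar₂ t))) (xbar₂ t) := by
        rw [hasGradientAt_iff_hasFDerivAt]
        have hneg := (hg₂ z₁ (xbar₂ t)).hasFDerivAt.neg
        rw [map_neg]; exact hneg
      have := aux_jensen (X := X₂) (U := fun w => -(U z₁ w)) (hconcave z₁ hz₁).neg ht hSt
        (hlamc.mono hIccIci) (hx₂c.mono hIccIci)
        (fun s hs => (hlam_pos s hs.1).le) hx₂mem (hS t) (hxbar₂ t) hxbar₂mem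
        hgneg (hUx₂c.neg)
      have hneg : (∫ s in (0:ℝ)..t, lam s * -(U z₁ (x₂ s)))
          = -∫ s in (0:ℝ)..t, lam s * U z₁ (x₂ s) := by
        rw [← intervalIntegral.integral_neg]
        apply intervalIntegral.integral_congr
        intro s _
        ring
      rw [hneg] at this
      have h9 : S t * -(U z₁ (xbar₂ t)) ≤ -∫ s in (0:ℝ)..t, lam s * U z₁ (x₂ s) := this
      linarith
    have hint₁ : IntervalIntegrable (fun s => lam s * U (x₁ s) z₂) MeasureTheory.volume 0 t :=
      (huIcc ▸ ((hlamc.mono hIccIci).mul hUx₁c)).intervalIntegrable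
    have hint₂ : IntervalIntegrable (fun s => lam s * U z₁ (x₂ s)) MeasureTheory.volume 0 t :=
      (huIcc ▸ ((hlamc.mono hIccIci).mul hUx₂c)).intervalIntegrable
    have hPsplit : P t = (∫ s in (0:ℝ)..t, lam s * U (x₁ s) z₂)
        - ∫ s in (0:ℝ)..t, lam s * U z₁ (x₂ s) := by
      rw [hP, ← intervalIntegral.integral_sub hint₁ hint₂]
      apply intervalIntegral.integral_congr
      intro s _
      dsimp only [hF]
      ring
    have hPt' : (∫ s in (0:ℝ)..t, lam s * U (x₁ s) z₂)
        - (∫ s in (0:ℝ)..t, lam s * U z₁ (x₂ s)) ≤ D / eta t := by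
      rw [← hPsplit]; exact hPt
    have hgap : S t * (U (xbar₁ t) z₂ - U z₁ (xbar₂ t)) ≤ D / eta t := by
      nlinarith [hjen₁, hjen₂, hPt']
    rw [← div_div, le_div_iff₀ hSt]
    have hcm : (U (xbar₁ t) z₂ - U z₁ (xbar₂ t)) * S t
        = S t * (U (xbar₁ t) z₂ - U z₁ (xbar₂ t)) := mul_comm _ _
    linarith [hgap, hcm]
  -- conclude via sSup and sInf
  rw [sub_le_iff_le_add]
  apply csSup_le (hne₂.image _)
  rintro b ⟨z₂, hz₂, rfl⟩
  have hlow : ∀ r ∈ (fun z₁ => U z₁ (xbar₂ t)) '' X₁, U (xbar₁ t) z₂ - D / (eta t * S t) ≤ r := by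
    rintro r ⟨z₁, hz₁, rfl⟩
    have := key z₁ hz₁ z₂ hz₂
    dsimp only
    linarith
  have := le_csInf (hne₁.image _) hlow
  dsimp only
  linarith
end

section
/- Let X ⊆ ℝⁿ be compact convex and v : X → ℝⁿ Lipschitz and γ-strongly monotone (⟨v(x') − v(x), x' − x⟩ ≥ γ‖x' − x‖² with γ > 0), with unique solution x* of the variational inequality. Let h be a distance-generating function on X with mirror map Q, λ, η positive, C¹-smooth nonincreasing, and let x(t) = Q(η(t) y(t)) with y(0) = 0 solve the mirror descent dynamics dy/dt = −λ(t) v(x(t)). Then the averaged trajectory x̄(t) = S(t)⁻¹ ∫₀ᵗ λ(s) x(s) ds satisfies ‖x̄(t) − x*‖² ≤ D(h; X)/(γ η(t) S(t)), where S(t) = ∫₀ᵗ λ(s) ds and D(h; X) = max h − min h. In particular, x̄(t) → x* whenever η(t)S(t) → ∞. -/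
open scoped RealInnerProductSpace


section Aux
variable {n : ℕ} {α : ℝ}

/-- Strong optimality of the mirror map. -/
lemma mirror_strong_opt (hα : 0 < α) {X : Set (EuclideanSpace ℝ (Fin n))}
    (hconv : Convex ℝ X)
    {h : EuclideanSpace ℝ (Fin n) → ℝ}
    (hsc : ∀ x ∈ X, ∀ x' ∈ X, ∀ t ∈ Set.Icc (0:ℝ) 1,
      h (t • x + (1 - t) • x') ≤
        t * h x + (1 - t) * h x' - α / 2 * t * (1 - t) * ‖x - x'‖ ^ 2)
    {Q : EuclideanSpace ℝ (Fin n) → EuclideanSpace ℝ (Fin n)}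
    (hQmem : ∀ y, Q y ∈ X)
    (hQmax : ∀ y, ∀ x ∈ X, ⟪y, x⟫ - h x ≤ ⟪y, Q y⟫ - h (Q y))
    (p : EuclideanSpace ℝ (Fin n)) {x : EuclideanSpace ℝ (Fin n)} (hxX : x ∈ X) :
    h (Q p) - ⟪p, Q p⟫ + α / 2 * ‖x - Q p‖ ^ 2 ≤ h x - ⟪p, x⟫ := by
  set q := Q p with hq
  have hqX : q ∈ X := hQmem p
  have key : ∀ t ∈ Set.Ioc (0:ℝ) 1,
      α / 2 * (1 - t) * ‖x - q‖ ^ 2 ≤ (h x - ⟪p, x⟫) - (h q - ⟪p, q⟫) := by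
    intro t ht
    have ht0 : 0 < t := ht.1
    have ht1 : t ≤ 1 := ht.2
    have hmem : t • x + (1 - t) • q ∈ X :=
      hconv hxX hqX (le_of_lt ht0) (by linarith) (by ring)
    have h1 := hsc x hxX q hqX t ⟨le_of_lt ht0, ht1⟩
    have h2 := hQmax p _ hmem
    have h3 : ⟪p, t • x + (1 - t) • q⟫ = t * ⟪p, x⟫ + (1 - t) * ⟪p, q⟫ := by
      rw [inner_add_right, real_inner_smul_right, real_inner_smul_right]
    -- h2 : ⟪p, comb⟫ - h comb ≤ ⟪p, q⟫ - h q
    have h4 : t * (h x - ⟪p, x⟫) - t * (h q - ⟪p, q⟫)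
        ≥ α / 2 * t * (1 - t) * ‖x - q‖ ^ 2 := by nlinarith
    have := mul_le_mul_of_nonneg_left (le_refl (0:ℝ)) (le_of_lt ht0)
    nlinarith
  have hlim : Filter.Tendsto (fun t : ℝ => α / 2 * (1 - t) * ‖x - q‖ ^ 2)
      (nhdsWithin 0 (Set.Ioi 0)) (nhds (α / 2 * (1 - 0) * ‖x - q‖ ^ 2)) := by
    apply Filter.Tendsto.mono_left _ nhdsWithin_le_nhds
    exact (Continuous.tendsto (by continuity) 0)
  have hev : ∀ᶠ t in nhdsWithin (0:ℝ) (Set.Ioi 0),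
      α / 2 * (1 - t) * ‖x - q‖ ^ 2 ≤ (h x - ⟪p, x⟫) - (h q - ⟪p, q⟫) := by
    filter_upwards [Ioc_mem_nhdsGT_of_mem (by norm_num : (0:ℝ) ∈ Set.Ico (0:ℝ) 1)] with t ht
    exact key t ht
  have := le_of_tendsto hlim hev
  simp only [sub_zero, mul_one] at this
  linarith

/-- Lipschitz bound for the mirror map. -/
lemma mirror_lip (hα : 0 < α) {X : Set (EuclideanSpace ℝ (Fin n))}
    (hconv : Convex ℝ X)
    {h : EuclideanSpace ℝ (Fin n) → ℝ}
    (hsc : ∀ x ∈ X, ∀ x' ∈ X, ∀ t ∈ Set.Icc (0:ℝ) 1,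
      h (t • x + (1 - t) • x') ≤
        t * h x + (1 - t) * h x' - α / 2 * t * (1 - t) * ‖x - x'‖ ^ 2)
    {Q : EuclideanSpace ℝ (Fin n) → EuclideanSpace ℝ (Fin n)}
    (hQmem : ∀ y, Q y ∈ X)
    (hQmax : ∀ y, ∀ x ∈ X, ⟪y, x⟫ - h x ≤ ⟪y, Q y⟫ - h (Q y))
    (p q : EuclideanSpace ℝ (Fin n)) :
    ‖Q p - Q q‖ ≤ α⁻¹ * ‖p - q‖ := by
  have h1 := mirror_strong_opt hα hconv hsc hQmem hQmax p (hQmem q)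
  have h2 := mirror_strong_opt hα hconv hsc hQmem hQmax q (hQmem p)
  have hsym : ‖Q p - Q q‖ = ‖Q q - Q p‖ := norm_sub_rev _ _
  have hmono : α * ‖Q p - Q q‖ ^ 2 ≤ ⟪p - q, Q p - Q q⟫ := by
    have e1 : ⟪p - q, Q p - Q q⟫ = ⟪p, Q p⟫ - ⟪p, Q q⟫ - ⟪q, Q p⟫ + ⟪q, Q q⟫ := by
      rw [inner_sub_left, inner_sub_right, inner_sub_right]; ring
    have hsym2 : ‖Q q - Q p‖ ^ 2 = ‖Q p - Q q‖ ^ 2 := by rw [norm_sub_rev]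
    nlinarith [h1, h2]
  have hcs : ⟪p - q, Q p - Q q⟫ ≤ ‖p - q‖ * ‖Q p - Q q‖ := real_inner_le_norm _ _
  rcases eq_or_lt_of_le (norm_nonneg (Q p - Q q)) with h0 | h0
  · rw [← h0]; positivity
  · have h6 : α * ‖Q p - Q q‖ ≤ ‖p - q‖ := by nlinarith
    rw [inv_mul_eq_div, le_div_iff₀ hα]; linarith

/-- Differentiability of the Fenchel conjugate with gradient `Q`. -/
lemma mirror_conj_fderiv (hα : 0 < α) {X : Set (EuclideanSpace ℝ (Fin n))}
    (hconv : Convex ℝ X)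
    {h : EuclideanSpace ℝ (Fin n) → ℝ}
    (hsc : ∀ x ∈ X, ∀ x' ∈ X, ∀ t ∈ Set.Icc (0:ℝ) 1,
      h (t • x + (1 - t) • x') ≤
        t * h x + (1 - t) * h x' - α / 2 * t * (1 - t) * ‖x - x'‖ ^ 2)
    {Q : EuclideanSpace ℝ (Fin n) → EuclideanSpace ℝ (Fin n)}
    (hQmem : ∀ y, Q y ∈ X)
    (hQmax : ∀ y, ∀ x ∈ X, ⟪y, x⟫ - h x ≤ ⟪y, Q y⟫ - h (Q y))
    (p : EuclideanSpace ℝ (Fin n)) :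
    HasFDerivAt (fun q => ⟪q, Q q⟫ - h (Q q)) (innerSL ℝ (Q p)) p := by
  rw [hasFDerivAt_iff_isLittleO_nhds_zero]
  have key : ∀ w : EuclideanSpace ℝ (Fin n),
      |(⟪p + w, Q (p + w)⟫ - h (Q (p + w))) - (⟪p, Q p⟫ - h (Q p)) - ⟪Q p, w⟫|
        ≤ α⁻¹ * ‖w‖ ^ 2 := by
    intro w
    have hlow : ⟪p + w, Q p⟫ - h (Q p) ≤ ⟪p + w, Q (p + w)⟫ - h (Q (p + w)) :=
      hQmax (p + w) _ (hQmem p)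
    have hup : ⟪p, Q (p + w)⟫ - h (Q (p + w)) ≤ ⟪p, Q p⟫ - h (Q p) :=
      hQmax p _ (hQmem (p + w))
    have e1 : ⟪p + w, Q p⟫ = ⟪p, Q p⟫ + ⟪w, Q p⟫ := inner_add_left _ _ _
    have e2 : ⟪p + w, Q (p + w)⟫ = ⟪p, Q (p + w)⟫ + ⟪w, Q (p + w)⟫ := inner_add_left _ _ _
    have hcs : |⟪w, Q (p + w) - Q p⟫| ≤ ‖w‖ * ‖Q (p + w) - Q p‖ := abs_real_inner_le_norm _ _
    have hlip := mirror_lip hα hconv hsc hQmem hQmax (p + w) p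
    have e3 : (p + w) - p = w := by abel
    rw [e3] at hlip
    have hQw : ‖Q (p + w) - Q p‖ ≤ α⁻¹ * ‖w‖ := hlip
    have e4 : ⟪w, Q (p + w)⟫ - ⟪w, Q p⟫ = ⟪w, Q (p + w) - Q p⟫ := by
      rw [inner_sub_right]
    have hsy : ⟪Q p, w⟫ = ⟪w, Q p⟫ := real_inner_comm _ _
    rw [abs_le]
    constructor
    · nlinarith [abs_nonneg (⟪w, Q (p+w) - Q p⟫), norm_nonneg w]
    · have h5 : ⟪w, Q (p + w) - Q p⟫ ≤ ‖w‖ * ‖Q (p + w) - Q p‖ :=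
        (le_abs_self _).trans hcs
      nlinarith [norm_nonneg w]
  rw [Asymptotics.isLittleO_iff]
  intro ε hε
  have : ∀ᶠ w : EuclideanSpace ℝ (Fin n) in nhds 0, ‖w‖ ≤ ε * α := by
    have : Metric.closedBall (0 : EuclideanSpace ℝ (Fin n)) (ε * α) ∈ nhds 0 :=
      Metric.closedBall_mem_nhds _ (by positivity)
    filter_upwards [this] with w hw
    simpa [dist_eq_norm] using hw
  filter_upwards [this] with w hw
  have := key w
  simp only [Real.norm_eq_abs, norm_norm]
  calc |(⟪p + w, Q (p + w)⟫ - h (Q (p + w))) - (⟪p, Q p⟫ - h (Q p)) - (innerSL ℝ (Q p)) w|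
      ≤ α⁻¹ * ‖w‖ ^ 2 := by simpa using key w
    _ ≤ ε * ‖w‖ := by
        rcases le_or_gt ‖w‖ 0 with h0 | h0
        · have : ‖w‖ = 0 := le_antisymm h0 (norm_nonneg w)
          simp [this]
        · have : α⁻¹ * ‖w‖ ≤ ε := by
            rw [inv_mul_le_iff₀ hα]; linarith [hw]
          nlinarith
end Aux


lemma antitone_hasDerivWithinAt_nonpos {f : ℝ → ℝ} {f' t : ℝ}
    (hm : AntitoneOn f (Set.Ici 0)) (ht : (0:ℝ) ≤ t)
    (hd : HasDerivWithinAt f f' (Set.Ici 0) t) : f' ≤ 0 := by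
  have hsub : Set.Ioi t ⊆ Set.Ici (0:ℝ) := fun s hs => le_of_lt (lt_of_le_of_lt ht hs)
  have hd' : HasDerivWithinAt f f' (Set.Ioi t) t := hd.mono hsub
  rw [hasDerivWithinAt_iff_tendsto_slope] at hd'
  have hIoi : Set.Ioi t \ {t} = Set.Ioi t := by
    ext s; simp only [Set.mem_diff, Set.mem_Ioi, Set.mem_singleton_iff]
    exact ⟨fun hh => hh.1, fun hh => ⟨hh, ne_of_gt hh⟩⟩
  rw [hIoi] at hd'
  have : ∀ s ∈ Set.Ioi t, slope f t s ≤ 0 := by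
    intro s hs
    have hfs : f s ≤ f t := hm ht (hsub hs) (le_of_lt hs)
    have hst : 0 < s - t := sub_pos.mpr hs
    rw [slope_def_field]
    have : (f s - f t) / (s - t) ≤ 0 := div_nonpos_of_nonpos_of_nonneg (by linarith) (le_of_lt hst)
    simpa [div_eq_inv_mul] using this
  exact le_of_tendsto hd' (eventually_nhdsWithin_of_forall this)
set_option maxHeartbeats 1000000 in
/-- For a `γ`-strongly monotone Lipschitz operator with (unique) solution
`x*`, the averaged mirror descent trajectory satisfies
`‖x̄(t) - x*‖² ≤ D(h;X)/(γ η(t) S(t))`; in particular `x̄(t) → x*` whenever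
`η(t)S(t) → ∞`. -/
theorem strongly_monotone_ergodic_bound {n : ℕ} {α L γ : ℝ}
    (hα : 0 < α) (hL : 0 < L) (hγ : 0 < γ)
    (X : Set (EuclideanSpace ℝ (Fin n)))
    (hne : X.Nonempty) (hcomp : IsCompact X) (hconv : Convex ℝ X)
    (v : EuclideanSpace ℝ (Fin n) → EuclideanSpace ℝ (Fin n))
    (hvLip : ∀ x ∈ X, ∀ x' ∈ X, ‖v x - v x'‖ ≤ L * ‖x - x'‖)
    (hstrong : ∀ x ∈ X, ∀ x' ∈ X, γ * ‖x' - x‖ ^ 2 ≤ ⟪v x' - v x, x' - x⟫)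
    (xstar : EuclideanSpace ℝ (Fin n)) (hxstar : xstar ∈ X)
    (hsol : ∀ x ∈ X, 0 ≤ ⟪v xstar, x - xstar⟫)
    (h : EuclideanSpace ℝ (Fin n) → ℝ)
    (hcont : ContinuousOn h X)
    (hsc : ∀ x ∈ X, ∀ x' ∈ X, ∀ t ∈ Set.Icc (0:ℝ) 1,
      h (t • x + (1 - t) • x') ≤
        t * h x + (1 - t) * h x' - α / 2 * t * (1 - t) * ‖x - x'‖ ^ 2)
    (Q : EuclideanSpace ℝ (Fin n) → EuclideanSpace ℝ (Fin n))
    (hQmem : ∀ y, Q y ∈ X)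
    (hQmax : ∀ y, ∀ x ∈ X, ⟪y, x⟫ - h x ≤ ⟪y, Q y⟫ - h (Q y))
    (lam eta : ℝ → ℝ)
    (hlam_pos : ∀ t ≥ (0:ℝ), 0 < lam t) (heta_pos : ∀ t ≥ (0:ℝ), 0 < eta t)
    (hlam_smooth : ContDiffOn ℝ 1 lam (Set.Ici 0))
    (heta_smooth : ContDiffOn ℝ 1 eta (Set.Ici 0))
    (hlam_mono : AntitoneOn lam (Set.Ici 0)) (heta_mono : AntitoneOn eta (Set.Ici 0))
    (y : ℝ → EuclideanSpace ℝ (Fin n)) (x : ℝ → EuclideanSpace ℝ (Fin n))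
    (hx : ∀ t, x t = Q (eta t • y t))
    (hy0 : y 0 = 0)
    (hyderiv : ∀ t ∈ Set.Ici (0:ℝ),
      HasDerivWithinAt y ((-(lam t)) • v (x t)) (Set.Ici 0) t)
    (S : ℝ → ℝ) (hS : ∀ t, S t = ∫ s in (0:ℝ)..t, lam s)
    (xbar : ℝ → EuclideanSpace ℝ (Fin n))
    (hxbar : ∀ t, xbar t = (S t)⁻¹ • ∫ s in (0:ℝ)..t, lam s • x s) :
    (∀ t > (0:ℝ),
      ‖xbar t - xstar‖ ^ 2 ≤ (sSup (h '' X) - sInf (h '' X)) / (γ * (eta t * S t))) ∧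
      (Filter.Tendsto (fun t => eta t * S t) Filter.atTop Filter.atTop →
        Filter.Tendsto xbar Filter.atTop (nhds xstar)) := by
  classical
  set D := sSup (h '' X) - sInf (h '' X) with hD
  -- basic facts about D
  have hXim : IsCompact (h '' X) := hcomp.image_of_continuousOn hcont
  have hbddA : BddAbove (h '' X) := hXim.bddAbove
  have hbddB : BddBelow (h '' X) := hXim.bddBelow
  have hDle : ∀ a ∈ X, ∀ b ∈ X, h a - h b ≤ D := by
    intro a ha b hb
    have h1 : h a ≤ sSup (h '' X) := le_csSup hbddA ⟨a, ha, rfl⟩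
    have h2 : sInf (h '' X) ≤ h b := csInf_le hbddB ⟨b, hb, rfl⟩
    rw [hD]; linarith
  have hD0 : 0 ≤ D := by
    obtain ⟨a, ha⟩ := hne
    have := hDle a ha a ha; linarith
  -- continuity facts
  have hy_cont : ContinuousOn y (Set.Ici 0) := fun t ht => (hyderiv t ht).continuousWithinAt
  have heta_cont : ContinuousOn eta (Set.Ici 0) := heta_smooth.continuousOn
  have hlam_cont : ContinuousOn lam (Set.Ici 0) := hlam_smooth.continuousOn
  have hQlip : ∀ p q, ‖Q p - Q q‖ ≤ α⁻¹ * ‖p - q‖ := mirror_lip hα hconv hsc hQmem hQmax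
  have hQcont : Continuous Q := by
    apply (LipschitzWith.of_dist_le_mul (K := Real.toNNReal α⁻¹) ?_).continuous
    intro p q
    rw [dist_eq_norm, dist_eq_norm, Real.coe_toNNReal _ (le_of_lt (inv_pos.mpr hα))]
    exact hQlip p q
  have hg_cont : ContinuousOn (fun t => eta t • y t) (Set.Ici 0) := heta_cont.smul hy_cont
  have hx_cont : ContinuousOn x (Set.Ici 0) := by
    have : ContinuousOn (fun t => Q (eta t • y t)) (Set.Ici 0) :=
      hQcont.comp_continuousOn hg_cont
    have he : x = fun t => Q (eta t • y t) := funext hx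
    rw [he]; exact this
  have hxX : ∀ t, x t ∈ X := fun t => by rw [hx t]; exact hQmem _
  have hvx_cont : ContinuousOn (fun t => v (x t)) (Set.Ici 0) := by
    intro t ht
    have hx' : ContinuousWithinAt x (Set.Ici 0) t := hx_cont t ht
    rw [ContinuousWithinAt, tendsto_iff_norm_sub_tendsto_zero]
    have hx'' : Filter.Tendsto (fun s => L * ‖x s - x t‖) (nhdsWithin t (Set.Ici 0)) (nhds 0) := by
      rw [ContinuousWithinAt, tendsto_iff_norm_sub_tendsto_zero] at hx'
      have := hx'.const_mul L
      simpa using this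
    exact squeeze_zero (fun s => norm_nonneg _) (fun s => hvLip _ (hxX s) _ (hxX t)) hx''
  have hhx_cont : ContinuousOn (fun t => h (x t)) (Set.Ici 0) :=
    hcont.comp hx_cont (fun t _ => hxX t)
  -- derivative of eta
  set eta' := derivWithin eta (Set.Ici 0) with heta'def
  have heta'_cont : ContinuousOn eta' (Set.Ici 0) :=
    heta_smooth.continuousOn_derivWithin (uniqueDiffOn_Ici 0) le_rfl
  have heta_hd : ∀ t ∈ Set.Ici (0:ℝ), HasDerivWithinAt eta (eta' t) (Set.Ici 0) t :=
    fun t ht => (heta_smooth.differentiableOn one_ne_zero t ht).hasDerivWithinAt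
  have heta'_nonpos : ∀ t ∈ Set.Ici (0:ℝ), eta' t ≤ 0 :=
    fun t ht => antitone_hasDerivWithinAt_nonpos heta_mono ht (heta_hd t ht)
  have heta_ne : ∀ t ∈ Set.Ici (0:ℝ), eta t ≠ 0 := fun t ht => ne_of_gt (heta_pos t ht)
  -- the Lyapunov function
  set Hs := fun q : EuclideanSpace ℝ (Fin n) => ⟪q, Q q⟫ - h (Q q) with hHs
  set g := fun t => eta t • y t with hgdef
  set W := fun t => (Hs (g t) + h xstar) / eta t - ⟪xstar, y t⟫ with hW
  set W' := fun t => -(lam t) * ⟪v (x t), x t - xstar⟫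
      + (eta' t / (eta t)^2) * (h (x t) - h xstar) with hW'
  have hHsg : ∀ t, Hs (g t) = eta t * ⟪y t, x t⟫ - h (x t) := by
    intro t
    rw [hHs]; simp only
    rw [hgdef]; simp only
    rw [← hx t, real_inner_smul_left]
  have hWd : ∀ t ∈ Set.Ici (0:ℝ), HasDerivWithinAt W (W' t) (Set.Ici 0) t := by
    intro t ht
    have hg' : HasDerivWithinAt g (eta t • ((-(lam t)) • v (x t)) + eta' t • y t)
        (Set.Ici 0) t := (heta_hd t ht).smul (hyderiv t ht)
    have hHsd : HasDerivWithinAt (fun s => Hs (g s))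
        (⟪x t, eta t • ((-(lam t)) • v (x t)) + eta' t • y t⟫) (Set.Ici 0) t := by
      have hf := mirror_conj_fderiv hα hconv hsc hQmem hQmax (g t)
      have := hf.comp_hasDerivWithinAt t hg'
      have hqg : Q (g t) = x t := (hx t).symm
      simpa [Hs, hqg, Function.comp_def] using this
    have hN : HasDerivWithinAt (fun s => Hs (g s) + h xstar)
        (⟪x t, eta t • ((-(lam t)) • v (x t)) + eta' t • y t⟫) (Set.Ici 0) t :=
      hHsd.add_const _
    have hdiv := hN.div (heta_hd t ht) (heta_ne t ht)
    have hIn : HasDerivWithinAt (fun s => ⟪xstar, y s⟫)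
        (⟪xstar, (-(lam t)) • v (x t)⟫) (Set.Ici 0) t := by
      have := (innerSL ℝ xstar).hasFDerivAt.comp_hasDerivWithinAt t (hyderiv t ht)
      simpa [Function.comp_def] using this
    have := hdiv.sub hIn
    refine this.congr_deriv ?_; symm
    rw [hW']; simp only
    rw [hHsg t]
    rw [inner_add_right, real_inner_smul_right, real_inner_smul_right,
      real_inner_smul_right, real_inner_smul_right, inner_sub_right]
    rw [real_inner_comm (x t) (v (x t)), real_inner_comm (x t) (y t),
      real_inner_comm xstar (v (x t))]
    have hne' : eta t ≠ 0 := heta_ne t ht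
    field_simp
    ring
  -- key integral inequality
  set I := fun t => ∫ s in (0:ℝ)..t, lam s * ‖x s - xstar‖^2 with hI
  have hInt_cont : ContinuousOn (fun s => lam s * ‖x s - xstar‖^2) (Set.Ici 0) := by
    apply hlam_cont.mul
    apply ContinuousOn.pow
    exact (hx_cont.sub continuousOn_const).norm
  have key : ∀ t > (0:ℝ), γ * I t ≤ D / eta t := by
    intro t ht
    have ht0 : (0:ℝ) ≤ t := le_of_lt ht
    have hsub : Set.Icc (0:ℝ) t ⊆ Set.Ici 0 := fun s hs => hs.1
    have hsubu : Set.uIcc (0:ℝ) t ⊆ Set.Ici 0 := by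
      rw [Set.uIcc_of_le ht0]; exact hsub
    set ψ := fun s => -D * (eta s)⁻¹ with hψ
    set ψ' := fun s => D * eta' s / (eta s)^2 with hψ'
    have hψd : ∀ s ∈ Set.Ici (0:ℝ), HasDerivWithinAt ψ (ψ' s) (Set.Ici 0) s := by
      intro s hs
      have := HasDerivWithinAt.const_mul (-D) ((heta_hd s hs).inv (heta_ne s hs))
      refine this.congr_deriv ?_; symm
      rw [hψ']
      have hne' : eta s ≠ 0 := heta_ne s hs
      field_simp
    have hW'c : ContinuousOn W' (Set.Ici 0) := by
      rw [hW']
      apply ContinuousOn.add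
      · exact (hlam_cont.neg).mul ((hvx_cont.inner (hx_cont.sub continuousOn_const)))
      · exact ((heta'_cont.div (heta_cont.pow 2)
          (fun s hs => pow_ne_zero _ (heta_ne s hs))).mul
          (hhx_cont.sub continuousOn_const))
    have hψ'c : ContinuousOn ψ' (Set.Ici 0) := by
      rw [hψ']
      exact (continuousOn_const.mul heta'_cont).div (heta_cont.pow 2)
        (fun s hs => pow_ne_zero _ (heta_ne s hs))
    have hW'int : IntervalIntegrable W' MeasureTheory.volume 0 t :=
      (hW'c.mono hsubu).intervalIntegrable
    have hψ'int : IntervalIntegrable ψ' MeasureTheory.volume 0 t :=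
      (hψ'c.mono hsubu).intervalIntegrable
    have hIntint : IntervalIntegrable (fun s => lam s * ‖x s - xstar‖^2)
        MeasureTheory.volume 0 t := (hInt_cont.mono hsubu).intervalIntegrable
    have hWc : ContinuousOn W (Set.Icc 0 t) :=
      fun s hs => ((hWd s (hsub hs)).continuousWithinAt).mono hsub
    have hψc : ContinuousOn ψ (Set.Icc 0 t) :=
      fun s hs => ((hψd s (hsub hs)).continuousWithinAt).mono hsub
    have hA1 : ∫ s in (0:ℝ)..t, W' s = W t - W 0 := by
      apply intervalIntegral.integral_eq_sub_of_hasDeriv_right_of_le ht0 hWc ?_ hW'int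
      intro s hs
      exact (hWd s (le_of_lt hs.1)).mono (fun u hu => le_of_lt (lt_trans hs.1 hu))
    have hA2 : ∫ s in (0:ℝ)..t, ψ' s = ψ t - ψ 0 := by
      apply intervalIntegral.integral_eq_sub_of_hasDeriv_right_of_le ht0 hψc ?_ hψ'int
      intro s hs
      exact (hψd s (le_of_lt hs.1)).mono (fun u hu => le_of_lt (lt_trans hs.1 hu))
    have hpt : ∀ s ∈ Set.Icc (0:ℝ) t, γ * (lam s * ‖x s - xstar‖^2) ≤ -(W' s) - ψ' s := by
      intro s hs
      have hs0 : s ∈ Set.Ici (0:ℝ) := hsub hs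
      have hlams := hlam_pos s hs0
      have hmono := hstrong xstar hxstar (x s) (hxX s)
      have hsol' := hsol (x s) (hxX s)
      have hinner : γ * ‖x s - xstar‖^2 ≤ ⟪v (x s), x s - xstar⟫ := by
        have e : ⟪v (x s) - v xstar, x s - xstar⟫
            = ⟪v (x s), x s - xstar⟫ - ⟪v xstar, x s - xstar⟫ := inner_sub_left _ _ _
        linarith
      have hη' := heta'_nonpos s hs0
      have hηsq : 0 < (eta s)^2 := pow_pos (heta_pos s hs0) 2
      have hhd : h xstar - h (x s) ≤ D := hDle xstar hxstar (x s) (hxX s)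
      simp only [hW', hψ']
      have h1 : -(lam s) * ⟪v (x s), x s - xstar⟫ ≤ -(lam s) * (γ * ‖x s - xstar‖^2) := by
        nlinarith
      have h2 : (eta' s / (eta s)^2) * (h (x s) - h xstar) + D * eta' s / (eta s)^2 ≤ 0 := by
        have hfac : (eta' s / (eta s)^2) * ((h (x s) - h xstar) + D) ≤ 0 :=
          mul_nonpos_of_nonpos_of_nonneg
            (div_nonpos_of_nonpos_of_nonneg hη' (le_of_lt hηsq)) (by linarith)
        have e2 : (eta' s / (eta s)^2) * ((h (x s) - h xstar) + D)
            = (eta' s / (eta s)^2) * (h (x s) - h xstar) + D * eta' s / (eta s)^2 := by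
          ring
        linarith
      linarith [h1, h2]
    have hmono_int : (∫ s in (0:ℝ)..t, γ * (lam s * ‖x s - xstar‖^2))
        ≤ ∫ s in (0:ℝ)..t, (-(W' s) - ψ' s) :=
      intervalIntegral.integral_mono_on ht0 (hIntint.const_mul γ)
        (hW'int.neg.sub hψ'int) hpt
    have hleft : (∫ s in (0:ℝ)..t, γ * (lam s * ‖x s - xstar‖^2)) = γ * I t := by
      rw [hI]; exact intervalIntegral.integral_const_mul γ _
    have hnW'int : IntervalIntegrable (fun s => -(W' s)) MeasureTheory.volume 0 t :=
      ((hW'c.neg).mono hsubu).intervalIntegrable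
    have hright : (∫ s in (0:ℝ)..t, (-(W' s) - ψ' s)) = -(W t - W 0) - (ψ t - ψ 0) := by
      rw [intervalIntegral.integral_sub hnW'int hψ'int, intervalIntegral.integral_neg,
        hA1, hA2]
    have hW0 : W 0 ≤ D / eta 0 := by
      have hg0 : g 0 = (0 : EuclideanSpace ℝ (Fin n)) := by rw [hgdef]; simp [hy0]
      have hHs0 : Hs (g 0) = - h (Q 0) := by rw [hHs, hg0]; simp
      have hw0 : W 0 = (h xstar - h (Q 0)) / eta 0 := by
        rw [hW]; simp [hHs0, hy0]; ring
      rw [hw0]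
      exact (div_le_div_iff_of_pos_right (heta_pos 0 le_rfl)).mpr (hDle xstar hxstar (Q 0) (hQmem 0))
    have hWt : 0 ≤ W t := by
      have h1 : ⟪g t, xstar⟫ - h xstar ≤ Hs (g t) := hQmax (g t) xstar hxstar
      have h2 : ⟪g t, xstar⟫ = eta t * ⟪y t, xstar⟫ := by
        rw [hgdef]; exact real_inner_smul_left _ _ _
      have hηt := heta_pos t ht0
      rw [hW]; simp only
      rw [sub_nonneg]
      have h3 : eta t * ⟪y t, xstar⟫ ≤ Hs (g t) + h xstar := by linarith
      calc ⟪xstar, y t⟫ = (eta t * ⟪y t, xstar⟫) / eta t := by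
            rw [real_inner_comm]; field_simp
        _ ≤ (Hs (g t) + h xstar) / eta t := (div_le_div_iff_of_pos_right hηt).mpr h3
    have hψdiff : -(ψ t - ψ 0) = D / eta t - D / eta 0 := by
      rw [hψ]; simp only
      rw [div_eq_mul_inv, div_eq_mul_inv]; ring
    have hchain : γ * I t ≤ -(W t - W 0) - (ψ t - ψ 0) := by
      rw [← hleft, ← hright]; exact hmono_int
    have h4 : γ * I t ≤ W 0 - W t + (D / eta t - D / eta 0) := by
      rw [← hψdiff]; linarith [hchain]
    have h5 : W 0 - W t + (D / eta t - D / eta 0) ≤ D / eta t := by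
      clear_value W
      linarith only [hW0, hWt]
    exact le_trans h4 h5
  have hmain : ∀ t > (0:ℝ),
      ‖xbar t - xstar‖ ^ 2 ≤ D / (γ * (eta t * S t)) := by
    intro t ht
    have ht0 : (0:ℝ) ≤ t := le_of_lt ht
    have hsub : Set.Icc (0:ℝ) t ⊆ Set.Ici 0 := fun s hs => hs.1
    have hsubu : Set.uIcc (0:ℝ) t ⊆ Set.Ici 0 := by
      rw [Set.uIcc_of_le ht0]; exact hsub
    have hηt := heta_pos t ht0
    have hlam_int : IntervalIntegrable lam MeasureTheory.volume 0 t :=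
      (hlam_cont.mono hsubu).intervalIntegrable
    have hSt : 0 < S t := by
      rw [hS]
      exact intervalIntegral.intervalIntegral_pos_of_pos_on hlam_int
        (fun s hs => hlam_pos s (le_of_lt hs.1)) ht
    have hr_cont : ContinuousOn (fun s => lam s * ‖x s - xstar‖) (Set.Ici 0) :=
      hlam_cont.mul (hx_cont.sub continuousOn_const).norm
    have hr_int : IntervalIntegrable (fun s => lam s * ‖x s - xstar‖)
        MeasureTheory.volume 0 t := (hr_cont.mono hsubu).intervalIntegrable
    have hr2_int : IntervalIntegrable (fun s => lam s * ‖x s - xstar‖^2)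
        MeasureTheory.volume 0 t := (hInt_cont.mono hsubu).intervalIntegrable
    set A := ∫ s in (0:ℝ)..t, lam s * ‖x s - xstar‖ with hA
    have hCS : A^2 ≤ S t * I t := by
      set c := A / S t with hc
      have hnn : (0:ℝ) ≤ ∫ s in (0:ℝ)..t, lam s * (c - ‖x s - xstar‖)^2 := by
        apply intervalIntegral.integral_nonneg ht0
        intro u hu
        have hu' := hlam_pos u (hsub hu)
        positivity
      have hexp : (∫ s in (0:ℝ)..t, lam s * (c - ‖x s - xstar‖)^2)
          = c^2 * S t - 2*c*A + I t := by
        have he : ∀ s, lam s * (c - ‖x s - xstar‖)^2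
            = (c^2 * lam s - 2*c*(lam s * ‖x s - xstar‖)) + lam s * ‖x s - xstar‖^2 := by
          intro s; ring
        rw [intervalIntegral.integral_congr (fun s _ => he s)]
        rw [intervalIntegral.integral_add ((hlam_int.const_mul (c^2)).sub
          (hr_int.const_mul (2*c))) hr2_int]
        rw [intervalIntegral.integral_sub (hlam_int.const_mul (c^2))
          (hr_int.const_mul (2*c))]
        rw [intervalIntegral.integral_const_mul, intervalIntegral.integral_const_mul,
          hS, hI, hA]
      rw [hexp] at hnn
      have hSne : S t ≠ 0 := ne_of_gt hSt
      have hcS : c * S t = A := by rw [hc]; field_simp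
      nlinarith [hnn, hSt, sq_nonneg (c * S t - A)]
    have hxl_int : IntervalIntegrable (fun s => lam s • x s)
        MeasureTheory.volume 0 t := ((hlam_cont.smul hx_cont).mono hsubu).intervalIntegrable
    have hxc_int : IntervalIntegrable (fun s => lam s • xstar)
        MeasureTheory.volume 0 t :=
      ((hlam_cont.smul continuousOn_const).mono hsubu).intervalIntegrable
    have hsplit : (∫ s in (0:ℝ)..t, lam s • (x s - xstar))
        = (∫ s in (0:ℝ)..t, lam s • x s) - (S t) • xstar := by
      have he : ∀ s, lam s • (x s - xstar) = lam s • x s - lam s • xstar :=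
        fun s => smul_sub _ _ _
      rw [intervalIntegral.integral_congr (fun s _ => he s),
        intervalIntegral.integral_sub hxl_int hxc_int,
        intervalIntegral.integral_smul_const, hS]
    have hdiff : xbar t - xstar = (S t)⁻¹ • ∫ s in (0:ℝ)..t, lam s • (x s - xstar) := by
      rw [hxbar t, hsplit, smul_sub, smul_smul, inv_mul_cancel₀ (ne_of_gt hSt), one_smul]
    have hnormbound : ‖xbar t - xstar‖ ≤ (S t)⁻¹ * A := by
      rw [hdiff, norm_smul]
      simp only [norm_inv, Real.norm_eq_abs, abs_of_pos hSt]
      apply mul_le_mul_of_nonneg_left ?_ (inv_nonneg.mpr (le_of_lt hSt))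
      calc ‖∫ s in (0:ℝ)..t, lam s • (x s - xstar)‖
          ≤ ∫ s in (0:ℝ)..t, ‖lam s • (x s - xstar)‖ :=
            intervalIntegral.norm_integral_le_integral_norm ht0
        _ = A := by
            rw [hA]
            apply intervalIntegral.integral_congr
            intro s hs
            show ‖lam s • (x s - xstar)‖ = lam s * ‖x s - xstar‖
            rw [norm_smul, Real.norm_eq_abs, abs_of_pos (hlam_pos s (hsubu hs))]
    have hIk := key t ht
    have hI0 : 0 ≤ I t := by
      rw [hI]; simp only
      apply intervalIntegral.integral_nonneg ht0
      intro u hu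
      have := hlam_pos u (hsub hu)
      positivity
    have e1 : ((S t)⁻¹ * A)^2 = A^2 / (S t)^2 := by
      rw [mul_pow, inv_pow, div_eq_mul_inv]; ring
    have step1 : ‖xbar t - xstar‖^2 ≤ A^2/(S t)^2 := by
      rw [← e1]; exact pow_le_pow_left₀ (norm_nonneg _) hnormbound 2
    have hS2 : 0 < (S t)^2 := pow_pos hSt 2
    have step2 : A^2/(S t)^2 ≤ (S t * I t)/(S t)^2 := (div_le_div_iff_of_pos_right hS2).mpr hCS
    have step3 : (S t * I t)/(S t)^2 = I t / S t := by
      field_simp [ne_of_gt hSt]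
    have step4 : I t ≤ D / (γ * eta t) := by
      rw [le_div_iff₀ (by positivity)]
      calc I t * (γ * eta t) = (γ * I t) * eta t := by ring
        _ ≤ (D / eta t) * eta t := mul_le_mul_of_nonneg_right hIk (le_of_lt hηt)
        _ = D := by field_simp
    have step5 : I t / S t ≤ (D / (γ * eta t)) / S t := (div_le_div_iff_of_pos_right hSt).mpr step4
    have step6 : (D / (γ * eta t)) / S t = D / (γ * (eta t * S t)) := by
      rw [div_div]; ring_nf
    linarith [step1, step2, step5]
  refine ⟨fun t ht => hmain t ht, fun hT => ?_⟩
  have hγT : Filter.Tendsto (fun t => γ * (eta t * S t)) Filter.atTop Filter.atTop :=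
    hT.const_mul_atTop hγ
  have hb : Filter.Tendsto (fun t => D / (γ * (eta t * S t))) Filter.atTop (nhds 0) := by
    have := hγT.inv_tendsto_atTop.const_mul D
    simpa [div_eq_mul_inv] using this
  have hsq : Filter.Tendsto (fun t => ‖xbar t - xstar‖^2) Filter.atTop (nhds 0) := by
    apply squeeze_zero' (Filter.Eventually.of_forall (fun t => sq_nonneg _)) ?_ hb
    filter_upwards [Filter.eventually_gt_atTop 0] with t ht'
    exact hmain t ht'
  have hnrm : Filter.Tendsto (fun t => ‖xbar t - xstar‖) Filter.atTop (nhds 0) := by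
    have hsqrt := (Real.continuous_sqrt.tendsto 0).comp hsq
    simp only [Function.comp_def] at hsqrt
    rw [Real.sqrt_zero] at hsqrt
    convert hsqrt using 2 with t
    exact (Real.sqrt_sq (norm_nonneg _)).symm
  rw [tendsto_iff_norm_sub_tendsto_zero]
  exact hnrm
end

section
/- Let X ⊆ ℝⁿ be compact convex, v : X → ℝⁿ Lipschitz and strictly monotone with unique variational inequality solution x*, and h a distance-generating function with mirror map Q. Let y(t) solve the autonomous mirror descent dynamics dy/dt = −v(Q(y(t))) (i.e. λ ≡ η ≡ 1) from initial condition y ∈ ℝⁿ, with primal trajectory x(t) = Q(y(t)). Then for every open neighborhood O of x* in X, the hitting time t_O(y) = inf{t ≥ 0 : x(t) ∈ O} is finite. -/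
open scoped RealInnerProductSpace

open Set Filter

/-- Strong concavity of `x ↦ ⟪y,x⟫ - h x` at its maximizer `Q y`. -/
lemma md_strong_max_key {n : ℕ} {α : ℝ}
    {X : Set (EuclideanSpace ℝ (Fin n))} (hconv : Convex ℝ X)
    {h : EuclideanSpace ℝ (Fin n) → ℝ}
    (hsc : ∀ x ∈ X, ∀ x' ∈ X, ∀ t ∈ Set.Icc (0:ℝ) 1,
      h (t • x + (1 - t) • x') ≤
        t * h x + (1 - t) * h x' - α / 2 * t * (1 - t) * ‖x - x'‖ ^ 2)
    {Q : EuclideanSpace ℝ (Fin n) → EuclideanSpace ℝ (Fin n)}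
    (hQmem : ∀ y, Q y ∈ X)
    (hQmax : ∀ y, ∀ x ∈ X, ⟪y, x⟫ - h x ≤ ⟪y, Q y⟫ - h (Q y)) :
    ∀ (y : EuclideanSpace ℝ (Fin n)), ∀ x' ∈ X,
      ⟪y, x'⟫ - h x' + α / 4 * ‖x' - Q y‖ ^ 2 ≤ ⟪y, Q y⟫ - h (Q y) := by
  intro y x' hx'
  have hxX : Q y ∈ X := hQmem y
  have hmid : (1/2 : ℝ) • x' + (1 - 1/2 : ℝ) • Q y ∈ X :=
    hconv hx' hxX (by norm_num) (by norm_num) (by norm_num)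
  have h1 := hsc x' hx' (Q y) hxX (1/2) (by norm_num)
  have h2 := hQmax y _ hmid
  have h3 : ⟪y, (1/2 : ℝ) • x' + (1 - 1/2 : ℝ) • Q y⟫
      = (1/2 : ℝ) * ⟪y, x'⟫ + (1 - 1/2 : ℝ) * ⟪y, Q y⟫ := by
    rw [inner_add_right, real_inner_smul_right, real_inner_smul_right]
  rw [h3] at h2
  linarith

/-- `Q` is Lipschitz. -/
lemma md_Q_lip {n : ℕ} {α : ℝ} (hα : 0 < α)
    {X : Set (EuclideanSpace ℝ (Fin n))} (hconv : Convex ℝ X)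
    {h : EuclideanSpace ℝ (Fin n) → ℝ}
    (hsc : ∀ x ∈ X, ∀ x' ∈ X, ∀ t ∈ Set.Icc (0:ℝ) 1,
      h (t • x + (1 - t) • x') ≤
        t * h x + (1 - t) * h x' - α / 2 * t * (1 - t) * ‖x - x'‖ ^ 2)
    {Q : EuclideanSpace ℝ (Fin n) → EuclideanSpace ℝ (Fin n)}
    (hQmem : ∀ y, Q y ∈ X)
    (hQmax : ∀ y, ∀ x ∈ X, ⟪y, x⟫ - h x ≤ ⟪y, Q y⟫ - h (Q y)) :
    ∀ y y' : EuclideanSpace ℝ (Fin n), ‖Q y - Q y'‖ ≤ 2/α * ‖y - y'‖ := by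
  intro y y'
  have k1 := md_strong_max_key hconv hsc hQmem hQmax y (Q y') (hQmem y')
  have k2 := md_strong_max_key hconv hsc hQmem hQmax y' (Q y) (hQmem y)
  have e1 : ⟪y - y', Q y - Q y'⟫
      = ⟪y, Q y⟫ - ⟪y, Q y'⟫ - ⟪y', Q y⟫ + ⟪y', Q y'⟫ := by
    rw [inner_sub_left, inner_sub_right, inner_sub_right]; ring
  have e2 : ‖Q y' - Q y‖ = ‖Q y - Q y'‖ := norm_sub_rev _ _
  rw [e2] at k1
  have key : α/2 * ‖Q y - Q y'‖^2 ≤ ⟪y - y', Q y - Q y'⟫ := by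
    rw [e1]; linarith
  have hub := real_inner_le_norm (y - y') (Q y - Q y')
  rcases eq_or_lt_of_le (norm_nonneg (Q y - Q y')) with hz | hz
  · rw [← hz]; positivity
  · have h2 : α/2 * ‖Q y - Q y'‖^2 ≤ ‖y - y'‖ * ‖Q y - Q y'‖ := le_trans key hub
    rw [div_mul_eq_mul_div, le_div_iff₀ hα]
    nlinarith [hz, h2]


/-- For a Lipschitz strictly monotone operator with unique solution `x*`,
the primal trajectory `x(t) = Q(y(t))` of the autonomous mirror descent dynamics
`dy/dt = -v(Q(y(t)))` hits every open neighborhood of `x*` in finite time. -/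
theorem mirror_descent_hitting_time_finite {n : ℕ} {α L : ℝ}
    (hα : 0 < α) (hL : 0 < L)
    (X : Set (EuclideanSpace ℝ (Fin n)))
    (hne : X.Nonempty) (hcomp : IsCompact X) (hconv : Convex ℝ X)
    (v : EuclideanSpace ℝ (Fin n) → EuclideanSpace ℝ (Fin n))
    (hvLip : ∀ x ∈ X, ∀ x' ∈ X, ‖v x - v x'‖ ≤ L * ‖x - x'‖)
    (hmono : ∀ x ∈ X, ∀ x' ∈ X, 0 ≤ ⟪v x' - v x, x' - x⟫)
    (hstrict : ∀ x ∈ X, ∀ x' ∈ X, ⟪v x' - v x, x' - x⟫ = 0 → x = x')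
    (xstar : EuclideanSpace ℝ (Fin n)) (hxstar : xstar ∈ X)
    (hsol : ∀ x ∈ X, 0 ≤ ⟪v x, x - xstar⟫)
    (h : EuclideanSpace ℝ (Fin n) → ℝ)
    (hcont : ContinuousOn h X)
    (hsc : ∀ x ∈ X, ∀ x' ∈ X, ∀ t ∈ Set.Icc (0:ℝ) 1,
      h (t • x + (1 - t) • x') ≤
        t * h x + (1 - t) * h x' - α / 2 * t * (1 - t) * ‖x - x'‖ ^ 2)
    (Q : EuclideanSpace ℝ (Fin n) → EuclideanSpace ℝ (Fin n))
    (hQmem : ∀ y, Q y ∈ X)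
    (hQmax : ∀ y, ∀ x ∈ X, ⟪y, x⟫ - h x ≤ ⟪y, Q y⟫ - h (Q y))
    (y : ℝ → EuclideanSpace ℝ (Fin n))
    (hyderiv : ∀ t ∈ Set.Ici (0:ℝ),
      HasDerivWithinAt y (-(v (Q (y t)))) (Set.Ici 0) t) :
    ∀ O : Set (EuclideanSpace ℝ (Fin n)), IsOpen O → xstar ∈ O →
      ∃ t ≥ (0:ℝ), Q (y t) ∈ O := by
  intro O hO hxO
  by_contra hcon
  push_neg at hcon
  -- continuity of Q
  have hQcont : Continuous Q := by
    have hlip : LipschitzWith (Real.toNNReal (2/α)) Q := by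
      apply LipschitzWith.of_dist_le_mul
      intro a b
      rw [dist_eq_norm, dist_eq_norm, Real.coe_toNNReal _ (by positivity)]
      exact md_Q_lip hα hconv hsc hQmem hQmax a b
    exact hlip.continuous
  -- continuity of v on X
  have hvcont : ContinuousOn v X := by
    have hlip : LipschitzOnWith (Real.toNNReal L) v X := by
      rw [lipschitzOnWith_iff_dist_le_mul]
      intro a ha b hb
      rw [dist_eq_norm, dist_eq_norm, Real.coe_toNNReal _ hL.le]
      exact hvLip a ha b hb
    exact hlip.continuousOn
  -- Stampacchia form of the VI at xstar
  have hstam : ∀ x ∈ X, 0 ≤ ⟪v xstar, x - xstar⟫ := by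
    intro x hx
    by_contra hneg
    push_neg at hneg
    set a := ⟪v xstar, x - xstar⟫ with ha
    set C := L * ‖x - xstar‖^2 with hCdef
    have hC : 0 ≤ C := by positivity
    set s := min 1 (-a / (2 * (C+1))) with hs
    have hs0 : 0 < s := lt_min one_pos (div_pos (by linarith) (by positivity))
    have hs1 : s ≤ 1 := min_le_left _ _
    have hmem : (1-s) • xstar + s • x ∈ X := hconv hxstar hx (by linarith) hs0.le (by ring)
    set xs := (1-s) • xstar + s • x with hxs
    have hdiff : xs - xstar = s • (x - xstar) := by
      rw [hxs]; module
    have h1 := hsol xs hmem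
    rw [hdiff, real_inner_smul_right] at h1
    have h2 : 0 ≤ ⟪v xs, x - xstar⟫ := nonneg_of_mul_nonneg_right h1 hs0
    have h3 : ⟪v xs, x - xstar⟫ = a + ⟪v xs - v xstar, x - xstar⟫ := by
      rw [inner_sub_left]; ring
    have h4 : ⟪v xs - v xstar, x - xstar⟫ ≤ ‖v xs - v xstar‖ * ‖x - xstar‖ :=
      real_inner_le_norm _ _
    have h5 : ‖v xs - v xstar‖ ≤ L * ‖xs - xstar‖ := hvLip xs hmem xstar hxstar
    have h6 : ‖xs - xstar‖ = s * ‖x - xstar‖ := by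
      rw [hdiff, norm_smul, Real.norm_eq_abs, abs_of_pos hs0]
    have h8 : ⟪v xs - v xstar, x - xstar⟫ ≤ s * C := by
      calc ⟪v xs - v xstar, x - xstar⟫ ≤ ‖v xs - v xstar‖ * ‖x - xstar‖ := h4
        _ ≤ (L * (s * ‖x - xstar‖)) * ‖x - xstar‖ := by
            apply mul_le_mul_of_nonneg_right _ (norm_nonneg _)
            rw [← h6]; exact h5
        _ = s * C := by rw [hCdef]; ring
    have hs2 : s * (2 * (C+1)) ≤ -a := by
      rw [← le_div_iff₀ (by positivity)]
      exact min_le_right _ _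
    nlinarith
  -- strict positivity of the gap function away from xstar
  have gpos : ∀ x ∈ X, x ≠ xstar → 0 < ⟪v x, x - xstar⟫ := by
    intro x hx hxne
    have hm := hmono xstar hxstar x hx
    have hm' : 0 < ⟪v x - v xstar, x - xstar⟫ := by
      rcases eq_or_lt_of_le hm with he | hlt
      · exact absurd ((hstrict xstar hxstar x hx he.symm).symm) hxne
      · exact hlt
    have hst := hstam x hx
    have e : ⟪v x, x - xstar⟫ = ⟪v x - v xstar, x - xstar⟫ + ⟪v xstar, x - xstar⟫ := by
      rw [inner_sub_left]; ring
    rw [e]; linarith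
  -- the compact set avoided region and a positive lower bound m on the gap
  set K := X \ O with hK
  have hKcomp : IsCompact K := hcomp.diff hO
  have hKne : K.Nonempty := ⟨Q (y 0), hQmem _, hcon 0 le_rfl⟩
  have hgcont : ContinuousOn (fun x => ⟪v x, x - xstar⟫) X :=
    hvcont.inner (continuousOn_id.sub continuousOn_const)
  obtain ⟨z, hzK, hzmin⟩ := hKcomp.exists_isMinOn hKne (hgcont.mono diff_subset)
  set m := ⟪v z, z - xstar⟫ with hm
  have hmpos : 0 < m := gpos z hzK.1 (fun e => hzK.2 (e ▸ hxO))
  have hminK : ∀ x ∈ K, m ≤ ⟪v x, x - xstar⟫ := fun x hx => hzmin hx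
  -- the Lyapunov function
  set F : ℝ → ℝ := fun t => ⟪y t, Q (y t)⟫ - h (Q (y t)) - ⟪y t, xstar⟫ with hF
  have hFlow : ∀ s t : ℝ, ⟪y s - y t, Q (y t) - xstar⟫ ≤ F s - F t := by
    intro s t
    have h1 := hQmax (y s) (Q (y t)) (hQmem (y t))
    have e1 : ⟪y s - y t, Q (y t) - xstar⟫
        = ⟪y s, Q (y t)⟫ - ⟪y s, xstar⟫ - ⟪y t, Q (y t)⟫ + ⟪y t, xstar⟫ := by
      rw [inner_sub_left, inner_sub_right, inner_sub_right]; ring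
    rw [e1, hF]
    simp only
    linarith
  have hFup : ∀ s t : ℝ, F s - F t ≤ ⟪y s - y t, Q (y s) - xstar⟫ := by
    intro s t
    have h1 := hFlow t s
    have e : ⟪y t - y s, Q (y s) - xstar⟫ = -⟪y s - y t, Q (y s) - xstar⟫ := by
      rw [← neg_sub, inner_neg_left]
    rw [e] at h1
    linarith
  -- derivative of F
  have hFd : ∀ t ∈ Set.Ici (0:ℝ),
      HasDerivWithinAt F (⟪-(v (Q (y t))), Q (y t) - xstar⟫) (Set.Ici 0) t := by
    intro t ht
    rw [hasDerivWithinAt_iff_tendsto_slope]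
    have hys : Tendsto (slope y t) (nhdsWithin t (Set.Ici 0 \ {t})) (nhds (-(v (Q (y t))))) :=
      hasDerivWithinAt_iff_tendsto_slope.mp (hyderiv t ht)
    have hycont : Tendsto y (nhdsWithin t (Set.Ici 0 \ {t})) (nhds (y t)) :=
      ((hyderiv t ht).continuousWithinAt).mono_left (nhdsWithin_mono t diff_subset)
    have hQy : Tendsto (fun s => Q (y s) - xstar) (nhdsWithin t (Set.Ici 0 \ {t}))
        (nhds (Q (y t) - xstar)) :=
      (((hQcont.tendsto (y t)).comp hycont).sub tendsto_const_nhds)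
    have hta : Tendsto (fun s => ⟪slope y t s, Q (y t) - xstar⟫)
        (nhdsWithin t (Set.Ici 0 \ {t})) (nhds ⟪-(v (Q (y t))), Q (y t) - xstar⟫) :=
      hys.inner tendsto_const_nhds
    have htb : Tendsto (fun s => ⟪slope y t s, Q (y s) - xstar⟫)
        (nhdsWithin t (Set.Ici 0 \ {t})) (nhds ⟪-(v (Q (y t))), Q (y t) - xstar⟫) :=
      hys.inner hQy
    have hmin := hta.min htb
    have hmax := hta.max htb
    rw [min_self] at hmin
    rw [max_self] at hmax
    refine tendsto_of_tendsto_of_tendsto_of_le_of_le' hmin hmax ?_ ?_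
    · filter_upwards [self_mem_nhdsWithin] with s hs
      have hst : s ≠ t := by simpa using hs.2
      have hA := hFlow s t
      have hB := hFup s t
      have hsl : slope F t s = (F s - F t) / (s - t) := slope_def_field F t s
      have hsa : ⟪slope y t s, Q (y t) - xstar⟫ = ⟪y s - y t, Q (y t) - xstar⟫ / (s - t) := by
        rw [slope_def_module, real_inner_smul_left, inv_mul_eq_div]
      have hsb : ⟪slope y t s, Q (y s) - xstar⟫ = ⟪y s - y t, Q (y s) - xstar⟫ / (s - t) := by
        rw [slope_def_module, real_inner_smul_left, inv_mul_eq_div]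
      rw [hsl, hsa, hsb]
      rcases lt_or_gt_of_ne hst with hlt | hgt
      · have hc : s - t ≤ 0 := by linarith
        exact le_trans (min_le_right _ _) (div_le_div_of_nonpos_of_le hc hB)
      · have hc : (0:ℝ) < s - t := by linarith
        exact le_trans (min_le_left _ _) (div_le_div_of_nonneg_right hA hc.le)
    · filter_upwards [self_mem_nhdsWithin] with s hs
      have hst : s ≠ t := by simpa using hs.2
      have hA := hFlow s t
      have hB := hFup s t
      have hsl : slope F t s = (F s - F t) / (s - t) := slope_def_field F t s
      have hsa : ⟪slope y t s, Q (y t) - xstar⟫ = ⟪y s - y t, Q (y t) - xstar⟫ / (s - t) := by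
        rw [slope_def_module, real_inner_smul_left, inv_mul_eq_div]
      have hsb : ⟪slope y t s, Q (y s) - xstar⟫ = ⟪y s - y t, Q (y s) - xstar⟫ / (s - t) := by
        rw [slope_def_module, real_inner_smul_left, inv_mul_eq_div]
      rw [hsl, hsa, hsb]
      rcases lt_or_gt_of_ne hst with hlt | hgt
      · have hc : s - t ≤ 0 := by linarith
        exact le_trans (div_le_div_of_nonpos_of_le hc hA) (le_max_left _ _)
      · have hc : (0:ℝ) < s - t := by linarith
        exact le_trans (div_le_div_of_nonneg_right hB hc.le) (le_max_right _ _)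
  -- F is continuous on [0, ∞)
  have hFc : ContinuousOn F (Set.Ici 0) := fun t ht => (hFd t ht).continuousWithinAt
  -- the perturbed function G decreases
  set G : ℝ → ℝ := fun t => F t + m * t with hG
  have hGd : ∀ t ∈ interior (Set.Ici (0:ℝ)),
      HasDerivAt G (⟪-(v (Q (y t))), Q (y t) - xstar⟫ + m) t := by
    intro t ht
    rw [interior_Ici] at ht
    have h1 : HasDerivAt F ⟪-(v (Q (y t))), Q (y t) - xstar⟫ t :=
      (hFd t (Set.mem_Ioi.mp ht).le).hasDerivAt (Ici_mem_nhds ht)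
    have h2 : HasDerivAt (fun s : ℝ => m * s) m t := by
      simpa using (hasDerivAt_id t).const_mul m
    exact h1.add h2
  have hGanti : AntitoneOn G (Set.Ici 0) := by
    apply antitoneOn_of_deriv_nonpos (convex_Ici 0)
    · exact hFc.add (continuous_const.mul continuous_id).continuousOn
    · intro t ht
      exact (hGd t ht).differentiableAt.differentiableWithinAt
    · intro t ht
      rw [(hGd t ht).deriv]
      have ht0 : (0:ℝ) ≤ t := by rw [interior_Ici] at ht; exact ht.le
      have hmem : Q (y t) ∈ K := ⟨hQmem _, hcon t ht0⟩
      have hge := hminK _ hmem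
      rw [inner_neg_left]
      linarith
  -- conclusion
  set T := max 0 ((F 0 + h xstar + 1)/m) with hT
  have hT0 : (0:ℝ) ≤ T := le_max_left _ _
  have hGT : G T ≤ G 0 := hGanti Set.self_mem_Ici (Set.mem_Ici.mpr hT0) hT0
  have hlow : -h xstar ≤ F T := by
    have h1 := hQmax (y T) xstar hxstar
    rw [hF]; simp only
    linarith
  have hmT : F 0 + h xstar + 1 ≤ m * T := by
    have h1 : (F 0 + h xstar + 1)/m ≤ T := le_max_right _ _
    calc F 0 + h xstar + 1 = m * ((F 0 + h xstar + 1)/m) := by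
          rw [mul_div_cancel₀ _ hmpos.ne']
      _ ≤ m * T := mul_le_mul_of_nonneg_left h1 hmpos.le
  rw [hG] at hGT
  simp only at hGT
  linarith
end

section
/- Let X ⊆ ℝⁿ be compact convex, v : X → ℝⁿ Lipschitz and monotone with Minty solution x*, h a distance-generating function with conjugate h*, mirror map Q, and Fenchel coupling F(x, y) = h(x) + h*(y) − ⟨y, x⟩. Let y(t) solve dy/dt = −v(Q(y(t))) from y(0) = y, with x(t) = Q(y(t)). Then the map t ↦ F(x*, y(t)) is differentiable with d/dt F(x*, y(t)) = −⟨v(x(t)), x(t) − x*⟩ ≤ 0 for all t ≥ 0; in particular t ↦ F(x*, y(t)) is nonincreasing. -/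
open scoped RealInnerProductSpace

/-- Along the autonomous mirror descent dynamics `dy/dt = -v(Q(y(t)))`,
the Fenchel coupling `t ↦ F(x*, y(t))` is differentiable with derivative
`-⟨v(x(t)), x(t) - x*⟩ ≤ 0` for all `t ≥ 0`; in particular it is nonincreasing. -/
theorem fenchel_coupling_descent {n : ℕ} {α L : ℝ}
    (hα : 0 < α) (hL : 0 < L)
    (X : Set (EuclideanSpace ℝ (Fin n)))
    (hne : X.Nonempty) (hcomp : IsCompact X) (hconv : Convex ℝ X)
    (v : EuclideanSpace ℝ (Fin n) → EuclideanSpace ℝ (Fin n))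
    (hvLip : ∀ x ∈ X, ∀ x' ∈ X, ‖v x - v x'‖ ≤ L * ‖x - x'‖)
    (hmono : ∀ x ∈ X, ∀ x' ∈ X, 0 ≤ ⟪v x - v x', x - x'⟫)
    (xstar : EuclideanSpace ℝ (Fin n)) (hxstar : xstar ∈ X)
    (hsol : ∀ x ∈ X, 0 ≤ ⟪v x, x - xstar⟫)
    (h : EuclideanSpace ℝ (Fin n) → ℝ)
    (hcont : ContinuousOn h X)
    (hsc : ∀ x ∈ X, ∀ x' ∈ X, ∀ t ∈ Set.Icc (0:ℝ) 1,
      h (t • x + (1 - t) • x') ≤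
        t * h x + (1 - t) * h x' - α / 2 * t * (1 - t) * ‖x - x'‖ ^ 2)
    (Q : EuclideanSpace ℝ (Fin n) → EuclideanSpace ℝ (Fin n))
    (hQmem : ∀ y, Q y ∈ X)
    (hQmax : ∀ y, ∀ x ∈ X, ⟪y, x⟫ - h x ≤ ⟪y, Q y⟫ - h (Q y))
    (hstar : EuclideanSpace ℝ (Fin n) → ℝ)
    (hstar_def : ∀ y, hstar y = ⟪y, Q y⟫ - h (Q y))
    (y : ℝ → EuclideanSpace ℝ (Fin n))
    (hyderiv : ∀ t ∈ Set.Ici (0:ℝ),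
      HasDerivWithinAt y (-(v (Q (y t)))) (Set.Ici 0) t) :
    (∀ t ∈ Set.Ici (0:ℝ),
      HasDerivWithinAt (fun s => h xstar + hstar (y s) - ⟪y s, xstar⟫)
        (-⟪v (Q (y t)), Q (y t) - xstar⟫) (Set.Ici 0) t ∧
      -⟪v (Q (y t)), Q (y t) - xstar⟫ ≤ 0) ∧
    AntitoneOn (fun s => h xstar + hstar (y s) - ⟪y s, xstar⟫) (Set.Ici 0) := by
  -- quadratic growth at the maximizer
  have qgrowth : ∀ y₀, ∀ x ∈ X,
      ⟪y₀, x⟫ - h x + α / 4 * ‖x - Q y₀‖ ^ 2 ≤ ⟪y₀, Q y₀⟫ - h (Q y₀) := by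
    intro y₀ x hx
    have hmid : (1/2 : ℝ) • x + (1 - (1/2 : ℝ)) • Q y₀ ∈ X :=
      hconv hx (hQmem y₀) (by norm_num) (by norm_num) (by norm_num)
    have h1 := hsc x hx (Q y₀) (hQmem y₀) (1/2) (by norm_num)
    have h2 := hQmax y₀ _ hmid
    have h3 : ⟪y₀, (1/2 : ℝ) • x + (1 - (1/2 : ℝ)) • Q y₀⟫
        = (1/2 : ℝ) * ⟪y₀, x⟫ + (1/2 : ℝ) * ⟪y₀, Q y₀⟫ := by
      rw [inner_add_right, inner_smul_right, inner_smul_right]; norm_num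
    rw [h3] at h2
    nlinarith [h1, h2]
  -- Q is Lipschitz with constant 2/α
  have hQlip : ∀ y₁ y₂, ‖Q y₁ - Q y₂‖ ≤ 2 / α * ‖y₁ - y₂‖ := by
    intro y₁ y₂
    have h1 := qgrowth y₁ (Q y₂) (hQmem y₂)
    have h2 := qgrowth y₂ (Q y₁) (hQmem y₁)
    have hnorm : ‖Q y₂ - Q y₁‖ = ‖Q y₁ - Q y₂‖ := norm_sub_rev _ _
    rw [hnorm] at h1
    have hsum : α / 2 * ‖Q y₁ - Q y₂‖ ^ 2 ≤ ⟪y₁ - y₂, Q y₁ - Q y₂⟫ := by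
      have e : ⟪y₁ - y₂, Q y₁ - Q y₂⟫
          = ⟪y₁, Q y₁⟫ - ⟪y₁, Q y₂⟫ - ⟪y₂, Q y₁⟫ + ⟪y₂, Q y₂⟫ := by
        simp [inner_sub_left, inner_sub_right]; ring
      nlinarith [h1, h2]
    have hcs : ⟪y₁ - y₂, Q y₁ - Q y₂⟫ ≤ ‖y₁ - y₂‖ * ‖Q y₁ - Q y₂‖ :=
      real_inner_le_norm _ _
    rcases eq_or_lt_of_le (norm_nonneg (Q y₁ - Q y₂)) with h0 | h0
    · rw [← h0]; positivity
    · rw [div_mul_eq_mul_div, le_div_iff₀ hα]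
      nlinarith
  -- hstar is differentiable with gradient Q
  have hstar_deriv : ∀ y₀, HasFDerivAt hstar (innerSL ℝ (Q y₀)) y₀ := by
    intro y₀
    rw [hasFDerivAt_iff_isLittleO_nhds_zero]
    rw [Asymptotics.isLittleO_iff]
    intro c hc
    have hball : Metric.ball (0 : EuclideanSpace ℝ (Fin n)) (c * α / 2) ∈
        nhds (0 : EuclideanSpace ℝ (Fin n)) :=
      Metric.ball_mem_nhds _ (by positivity)
    filter_upwards [hball] with z hz
    have hzn : ‖z‖ < c * α / 2 := by simpa using hz
    -- lower bound
    have hlow : ⟪z, Q y₀⟫ ≤ hstar (y₀ + z) - hstar y₀ := by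
      have := hQmax (y₀ + z) (Q y₀) (hQmem y₀)
      rw [hstar_def (y₀ + z), hstar_def y₀]
      have e : ⟪y₀ + z, Q y₀⟫ = ⟪y₀, Q y₀⟫ + ⟪z, Q y₀⟫ := inner_add_left _ _ _
      linarith [this, e.ge, e.le]
    -- upper bound
    have hup : hstar (y₀ + z) - hstar y₀ ≤ ⟪z, Q (y₀ + z)⟫ := by
      have := hQmax y₀ (Q (y₀ + z)) (hQmem (y₀ + z))
      rw [hstar_def (y₀ + z), hstar_def y₀]
      have e : ⟪y₀ + z, Q (y₀ + z)⟫ = ⟪y₀, Q (y₀ + z)⟫ + ⟪z, Q (y₀ + z)⟫ :=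
        inner_add_left _ _ _
      linarith [this, e.ge, e.le]
    have hdiff : ⟪z, Q (y₀ + z)⟫ - ⟪z, Q y₀⟫ ≤ ‖z‖ * (2 / α * ‖z‖) := by
      have e : ⟪z, Q (y₀ + z)⟫ - ⟪z, Q y₀⟫ = ⟪z, Q (y₀ + z) - Q y₀⟫ := by
        rw [inner_sub_right]
      rw [e]
      calc ⟪z, Q (y₀ + z) - Q y₀⟫ ≤ ‖z‖ * ‖Q (y₀ + z) - Q y₀‖ := real_inner_le_norm _ _
        _ ≤ ‖z‖ * (2 / α * ‖z‖) := by
            have := hQlip (y₀ + z) y₀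
            simp only [add_sub_cancel_left] at this
            exact mul_le_mul_of_nonneg_left this (norm_nonneg z)
    have habs : |hstar (y₀ + z) - hstar y₀ - ⟪Q y₀, z⟫| ≤ 2 / α * ‖z‖ ^ 2 := by
      rw [abs_le]
      have hsymm : ⟪Q y₀, z⟫ = ⟪z, Q y₀⟫ := real_inner_comm _ _
      constructor
      · nlinarith [hlow, sq_nonneg ‖z‖, norm_nonneg z, hα]
      · nlinarith [hup, hdiff]
    have : (innerSL ℝ (Q y₀)) z = ⟪Q y₀, z⟫ := rfl
    rw [Real.norm_eq_abs, this]
    calc |hstar (y₀ + z) - hstar y₀ - ⟪Q y₀, z⟫| ≤ 2 / α * ‖z‖ ^ 2 := habs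
      _ ≤ c * ‖z‖ := by
          rcases eq_or_lt_of_le (norm_nonneg z) with h0 | h0
          · rw [← h0]; simp
          · have : 2 / α * ‖z‖ ≤ c := by
              rw [div_mul_eq_mul_div, div_le_iff₀ hα]
              nlinarith
            nlinarith [norm_nonneg z]
  -- main derivative claim
  have main : ∀ t ∈ Set.Ici (0:ℝ),
      HasDerivWithinAt (fun s => h xstar + hstar (y s) - ⟪y s, xstar⟫)
        (-⟪v (Q (y t)), Q (y t) - xstar⟫) (Set.Ici 0) t := by
    intro t ht
    have h1 : HasDerivWithinAt (fun s => hstar (y s))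
        ((innerSL ℝ (Q (y t))) (-(v (Q (y t))))) (Set.Ici 0) t :=
      (hstar_deriv (y t)).comp_hasDerivWithinAt t (hyderiv t ht)
    have h2 : HasDerivWithinAt (fun s => ⟪y s, xstar⟫)
        (⟪y t, (0 : EuclideanSpace ℝ (Fin n))⟫ + ⟪-(v (Q (y t))), xstar⟫)
        (Set.Ici 0) t :=
      HasDerivWithinAt.inner ℝ (hyderiv t ht) (hasDerivWithinAt_const t _ xstar)
    have h3 := (h1.const_add (h xstar)).sub h2
    refine h3.congr_deriv ?_
    have : (innerSL ℝ (Q (y t))) (-(v (Q (y t)))) = ⟪Q (y t), -(v (Q (y t)))⟫ := rfl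
    rw [this, inner_neg_right]
    simp only [inner_zero_right, inner_neg_left, inner_sub_right]
    rw [real_inner_comm (Q (y t)) (v (Q (y t)))]
    ring
  have nonpos : ∀ t, -⟪v (Q (y t)), Q (y t) - xstar⟫ ≤ 0 := fun t =>
    neg_nonpos.mpr (hsol (Q (y t)) (hQmem (y t)))
  refine ⟨fun t ht => ⟨main t ht, nonpos t⟩, ?_⟩
  have hcontF : ContinuousOn (fun s => h xstar + hstar (y s) - ⟪y s, xstar⟫) (Set.Ici 0) :=
    fun t ht => (main t ht).continuousWithinAt
  have hint : interior (Set.Ici (0:ℝ)) = Set.Ioi 0 := interior_Ici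
  apply antitoneOn_of_deriv_nonpos (convex_Ici 0) hcontF
  · intro t ht
    rw [hint] at ht
    have hda : HasDerivAt (fun s => h xstar + hstar (y s) - ⟪y s, xstar⟫)
        (-⟪v (Q (y t)), Q (y t) - xstar⟫) t :=
      (main t (Set.Ioi_subset_Ici_self ht)).hasDerivAt (Ici_mem_nhds ht)
    exact hda.differentiableAt.differentiableWithinAt
  · intro t ht
    rw [hint] at ht
    have hda : HasDerivAt (fun s => h xstar + hstar (y s) - ⟪y s, xstar⟫)
        (-⟪v (Q (y t)), Q (y t) - xstar⟫) t :=
      (main t (Set.Ioi_subset_Ici_self ht)).hasDerivAt (Ici_mem_nhds ht)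
    rw [hda.deriv]
    exact nonpos t
end

section
/- Let X¹ ⊆ ℝ^{n₁}, X² ⊆ ℝ^{n₂} be compact convex, U : X¹ × X² → ℝ a C¹ convex-concave function, v(x¹, x²) = (∇_{x¹}U, −∇_{x²}U) the saddle operator, g(x) = max_{x'∈X¹×X²} ⟨v(x'), x − x'⟩ the dual gap, and G(p¹, p²) = max_{x²∈X²} U(p¹, x²) − min_{x¹∈X¹} U(x¹, p²) the Nikaido–Isoda gap. Then G(p¹, p²) ≥ g(p¹, p²) ≥ 0 for every (p¹, p²) ∈ X¹ × X², and G(p¹, p²) = 0 if and only if (p¹, p²) is a saddle point of U, i.e. U(p¹, x²) ≤ U(p¹, p²) ≤ U(x¹, p²) for all x¹ ∈ X¹, x² ∈ X². -/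
open scoped RealInnerProductSpace


private lemma grad_convex_ineq {E : Type*} [NormedAddCommGroup E] [InnerProductSpace ℝ E]
    [CompleteSpace E] {s : Set E} {f : E → ℝ} {d q p : E}
    (hf : ConvexOn ℝ s f) (hq : q ∈ s) (hp : p ∈ s)
    (hgrad : HasGradientAt f d q) : ⟪d, p - q⟫ ≤ f p - f q := by
  set φ : ℝ → ℝ := fun t => f (q + t • (p - q)) with hφ
  have hc : ∀ t : ℝ, q + t • (p - q) = (1 - t) • q + t • p := by
    intro t; rw [sub_smul, one_smul, smul_sub]; abel
  have h1 : HasFDerivAt f ((InnerProductSpace.toDual ℝ E) d) q :=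
    hasGradientAt_iff_hasFDerivAt.mp hgrad
  have h2 : HasDerivAt (fun t : ℝ => q + t • (p - q)) (p - q) 0 := by
    simpa using ((hasDerivAt_id (0 : ℝ)).smul_const (p - q)).const_add q
  have hderiv : HasDerivAt φ ⟪d, p - q⟫ 0 := by
    have h1' : HasFDerivAt f ((InnerProductSpace.toDual ℝ E) d) (q + (0:ℝ) • (p - q)) := by
      simpa using h1
    have h3 := h1'.comp_hasDerivAt (0 : ℝ) h2
    simp only [InnerProductSpace.toDual_apply_apply] at h3
    exact h3
  have hT : Filter.Tendsto (slope φ 0) (nhdsWithin 0 (Set.Ioi 0)) (nhds ⟪d, p - q⟫) :=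
    (hasDerivAt_iff_tendsto_slope.mp hderiv).mono_left
      (nhdsWithin_mono 0 fun t ht => Set.mem_compl_singleton_iff.mpr (ne_of_gt ht))
  have hφ0 : φ 0 = f q := by simp [hφ]
  have key : ⟪d, p - q⟫ ≤ f p - f q := by
    refine le_of_tendsto hT ?_
    filter_upwards [Ioc_mem_nhdsGT_of_mem (by norm_num : (0:ℝ) ∈ Set.Ico 0 1)] with t ht
    obtain ⟨ht0, ht1⟩ := ht
    have hmem : φ t ≤ (1 - t) * f q + t * f p := by
      have := hf.2 hq hp (by linarith : (0:ℝ) ≤ 1 - t) (le_of_lt ht0) (by ring)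
      simpa [hφ, hc t] using this
    rw [slope_def_field, sub_zero, div_le_iff₀ ht0, hφ0]
    nlinarith
  exact key

private lemma grad_concave_ineq {E : Type*} [NormedAddCommGroup E] [InnerProductSpace ℝ E]
    [CompleteSpace E] {s : Set E} {f : E → ℝ} {d q p : E}
    (hf : ConcaveOn ℝ s f) (hq : q ∈ s) (hp : p ∈ s)
    (hgrad : HasGradientAt f d q) : f p - f q ≤ ⟪d, p - q⟫ := by
  have hneg : HasGradientAt (fun x => -f x) (-d) q := by
    rw [hasGradientAt_iff_hasFDerivAt] at hgrad ⊢
    rw [map_neg]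
    exact hgrad.neg
  have := grad_convex_ineq hf.neg hq hp hneg
  simp only [Pi.neg_apply, inner_neg_left] at this
  linarith
/-- For a `C¹` convex-concave `U` on compact convex `X¹ × X²` with saddle
operator `v = (∇₁U, -∇₂U)`, the Nikaido–Isoda gap `G` dominates the dual gap `g`, both are
nonnegative on `X¹ × X²`, and `G(p¹,p²) = 0` iff `(p¹,p²)` is a saddle point of `U`. -/
theorem nikaido_isoda_gap_properties {n₁ n₂ : ℕ}
    (X₁ : Set (EuclideanSpace ℝ (Fin n₁))) (X₂ : Set (EuclideanSpace ℝ (Fin n₂)))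
    (hne₁ : X₁.Nonempty) (hcomp₁ : IsCompact X₁) (hconv₁ : Convex ℝ X₁)
    (hne₂ : X₂.Nonempty) (hcomp₂ : IsCompact X₂) (hconv₂ : Convex ℝ X₂)
    (U : EuclideanSpace ℝ (Fin n₁) → EuclideanSpace ℝ (Fin n₂) → ℝ)
    (hUcont : Continuous fun p : EuclideanSpace ℝ (Fin n₁) × EuclideanSpace ℝ (Fin n₂) =>
      U p.1 p.2)
    (g₁ : EuclideanSpace ℝ (Fin n₁) → EuclideanSpace ℝ (Fin n₂) → EuclideanSpace ℝ (Fin n₁))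
    (g₂ : EuclideanSpace ℝ (Fin n₁) → EuclideanSpace ℝ (Fin n₂) → EuclideanSpace ℝ (Fin n₂))
    (hg₁ : ∀ x₁ x₂, HasGradientAt (fun z => U z x₂) (g₁ x₁ x₂) x₁)
    (hg₂ : ∀ x₁ x₂, HasGradientAt (fun z => U x₁ z) (g₂ x₁ x₂) x₂)
    (hconvex : ∀ x₂ ∈ X₂, ConvexOn ℝ X₁ (fun x₁ => U x₁ x₂))
    (hconcave : ∀ x₁ ∈ X₁, ConcaveOn ℝ X₂ (fun x₂ => U x₁ x₂))
    (g : EuclideanSpace ℝ (Fin n₁) → EuclideanSpace ℝ (Fin n₂) → ℝ)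
    (hgdef : ∀ p₁ p₂, g p₁ p₂ =
      sSup ((fun q : EuclideanSpace ℝ (Fin n₁) × EuclideanSpace ℝ (Fin n₂) =>
        ⟪g₁ q.1 q.2, p₁ - q.1⟫ - ⟪g₂ q.1 q.2, p₂ - q.2⟫) '' (X₁ ×ˢ X₂)))
    (G : EuclideanSpace ℝ (Fin n₁) → EuclideanSpace ℝ (Fin n₂) → ℝ)
    (hGdef : ∀ p₁ p₂, G p₁ p₂ =
      sSup ((fun x₂ => U p₁ x₂) '' X₂) - sInf ((fun x₁ => U x₁ p₂) '' X₁)) :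
    ∀ p₁ ∈ X₁, ∀ p₂ ∈ X₂,
      g p₁ p₂ ≤ G p₁ p₂ ∧ 0 ≤ g p₁ p₂ ∧
      (G p₁ p₂ = 0 ↔
        (∀ x₂ ∈ X₂, U p₁ x₂ ≤ U p₁ p₂) ∧ (∀ x₁ ∈ X₁, U p₁ p₂ ≤ U x₁ p₂)) := by
  intro p₁ hp₁ p₂ hp₂
  -- continuity in each variable
  have hcU2 : Continuous fun x₂ => U p₁ x₂ := hUcont.comp (continuous_const.prodMk continuous_id)
  have hcU1 : Continuous fun x₁ => U x₁ p₂ := hUcont.comp (continuous_id.prodMk continuous_const)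
  -- sup/inf sets
  set S₂ : Set ℝ := (fun x₂ => U p₁ x₂) '' X₂ with hS₂
  set S₁ : Set ℝ := (fun x₁ => U x₁ p₂) '' X₁ with hS₁
  have hS₂ne : S₂.Nonempty := hne₂.image _
  have hS₁ne : S₁.Nonempty := hne₁.image _
  have hS₂bdd : BddAbove S₂ := (hcomp₂.image hcU2).bddAbove
  have hS₁bdd : BddBelow S₁ := (hcomp₁.image hcU1).bddBelow
  have hsup : ∀ x₂ ∈ X₂, U p₁ x₂ ≤ sSup S₂ := fun x₂ hx₂ =>
    le_csSup hS₂bdd ⟨x₂, hx₂, rfl⟩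
  have hinf : ∀ x₁ ∈ X₁, sInf S₁ ≤ U x₁ p₂ := fun x₁ hx₁ =>
    csInf_le hS₁bdd ⟨x₁, hx₁, rfl⟩
  -- key pointwise inequality
  have key : ∀ q₁ ∈ X₁, ∀ q₂ ∈ X₂,
      ⟪g₁ q₁ q₂, p₁ - q₁⟫ - ⟪g₂ q₁ q₂, p₂ - q₂⟫ ≤ U p₁ q₂ - U q₁ p₂ := by
    intro q₁ hq₁ q₂ hq₂
    have h1 : ⟪g₁ q₁ q₂, p₁ - q₁⟫ ≤ U p₁ q₂ - U q₁ q₂ :=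
      grad_convex_ineq (hconvex q₂ hq₂) hq₁ hp₁ (hg₁ q₁ q₂)
    have h2 : U q₁ p₂ - U q₁ q₂ ≤ ⟪g₂ q₁ q₂, p₂ - q₂⟫ :=
      grad_concave_ineq (hconcave q₁ hq₁) hq₂ hp₂ (hg₂ q₁ q₂)
    linarith
  have keyG : ∀ q₁ ∈ X₁, ∀ q₂ ∈ X₂, U p₁ q₂ - U q₁ p₂ ≤ G p₁ p₂ := by
    intro q₁ hq₁ q₂ hq₂
    rw [hGdef]
    have := hsup q₂ hq₂
    have := hinf q₁ hq₁
    linarith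
  -- the set defining g
  set T : Set ℝ := (fun q : EuclideanSpace ℝ (Fin n₁) × EuclideanSpace ℝ (Fin n₂) =>
        ⟪g₁ q.1 q.2, p₁ - q.1⟫ - ⟪g₂ q.1 q.2, p₂ - q.2⟫) '' (X₁ ×ˢ X₂) with hT
  have hTub : ∀ x ∈ T, x ≤ G p₁ p₂ := by
    rintro x ⟨⟨q₁, q₂⟩, hq, rfl⟩
    exact le_trans (key q₁ hq.1 q₂ hq.2) (keyG q₁ hq.1 q₂ hq.2)
  have hTbdd : BddAbove T := ⟨G p₁ p₂, hTub⟩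
  have hTne : T.Nonempty := (hne₁.prod hne₂).image _
  refine ⟨?_, ?_, ?_⟩
  · rw [hgdef]
    exact csSup_le hTne hTub
  · rw [hgdef]
    have h0 : (0 : ℝ) ∈ T := ⟨(p₁, p₂), ⟨hp₁, hp₂⟩, by simp⟩
    exact le_csSup hTbdd h0
  · constructor
    · intro hG0
      have heq : sSup S₂ = sInf S₁ := by
        have := hGdef p₁ p₂
        rw [hG0] at this
        linarith [this.symm]
      constructor
      · intro x₂ hx₂
        calc U p₁ x₂ ≤ sSup S₂ := hsup x₂ hx₂
          _ = sInf S₁ := heq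
          _ ≤ U p₁ p₂ := hinf p₁ hp₁
      · intro x₁ hx₁
        calc U p₁ p₂ ≤ sSup S₂ := hsup p₂ hp₂
          _ = sInf S₁ := heq
          _ ≤ U x₁ p₂ := hinf x₁ hx₁
    · rintro ⟨hsad₂, hsad₁⟩
      have h1 : sSup S₂ ≤ U p₁ p₂ := csSup_le hS₂ne (by rintro x ⟨x₂, hx₂, rfl⟩; exact hsad₂ x₂ hx₂)
      have h2 : U p₁ p₂ ≤ sInf S₁ := le_csInf hS₁ne (by rintro x ⟨x₁, hx₁, rfl⟩; exact hsad₁ x₁ hx₁)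
      have h3 : U p₁ p₂ ≤ sSup S₂ := hsup p₂ hp₂
      have h4 : sInf S₁ ≤ U p₁ p₂ := hinf p₁ hp₁
      rw [hGdef]
      have : sSup S₂ = U p₁ p₂ := le_antisymm h1 h3
      have : sInf S₁ = U p₁ p₂ := le_antisymm h4 h2
      rw [← hS₂, ← hS₁]
      linarith
end
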